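/- arXiv:1711.05895 — 12 statements merged into one kernel-verified Lean document; each statement's English description precedes it below -/
import Mathlib

section
/- Let k be a positive definite function on S, let S = S_1 ∪ ... ∪ S_t be a partition of S into disjoint subdomains, and let X̲ be a set of r distinct points in S such that the matrix k(X̲,X̲) is invertible. Define k_h(x,x') = k(x,x') if x and x' lie in the same subdomain S_j, and k_h(x,x') = k(x,X̲) k(X̲,X̲)^{-1} k(X̲,x') otherwise. Then k_h is a positive definite function on S. -/
/-- The Gram matrix `k(X̲,X̲)` of a kernel `k` at the landmark points `u 0, …, u (r-1)`. -/
noncomputable def gramMatrix {S : Type*} (k : S → S → ℝ) {r : ℕ} (u : Fin r → S) :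
    Matrix (Fin r) (Fin r) ℝ :=
  Matrix.of fun a b => k (u a) (u b)

/-- The Nyström approximation `k(x,X̲) k(X̲,X̲)⁻¹ k(X̲,x')`. -/
noncomputable def nystrom {S : Type*} (k : S → S → ℝ) {r : ℕ} (u : Fin r → S)
    (x x' : S) : ℝ :=
  ∑ a, ∑ b, k x (u a) * (gramMatrix k u)⁻¹ a b * k (u b) x'

/-- A symmetric function `k : S × S → ℝ` is positive definite if every quadratic form
`∑ᵢⱼ αᵢ αⱼ k(xᵢ,xⱼ)` is nonnegative. -/
def IsPosDefKernel {S : Type*} (k : S → S → ℝ) : Prop :=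
  (∀ x x', k x x' = k x' x) ∧
  ∀ (n : ℕ) (x : Fin n → S) (α : Fin n → ℝ),
    0 ≤ ∑ i, ∑ j, α i * α j * k (x i) (x j)


/-! The Gram matrices of the Nyström kernel are congruent to `k(X̲,X̲)⁻¹`, and those of the
residual `k - nystrom k u` are Schur complements of `k(X̲,X̲)` in Gram matrices of `k`; both are
therefore positive semidefinite. Writing `1ⱼ` for the indicator of `S_j`, disjointness gives
`k_h(x,x') = nystrom(x,x') + ∑ⱼ 1ⱼ(x) (k - nystrom)(x,x') 1ⱼ(x')`, a sum of positive definite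
kernels. -/

open Function Matrix

section KernelMatrix

variable {S ι κ : Type*} {k : S → S → ℝ}

def kernelMatrix (k : S → S → ℝ) (x : ι → S) (y : κ → S) : Matrix ι κ ℝ :=
  Matrix.of fun i j => k (x i) (y j)

@[simp]
lemma kernelMatrix_apply (x : ι → S) (y : κ → S) (i : ι) (j : κ) :
    kernelMatrix k x y i j = k (x i) (y j) :=
  rfl

lemma conjTranspose_kernelMatrix (hk : ∀ x x', k x x' = k x' x) (x : ι → S) (y : κ → S) :
    (kernelMatrix k x y)ᴴ = kernelMatrix k y x := by
  ext i j
  simp [hk]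

lemma dotProduct_mulVec_kernelMatrix [Fintype ι] (x : ι → S) (α : ι → ℝ) :
    α ⬝ᵥ (kernelMatrix k x x *ᵥ α) = ∑ i, ∑ j, α i * α j * k (x i) (x j) := by
  simp only [dotProduct, mulVec, kernelMatrix_apply, Finset.mul_sum]
  exact Finset.sum_congr rfl fun i _ => Finset.sum_congr rfl fun j _ => by ring

end KernelMatrix

namespace IsPosDefKernel

variable {S : Type*} {k k' : S → S → ℝ}

lemma posSemidef_kernelMatrix (hk : IsPosDefKernel k) {ι : Type*} [Fintype ι] (x : ι → S) :
    (kernelMatrix k x x).PosSemidef := by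
  refine .of_dotProduct_mulVec_nonneg (conjTranspose_kernelMatrix hk.1 x x) fun α => ?_
  let e := (Fintype.equivFin ι).symm
  rw [star_trivial, dotProduct_mulVec_kernelMatrix]
  exact (hk.2 _ (x ∘ e) (α ∘ e)).trans_eq
    (Fintype.sum_equiv e _ _ fun _ => Fintype.sum_equiv e _ _ fun _ => rfl)

lemma of_posSemidef (h : ∀ n (x : Fin n → S), (kernelMatrix k x x).PosSemidef) :
    IsPosDefKernel k := by
  refine ⟨fun a b => ?_, fun n x α => ?_⟩
  · simpa using congrFun₂ (h 2 ![a, b]).1 1 0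
  · simpa [dotProduct_mulVec_kernelMatrix] using (h n x).dotProduct_mulVec_nonneg α

lemma add (hk : IsPosDefKernel k) (hk' : IsPosDefKernel k') :
    IsPosDefKernel fun x y => k x y + k' x y :=
  of_posSemidef fun _ x => (hk.posSemidef_kernelMatrix x).add (hk'.posSemidef_kernelMatrix x)

lemma sum {ι : Type*} (s : Finset ι) {K : ι → S → S → ℝ} (h : ∀ i ∈ s, IsPosDefKernel (K i)) :
    IsPosDefKernel fun x y => ∑ i ∈ s, K i x y :=
  of_posSemidef fun _ x => by
    convert posSemidef_sum s fun i hi => (h i hi).posSemidef_kernelMatrix x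
    ext
    simp [Matrix.sum_apply]

lemma mul_mul_same (hk : IsPosDefKernel k) (f : S → ℝ) :
    IsPosDefKernel fun x y => f x * k x y * f y :=
  of_posSemidef fun _ x => by
    convert (hk.posSemidef_kernelMatrix x).mul_mul_conjTranspose_same (diagonal (f ∘ x))
    ext
    simp [diagonal_mul, mul_diagonal]

end IsPosDefKernel

section Nystrom

variable {S ι : Type*} {k : S → S → ℝ} {r : ℕ} (u : Fin r → S)

lemma kernelMatrix_nystrom {κ : Type*} (x : ι → S) (y : κ → S) :
    kernelMatrix (nystrom k u) x y =
      kernelMatrix k x u * (gramMatrix k u)⁻¹ * kernelMatrix k u y := by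
  ext i j
  simp only [kernelMatrix_apply, nystrom, mul_apply, Finset.sum_mul]
  exact Finset.sum_comm

lemma kernelMatrix_sumElim (x : ι → S) :
    kernelMatrix k (Sum.elim u x) (Sum.elim u x) =
      fromBlocks (gramMatrix k u) (kernelMatrix k u x)
        (kernelMatrix k x u) (kernelMatrix k x x) := by
  ext (a | i) (b | j) <;> rfl

theorem isPosDefKernel_nystrom (hk : IsPosDefKernel k) : IsPosDefKernel (nystrom k u) :=
  .of_posSemidef fun _ x => by
    rw [kernelMatrix_nystrom, ← conjTranspose_kernelMatrix hk.1 u x]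
    exact (hk.posSemidef_kernelMatrix u).inv.conjTranspose_mul_mul_same _

theorem isPosDefKernel_sub_nystrom (hk : IsPosDefKernel k) (hK : IsUnit (gramMatrix k u).det) :
    IsPosDefKernel fun x y => k x y - nystrom k u x y :=
  .of_posSemidef fun _ x => by
    have hKpd : (gramMatrix k u).PosDef :=
      (hk.posSemidef_kernelMatrix u).posDef_iff_isUnit.mpr ((isUnit_iff_isUnit_det _).mpr hK)
    have := invertibleOfIsUnitDet _ hK
    have hblock := hk.posSemidef_kernelMatrix (Sum.elim u x)
    rwa [kernelMatrix_sumElim, ← conjTranspose_kernelMatrix hk.1 u x, PosDef.fromBlocks₁₁ _ _ hKpd,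
      conjTranspose_kernelMatrix hk.1, ← kernelMatrix_nystrom] at hblock

end Nystrom

open Classical in
lemma sum_indicator_mul_mul_indicator {S ι R : Type*} [Fintype ι] [NonAssocSemiring R]
    {P : ι → Set S} (hdisj : Pairwise (Disjoint on P)) (c : R) (x y : S) :
    ∑ j, (P j).indicator 1 x * c * (P j).indicator 1 y =
      if ∃ j, x ∈ P j ∧ y ∈ P j then c else 0 := by
  split_ifs with h
  · obtain ⟨j, hx, hy⟩ := h
    rw [Finset.sum_eq_single j (fun j' _ hj' => ?_) (by simp)]
    · simp [hx, hy]
    · simp [Set.indicator_of_notMem (Set.disjoint_right.mp (hdisj hj') hx)]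
  · push Not at h
    refine Finset.sum_eq_zero fun j _ => ?_
    by_cases hx : x ∈ P j
    · simp [Set.indicator_of_notMem (h j hx)]
    · simp [hx]

theorem oneLevel_posDef_general {S : Type*} {t : ℕ} (k : S → S → ℝ)
    (hk : IsPosDefKernel k)
    (P : Fin t → Set S)
    (hdisj : ∀ j j' : Fin t, j ≠ j' → Disjoint (P j) (P j'))
    {r : ℕ} (u : Fin r → S)
    (hK : IsUnit (gramMatrix k u).det)
    (kh : S → S → ℝ)
    (hkh_same : ∀ x x', (∃ j, x ∈ P j ∧ x' ∈ P j) → kh x x' = k x x')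
    (hkh_diff : ∀ x x', (¬ ∃ j, x ∈ P j ∧ x' ∈ P j) → kh x x' = nystrom k u x x') :
    IsPosDefKernel kh := by
  have hblocks := IsPosDefKernel.sum Finset.univ fun j _ =>
    (isPosDefKernel_sub_nystrom u hk hK).mul_mul_same ((P j).indicator 1)
  convert (isPosDefKernel_nystrom u hk).add hblocks using 1
  ext x y
  rw [sum_indicator_mul_mul_indicator hdisj]
  split_ifs with h
  · rw [hkh_same x y h, add_sub_cancel]
  · rw [hkh_diff x y h, add_zero]

/-- if `k` is positive definite, `S = S_1 ∪ ⋯ ∪ S_t` is a partition into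
disjoint subdomains, `X̲` is a set of `r` distinct points with `k(X̲,X̲)` invertible, and
`k_h(x,x') = k(x,x')` when `x, x'` lie in a common subdomain while
`k_h(x,x') = k(x,X̲) k(X̲,X̲)⁻¹ k(X̲,x')` otherwise, then `k_h` is positive definite. -/
theorem oneLevel_posDef {S : Type*} {t : ℕ} (k : S → S → ℝ)
    (hk : IsPosDefKernel k)
    (P : Fin t → Set S)
    (hcover : ∀ x : S, ∃ j, x ∈ P j)
    (hdisj : ∀ j j' : Fin t, j ≠ j' → Disjoint (P j) (P j'))
    {r : ℕ} (u : Fin r → S) (hu : Function.Injective u)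
    (hK : IsUnit (gramMatrix k u).det)
    (kh : S → S → ℝ)
    (hkh_same : ∀ x x', (∃ j, x ∈ P j ∧ x' ∈ P j) → kh x x' = k x x')
    (hkh_diff : ∀ x x', (¬ ∃ j, x ∈ P j ∧ x' ∈ P j) → kh x x' = nystrom k u x x') :
    IsPosDefKernel kh :=
  oneLevel_posDef_general k hk P hdisj u hK kh hkh_same hkh_diff
end

section
/- Let k be a strictly positive definite function on S, let S = S_1 ∪ ... ∪ S_t be a partition of S into disjoint subdomains, and let X̲ be a set of r distinct points in S (so that k(X̲,X̲) is invertible). Define k_h(x,x') = k(x,x') if x and x' lie in the same subdomain S_j, and k_h(x,x') = k(x,X̲) k(X̲,X̲)^{-1} k(X̲,x') otherwise. Then k_h is strictly positive definite on S. -/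
/-- A symmetric function `k : S × S → ℝ` is strictly positive definite if every quadratic
form `∑ᵢⱼ αᵢ αⱼ k(xᵢ,xⱼ)` at distinct points with not-all-zero coefficients is positive. -/
def IsStrictPosDefKernel {S : Type*} (k : S → S → ℝ) : Prop :=
  (∀ x x', k x x' = k x' x) ∧
  ∀ (n : ℕ) (x : Fin n → S) (α : Fin n → ℝ),
    Function.Injective x → α ≠ 0 →
      0 < ∑ i, ∑ j, α i * α j * k (x i) (x j)

/-!
Restrict to finitely many distinct points that contain the landmarks, with Gram matrix `G` and
landmark selector `E`, so that `K = Eᵀ G E` is the landmark Gram matrix and the Nyström part is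
`N = G E K⁻¹ Eᵀ G`. The Schur complement `G - N` equals `Rᵀ G R` for the oblique projection
`R = 1 - E K⁻¹ Eᵀ G`, so the quadratic form of `k_h` is
`(Eᵀ G v)ᵀ K⁻¹ (Eᵀ G v) + ∑ⱼ (R vⱼ)ᵀ G (R vⱼ)`, where `vⱼ` is the part of `v` on the `j`-th
subdomain. Every term is nonnegative; if all vanish, then `Eᵀ G v = 0`, hence `R v = v`, and
`R vⱼ = 0` for every `j`, hence `v = ∑ⱼ R vⱼ = 0`.
-/

open Finset

namespace Matrix

variable {ι κ β : Type*} [Fintype ι] [Fintype κ]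

theorem dotProduct_transpose_mul_mul_mulVec (A : Matrix κ κ ℝ) (B : Matrix κ ι ℝ) (v : ι → ℝ) :
    v ⬝ᵥ ((Bᵀ * A * B) *ᵥ v) = (B *ᵥ v) ⬝ᵥ (A *ᵥ (B *ᵥ v)) := by
  rw [← mulVec_mulVec, ← mulVec_mulVec, dotProduct_mulVec, vecMul_transpose]

section Fibers

variable [DecidableEq β] (b : ι → β)

theorem sum_ite_fiber_eq (v : ι → ℝ) :
    ∑ j ∈ univ.image b, (fun i => if b i = j then v i else 0) = v := by
  ext i
  simp [Finset.sum_apply]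

theorem dotProduct_sameFiber_mulVec (M : Matrix ι ι ℝ) (v : ι → ℝ) :
    v ⬝ᵥ (of (fun i l => if b i = b l then M i l else 0) *ᵥ v) =
      ∑ j ∈ univ.image b,
        (fun i => if b i = j then v i else 0) ⬝ᵥ (M *ᵥ fun i => if b i = j then v i else 0) := by
  simp only [dotProduct, mulVec, of_apply, Finset.mul_sum]
  rw [Finset.sum_comm (s := univ.image b)]
  refine Finset.sum_congr rfl fun i _ => ?_
  rw [Finset.sum_comm (s := univ.image b)]
  refine Finset.sum_congr rfl fun l _ => ?_
  split_ifs with h <;> simp [h, ite_mul, mul_ite]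

end Fibers

variable [DecidableEq κ] {G : Matrix ι ι ℝ} {E : Matrix ι κ ℝ}

theorem sub_nystrom_eq_transpose_mul_mul [DecidableEq ι] (hG : G.IsSymm)
    (hK : IsUnit (Eᵀ * G * E).det) :
    G - G * E * (Eᵀ * G * E)⁻¹ * Eᵀ * G =
      (1 - E * (Eᵀ * G * E)⁻¹ * Eᵀ * G)ᵀ * G * (1 - E * (Eᵀ * G * E)⁻¹ * Eᵀ * G) := by
  set K := Eᵀ * G * E with hKdef
  have hKt : K⁻¹ᵀ = K⁻¹ := by
    rw [transpose_nonsing_inv, hKdef, transpose_mul, transpose_mul, hG.eq, transpose_transpose,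
      Matrix.mul_assoc]
  have hcancel : ∀ X : Matrix κ ι ℝ, Eᵀ * (G * (E * (K⁻¹ * X))) = X := fun X => by
    rw [← Matrix.mul_assoc, ← Matrix.mul_assoc, ← Matrix.mul_assoc, mul_nonsing_inv _ hK,
      Matrix.one_mul]
  simp only [transpose_sub, transpose_one, transpose_mul, transpose_transpose, hG.eq, hKt]
  simp only [Matrix.sub_mul, Matrix.mul_sub, Matrix.one_mul, Matrix.mul_one, Matrix.mul_assoc,
    hcancel]
  abel

variable [DecidableEq β]

noncomputable def blockNystrom (G : Matrix ι ι ℝ) (E : Matrix ι κ ℝ) (b : ι → β) : Matrix ι ι ℝ :=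
  of fun i l => if b i = b l then G i l else (G * E * (Eᵀ * G * E)⁻¹ * Eᵀ * G) i l

theorem IsSymm.blockNystrom (hG : G.IsSymm) (b : ι → β) : (blockNystrom G E b).IsSymm := by
  have hN : (G * E * (Eᵀ * G * E)⁻¹ * Eᵀ * G).IsSymm := by
    simp only [IsSymm, transpose_mul, transpose_transpose, hG.eq, transpose_nonsing_inv,
      Matrix.mul_assoc]
  refine IsSymm.ext fun i l => ?_
  simp only [Matrix.blockNystrom, of_apply, eq_comm (a := b l)]
  split_ifs
  · exact hG.apply i l
  · exact hN.apply i l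

theorem dotProduct_blockNystrom_mulVec [DecidableEq ι] (hG : G.IsSymm)
    (hK : IsUnit (Eᵀ * G * E).det) (b : ι → β) (v : ι → ℝ) :
    v ⬝ᵥ (blockNystrom G E b *ᵥ v) =
      ((Eᵀ * G) *ᵥ v) ⬝ᵥ ((Eᵀ * G * E)⁻¹ *ᵥ ((Eᵀ * G) *ᵥ v)) +
        ∑ j ∈ univ.image b,
          ((1 - E * (Eᵀ * G * E)⁻¹ * Eᵀ * G) *ᵥ fun i => if b i = j then v i else 0) ⬝ᵥ
            (G *ᵥ ((1 - E * (Eᵀ * G * E)⁻¹ * Eᵀ * G) *ᵥ fun i => if b i = j then v i else 0)) := by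
  set N := G * E * (Eᵀ * G * E)⁻¹ * Eᵀ * G
  have hsplit : blockNystrom G E b = N + of fun i l => if b i = b l then (G - N) i l else 0 := by
    ext i l
    simp only [Matrix.blockNystrom, of_apply, add_apply, sub_apply]
    split_ifs <;> ring
  have hN : N = (Eᵀ * G)ᵀ * (Eᵀ * G * E)⁻¹ * (Eᵀ * G) := by
    simp only [N, transpose_mul, transpose_transpose, hG.eq, Matrix.mul_assoc]
  rw [hsplit, add_mulVec, dotProduct_add, dotProduct_sameFiber_mulVec, hN,
    dotProduct_transpose_mul_mul_mulVec, ← hN, sub_nystrom_eq_transpose_mul_mul hG hK]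
  simp only [dotProduct_transpose_mul_mul_mulVec]

theorem PosDef.blockNystrom [DecidableEq ι] (hG : G.PosDef) (hK : (Eᵀ * G * E).PosDef)
    (b : ι → β) : (blockNystrom G E b).PosDef := by
  have hGs : G.IsSymm := isHermitian_iff_isSymm.1 hG.isHermitian
  set R := 1 - E * (Eᵀ * G * E)⁻¹ * Eᵀ * G
  have hR : ∀ v, (Eᵀ * G) *ᵥ v = 0 → R *ᵥ v = v := fun v hv => by
    simp only [R, sub_mulVec, one_mulVec, ← mulVec_mulVec, Matrix.mul_assoc] at hv ⊢
    simp [hv]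
  refine PosDef.of_dotProduct_mulVec_pos (isHermitian_iff_isSymm.2 (hGs.blockNystrom b))
    fun v hv => ?_
  rw [star_trivial, dotProduct_blockNystrom_mulVec hGs ((isUnit_iff_isUnit_det _).1 hK.isUnit)]
  set vb : β → ι → ℝ := fun j i => if b i = j then v i else 0
  have hblocks : ∀ j ∈ univ.image b, 0 ≤ (R *ᵥ vb j) ⬝ᵥ (G *ᵥ (R *ᵥ vb j)) := fun j _ => by
    simpa using hG.posSemidef.dotProduct_mulVec_nonneg (R *ᵥ vb j)
  by_cases hc : (Eᵀ * G) *ᵥ v = 0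
  · rw [hc, mulVec_zero, dotProduct_zero, zero_add]
    obtain ⟨j, hj, hRj⟩ : ∃ j ∈ univ.image b, R *ᵥ vb j ≠ 0 := by
      by_contra! h
      apply hv
      rw [← hR v hc, ← sum_ite_fiber_eq b v, mulVec_sum]
      exact Finset.sum_eq_zero h
    exact Finset.sum_pos' hblocks ⟨j, hj, by simpa using hG.dotProduct_mulVec_pos hRj⟩
  · exact add_pos_of_pos_of_nonneg (by simpa using hK.inv.dotProduct_mulVec_pos hc)
      (Finset.sum_nonneg hblocks)

end Matrix

open Matrix

section Kernel

variable {S : Type*}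

/-- The kernel `k_h`, where `b x` labels the subdomain containing `x`. -/
noncomputable def blockNystromKernel (k : S → S → ℝ) {r : ℕ} (u : Fin r → S) {β : Type*} [DecidableEq β]
    (b : S → β) (x x' : S) : ℝ :=
  if b x = b x' then k x x' else nystrom k u x x'

theorem dotProduct_submatrix_mulVec (k : S → S → ℝ) {ι : Type*} [Fintype ι] (x : ι → S)
    (α : ι → ℝ) :
    α ⬝ᵥ ((of k).submatrix x x *ᵥ α) = ∑ i, ∑ j, α i * α j * k (x i) (x j) := by
  simp only [dotProduct, mulVec, submatrix_apply, of_apply, Finset.mul_sum]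
  exact Finset.sum_congr rfl fun i _ => Finset.sum_congr rfl fun j _ => by ring

theorem isStrictPosDefKernel_iff_posDef_submatrix {k : S → S → ℝ} :
    IsStrictPosDefKernel k ↔
      ∀ (n : ℕ) (x : Fin n → S), Function.Injective x → ((of k).submatrix x x).PosDef := by
  constructor
  · intro hk n x hx
    refine PosDef.of_dotProduct_mulVec_pos (IsHermitian.ext fun i j => hk.1 _ _) fun α hα => ?_
    rw [star_trivial, dotProduct_submatrix_mulVec]
    exact hk.2 n x α hx hα
  · intro h
    refine ⟨fun a a' => ?_, fun n x α hx hα => ?_⟩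
    · rcases eq_or_ne a a' with rfl | ha
      · rfl
      have hinj : Function.Injective ![a, a'] := by
        intro i j
        fin_cases i <;> fin_cases j <;> simp [ha, ha.symm]
      simpa using (h 2 ![a, a'] hinj).isHermitian.apply 1 0
    · simpa [dotProduct_submatrix_mulVec] using (h n x hx).dotProduct_mulVec_pos hα

theorem IsStrictPosDefKernel.posDef_submatrix {k : S → S → ℝ} (hk : IsStrictPosDefKernel k)
    {ι : Type*} [Fintype ι] {y : ι → S} (hy : Function.Injective y) :
    ((of k).submatrix y y).PosDef := by
  let e := Fintype.equivFin ι
  have h := isStrictPosDefKernel_iff_posDef_submatrix.1 hk _ (y ∘ e.symm)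
    (hy.comp e.symm.injective)
  simpa [Function.comp_assoc] using h.submatrix e.injective

variable {k : S → S → ℝ} {r : ℕ} {u : Fin r → S} {β : Type*} [DecidableEq β]

theorem IsStrictPosDefKernel.posDef_submatrix_blockNystromKernel (hk : IsStrictPosDefKernel k)
    (hu : Function.Injective u) (b : S → β) {ι : Type*} [Fintype ι] [DecidableEq ι]
    {y : ι → S} (hy : Function.Injective y) {σ : Fin r → ι} (hσ : ∀ a, y (σ a) = u a) :
    ((of (blockNystromKernel k u b)).submatrix y y).PosDef := by
  set G := (of k).submatrix y y
  set E : Matrix ι (Fin r) ℝ := of fun p a => if p = σ a then 1 else 0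
  have hGE : G * E = of fun p a => k (y p) (u a) := by
    ext p a
    simp [G, E, mul_apply, hσ]
  have hEG : Eᵀ * G = of fun a p => k (u a) (y p) := by
    ext a p
    simp [G, E, mul_apply, hσ]
  have hK : Eᵀ * G * E = gramMatrix k u := by
    ext a a'
    simp [hEG, E, gramMatrix, mul_apply, hσ]
  have h := (hk.posDef_submatrix hy).blockNystrom (E := E)
    (by rw [hK]; exact hk.posDef_submatrix hu) (b ∘ y)
  convert h using 1
  ext p q
  rw [Matrix.blockNystrom, hK, Matrix.mul_assoc (G * E * _), hGE, hEG]
  simp only [submatrix_apply, of_apply, Function.comp_apply, blockNystromKernel, nystrom,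
    mul_apply, Finset.sum_mul]
  rw [Finset.sum_comm]

theorem IsStrictPosDefKernel.blockNystromKernel (hk : IsStrictPosDefKernel k)
    (hu : Function.Injective u) (b : S → β) :
    IsStrictPosDefKernel (blockNystromKernel k u b) := by
  classical
  refine isStrictPosDefKernel_iff_posDef_submatrix.2 fun n x hx => ?_
  let y : Fin n ⊕ {a // u a ∉ Set.range x} → S := Sum.elim x (u ∘ Subtype.val)
  have hy : Function.Injective y :=
    hx.sumElim (hu.comp Subtype.val_injective) fun i a h => a.2 ⟨i, h⟩
  have hσ : ∀ a, ∃ p, y p = u a := fun a => by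
    by_cases h : u a ∈ Set.range x
    · obtain ⟨i, hi⟩ := h
      exact ⟨.inl i, hi⟩
    · exact ⟨.inr ⟨a, h⟩, rfl⟩
  choose σ hσ using hσ
  exact (hk.posDef_submatrix_blockNystromKernel hu b hy hσ).submatrix Sum.inl_injective

end Kernel

theorem exists_mem_and_mem_iff_eq {ι S : Type*} {P : ι → Set S}
    (hdisj : Pairwise (Function.onFun Disjoint P)) {b : S → ι} (hb : ∀ x, x ∈ P (b x))
    (x x' : S) : (∃ j, x ∈ P j ∧ x' ∈ P j) ↔ b x = b x' := by
  refine ⟨fun ⟨j, hx, hx'⟩ => ?_, fun h => ⟨b x, hb x, h ▸ hb x'⟩⟩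
  rw [hdisj.eq (Set.not_disjoint_iff.2 ⟨x, hb x, hx⟩),
    hdisj.eq (Set.not_disjoint_iff.2 ⟨x', hb x', hx'⟩)]

/-- if `k` is strictly positive definite, `S = S_1 ∪ ⋯ ∪ S_t` is a partition
into disjoint subdomains, `X̲` is a set of `r` distinct points (so that `k(X̲,X̲)` is
invertible), and `k_h(x,x') = k(x,x')` when `x, x'` lie in a common subdomain while
`k_h(x,x') = k(x,X̲) k(X̲,X̲)⁻¹ k(X̲,x')` otherwise, then `k_h` is strictly positive
definite. -/
theorem oneLevel_strictPosDef {S : Type*} {t : ℕ} (k : S → S → ℝ)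
    (hk : IsStrictPosDefKernel k)
    (P : Fin t → Set S)
    (hcover : ∀ x : S, ∃ j, x ∈ P j)
    (hdisj : ∀ j j' : Fin t, j ≠ j' → Disjoint (P j) (P j'))
    {r : ℕ} (u : Fin r → S) (hu : Function.Injective u)
    (kh : S → S → ℝ)
    (hkh_same : ∀ x x', (∃ j, x ∈ P j ∧ x' ∈ P j) → kh x x' = k x x')
    (hkh_diff : ∀ x x', (¬ ∃ j, x ∈ P j ∧ x' ∈ P j) → kh x x' = nystrom k u x x') :
    IsStrictPosDefKernel kh := by
  classical
  choose b hb using hcover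
  have hkh : kh = blockNystromKernel k u b := by
    funext x x'
    unfold blockNystromKernel
    split_ifs with h
    · exact hkh_same x x' ((exists_mem_and_mem_iff_eq hdisj hb x x').2 h)
    · exact hkh_diff x x' (mt (exists_mem_and_mem_iff_eq hdisj hb x x').1 h)
  exact hkh ▸ hk.blockNystromKernel hu b
end

section
/- Let k be a positive definite function on S, let S = S_1 ∪ ... ∪ S_t be a partition of S into disjoint subdomains, and let X̲ be a finite set of distinct points in S with k(X̲,X̲) invertible. Then the function ξ_2 defined by ξ_2(x,x') = k(x,x') − k(x,X̲) k(X̲,X̲)^{-1} k(X̲,x') if x and x' lie in the same subdomain S_j, and ξ_2(x,x') = 0 otherwise, is a positive definite function on S. -/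
open Matrix Function

theorem Matrix.dotProduct_mulVec_eq_sum {ι : Type*} [Fintype ι] (M : Matrix ι ι ℝ)
    (α : ι → ℝ) : α ⬝ᵥ M *ᵥ α = ∑ i, ∑ j, α i * α j * M i j := by
  simp only [dotProduct, mulVec, Finset.mul_sum]
  exact Finset.sum_congr rfl fun i _ => Finset.sum_congr rfl fun j _ => by ring

section

variable {S : Type*} {k : S → S → ℝ}

theorem isPosDefKernel_iff_posSemidef :
    IsPosDefKernel k ↔ ∀ (n : ℕ) (x : Fin n → S), (gramMatrix k x).PosSemidef := by
  refine ⟨fun hk n x => .of_dotProduct_mulVec_nonneg ?_ fun α => ?_, fun h => ⟨fun x x' => ?_,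
    fun n x α => ?_⟩⟩
  · ext i j
    simp [gramMatrix, hk.1 (x j)]
  · rw [star_trivial, dotProduct_mulVec_eq_sum]
    exact hk.2 n x α
  · simpa [gramMatrix] using (h 2 ![x, x']).1.apply 1 0
  · simpa [dotProduct_mulVec_eq_sum, gramMatrix] using (h n x).dotProduct_mulVec_nonneg α

theorem gramMatrix_append_submatrix (hk : ∀ x x', k x x' = k x' x)
    {n r : ℕ} (x : Fin n → S) (u : Fin r → S) :
    (gramMatrix k (Fin.append x u)).submatrix finSumFinEquiv finSumFinEquiv =
      fromBlocks (gramMatrix k x) (of fun i a => k (x i) (u a))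
        (of fun i a => k (x i) (u a))ᴴ (gramMatrix k u) := by
  ext (i | i) (j | j) <;> simp [gramMatrix]; exact hk _ _

theorem gramMatrix_sub_nystrom (hk : ∀ x x', k x x' = k x' x)
    {n r : ℕ} (x : Fin n → S) (u : Fin r → S) :
    gramMatrix (fun x x' => k x x' - nystrom k u x x') x =
      gramMatrix k x - (of fun i a => k (x i) (u a)) * (gramMatrix k u)⁻¹ *
        (of fun i a => k (x i) (u a))ᴴ := by
  ext i j
  simp only [gramMatrix, nystrom, Matrix.sub_apply, of_apply, mul_apply, conjTranspose_apply,
    star_trivial, Finset.sum_mul, hk (x j)]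
  exact congrArg _ Finset.sum_comm

theorem IsPosDefKernel.sub_nystrom (hk : IsPosDefKernel k)
    {r : ℕ} (u : Fin r → S) (hK : IsUnit (gramMatrix k u).det) :
    IsPosDefKernel fun x x' => k x x' - nystrom k u x x' := by
  have hsymm := hk.1
  rw [isPosDefKernel_iff_posSemidef] at hk ⊢
  intro n x
  have hG : (gramMatrix k u).PosDef := (hk r u).posDef_iff_det_ne_zero.mpr hK.ne_zero
  have := invertibleOfIsUnitDet _ hK
  have hblock := (hk (n + r) (Fin.append x u)).submatrix finSumFinEquiv
  rw [gramMatrix_append_submatrix hsymm, PosDef.fromBlocks₂₂ _ _ hG] at hblock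
  rwa [gramMatrix_sub_nystrom hsymm]

theorem IsPosDefKernel.mul_mul (hk : IsPosDefKernel k)
    (g : S → ℝ) : IsPosDefKernel fun x x' => g x * k x x' * g x' := by
  refine ⟨fun x x' => by dsimp only; rw [hk.1 x x']; ring, fun n x α => ?_⟩
  convert hk.2 n x fun i => α i * g (x i) using 3 with i _ j
  ring

theorem IsPosDefKernel.sum_s4 {ι : Type*} (s : Finset ι) {K : ι → S → S → ℝ}
    (hK : ∀ c ∈ s, IsPosDefKernel (K c)) : IsPosDefKernel fun x x' => ∑ c ∈ s, K c x x' := by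
  refine ⟨fun x x' => Finset.sum_congr rfl fun c hc => (hK c hc).1 x x', fun n x α => ?_⟩
  have hswap : ∑ i, ∑ j, α i * α j * ∑ c ∈ s, K c (x i) (x j) =
      ∑ c ∈ s, ∑ i, ∑ j, α i * α j * K c (x i) (x j) := by
    simp_rw [Finset.mul_sum]
    exact (Finset.sum_congr rfl fun i _ => Finset.sum_comm).trans Finset.sum_comm
  exact hswap ▸ Finset.sum_nonneg fun c hc => (hK c hc).2 n x α

theorem IsPosDefKernel.of_eq_blockwise {ι : Type*} [Fintype ι] (hk : IsPosDefKernel k)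
    (P : ι → Set S) (hP : Pairwise (Disjoint on P)) {ξ : S → S → ℝ}
    (hsame : ∀ x x', (∃ j, x ∈ P j ∧ x' ∈ P j) → ξ x x' = k x x')
    (hdiff : ∀ x x', (¬ ∃ j, x ∈ P j ∧ x' ∈ P j) → ξ x x' = 0) :
    IsPosDefKernel ξ := by
  have hξ : ξ = fun x x' => ∑ j, (P j).indicator 1 x * k x x' * (P j).indicator 1 x' := by
    ext x x'
    by_cases h : ∃ j, x ∈ P j ∧ x' ∈ P j
    · obtain ⟨j, hx, hx'⟩ := h
      rw [hsame x x' ⟨j, hx, hx'⟩, Finset.sum_eq_single j]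
      · simp [hx, hx']
      · intro c _ hc
        simp [Set.disjoint_left.mp (hP hc.symm) hx]
      · simp
    · rw [hdiff x x' h]
      refine (Finset.sum_eq_zero fun j _ => ?_).symm
      by_cases hx : x ∈ P j
      · have hx' : x' ∉ P j := fun hx' => h ⟨j, hx, hx'⟩
        simp [hx']
      · simp [hx]
  rw [hξ]
  exact IsPosDefKernel.sum_s4 _ fun j _ => hk.mul_mul _

end

theorem schur_piecewise_posDef_general {S : Type*} {t : ℕ} (k : S → S → ℝ)
    (hk : IsPosDefKernel k)
    (P : Fin t → Set S)
    (hdisj : ∀ j j' : Fin t, j ≠ j' → Disjoint (P j) (P j'))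
    {r : ℕ} (u : Fin r → S)
    (hK : IsUnit (gramMatrix k u).det)
    (ξ₂ : S → S → ℝ)
    (hξ_same : ∀ x x', (∃ j, x ∈ P j ∧ x' ∈ P j) →
      ξ₂ x x' = k x x' - nystrom k u x x')
    (hξ_diff : ∀ x x', (¬ ∃ j, x ∈ P j ∧ x' ∈ P j) → ξ₂ x x' = 0) :
    IsPosDefKernel ξ₂ :=
  (hk.sub_nystrom u hK).of_eq_blockwise P (fun j j' => hdisj j j') hξ_same hξ_diff

/-- if `k` is positive definite, `S = S_1 ∪ ⋯ ∪ S_t` is a partition into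
disjoint subdomains, and `X̲` is a finite set of distinct points with `k(X̲,X̲)`
invertible, then the function `ξ₂` equal to the Schur complement
`k(x,x') − k(x,X̲) k(X̲,X̲)⁻¹ k(X̲,x')` when `x, x'` lie in a common subdomain and equal
to `0` otherwise, is positive definite on `S`. -/
theorem schur_piecewise_posDef {S : Type*} {t : ℕ} (k : S → S → ℝ)
    (hk : IsPosDefKernel k)
    (P : Fin t → Set S)
    (hcover : ∀ x : S, ∃ j, x ∈ P j)
    (hdisj : ∀ j j' : Fin t, j ≠ j' → Disjoint (P j) (P j'))
    {r : ℕ} (u : Fin r → S) (hu : Function.Injective u)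
    (hK : IsUnit (gramMatrix k u).det)
    (ξ₂ : S → S → ℝ)
    (hξ_same : ∀ x x', (∃ j, x ∈ P j ∧ x' ∈ P j) →
      ξ₂ x x' = k x x' - nystrom k u x x')
    (hξ_diff : ∀ x x', (¬ ∃ j, x ∈ P j ∧ x' ∈ P j) → ξ₂ x x' = 0) :
    IsPosDefKernel ξ₂ :=
  schur_piecewise_posDef_general k hk P hdisj u hK ξ₂ hξ_same hξ_diff
end

section
/- Let k be a strictly positive definite function on S and let X̲ be a finite set of distinct points in S. Then for every x ∈ S with x ∉ X̲, the Nyström approximation on the diagonal is strictly below the original function: k(x,X̲) k(X̲,X̲)^{-1} k(X̲,x) < k(x,x). -/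
/-! Evaluate the strictly positive quadratic form of `k` at the points `x, u 0, …, u (r-1)` with
coefficients `1, -k(X̲,X̲)⁻¹ k(X̲,x)`: it collapses to the Schur complement
`k(x,x) - k(x,X̲) k(X̲,X̲)⁻¹ k(X̲,x)`. -/

open Matrix

section

variable {S : Type*} {k : S → S → ℝ}

variable (k) in
lemma sum_sum_mul_kernel_eq_dotProduct_gramMatrix {n : ℕ} (x : Fin n → S) (α : Fin n → ℝ) :
    ∑ i, ∑ j, α i * α j * k (x i) (x j) = α ⬝ᵥ (gramMatrix k x *ᵥ α) := by
  simp only [dotProduct, mulVec, gramMatrix, of_apply, Finset.mul_sum]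
  exact Finset.sum_congr rfl fun i _ => Finset.sum_congr rfl fun j _ => by ring

lemma IsStrictPosDefKernel.posDef_gramMatrix (hk : IsStrictPosDefKernel k) {r : ℕ}
    {u : Fin r → S} (hu : Function.Injective u) : (gramMatrix k u).PosDef := by
  refine posDef_iff_dotProduct_mulVec.mpr ⟨?_, fun α hα => ?_⟩
  · ext a b
    exact hk.1 (u b) (u a)
  · simpa [← sum_sum_mul_kernel_eq_dotProduct_gramMatrix] using hk.2 r u α hu hα

lemma nystrom_eq_dotProduct (hsymm : ∀ x x', k x x' = k x' x) {r : ℕ} (u : Fin r → S) (x : S) :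
    nystrom k u x x = (fun b => k (u b) x) ⬝ᵥ ((gramMatrix k u)⁻¹ *ᵥ fun b => k (u b) x) := by
  simp only [nystrom, dotProduct, mulVec, Finset.mul_sum, hsymm x]
  exact Finset.sum_congr rfl fun a _ => Finset.sum_congr rfl fun b _ => by ring

lemma sum_sum_mul_kernel_cons (hsymm : ∀ x x', k x x' = k x' x) {r : ℕ} (x : S)
    (u : Fin r → S) (c : Fin r → ℝ) :
    ∑ i, ∑ j, (Fin.cons 1 c : Fin (r + 1) → ℝ) i * (Fin.cons 1 c : Fin (r + 1) → ℝ) j *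
        k ((Fin.cons x u : Fin (r + 1) → S) i) ((Fin.cons x u : Fin (r + 1) → S) j) =
      k x x + 2 * (c ⬝ᵥ fun b => k (u b) x) + c ⬝ᵥ (gramMatrix k u *ᵥ c) := by
  rw [← sum_sum_mul_kernel_eq_dotProduct_gramMatrix]
  simp only [Fin.sum_univ_succ, Fin.cons_zero, Fin.cons_succ, Finset.sum_add_distrib, dotProduct,
    hsymm x, mul_one, one_mul]
  ring

end

/-- if `k` is strictly positive definite and `X̲` is a finite set of distinct
points, then for every `x ∈ S` with `x ∉ X̲` the Nyström approximation on the diagonal is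
strictly below the original function: `k(x,X̲) k(X̲,X̲)⁻¹ k(X̲,x) < k(x,x)`. -/
theorem nystrom_diag_lt {S : Type*} (k : S → S → ℝ)
    (hk : IsStrictPosDefKernel k)
    {r : ℕ} (u : Fin r → S) (hu : Function.Injective u) :
    ∀ x : S, x ∉ Set.range u → nystrom k u x x < k x x := by
  intro x hx
  set G := gramMatrix k u
  set v : Fin r → ℝ := fun b => k (u b) x
  have hGv : G *ᵥ (G⁻¹ *ᵥ v) = v := by
    rw [mulVec_mulVec, mul_nonsing_inv G ((hk.posDef_gramMatrix hu).isUnit.map detMonoidHom),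
      one_mulVec]
  have hpos := hk.2 (r + 1) (Fin.cons x u) (Fin.cons 1 (-(G⁻¹ *ᵥ v)))
    (Fin.cons_injective_iff.mpr ⟨hx, hu⟩) fun h => one_ne_zero (congrFun h 0)
  have hnys : nystrom k u x x = G⁻¹ *ᵥ v ⬝ᵥ v := by
    rw [nystrom_eq_dotProduct hk.1, dotProduct_comm]
  rw [sum_sum_mul_kernel_cons hk.1, mulVec_neg, hGv, neg_dotProduct, neg_dotProduct,
    dotProduct_neg, neg_neg] at hpos
  linarith
end

section
/- Let k be a positive definite function on S and let T be a finite rooted tree defining a hierarchical partitioning of S: the root node 1 has S_1 = S, and for every nonleaf node i, S_i is the disjoint union of the subdomains S_l over the children l of i. For each nonleaf node i, let X̲_i be a set of r distinct points (landmark points) in S_i with k(X̲_i,X̲_i) invertible. Define recursively k_h^{(i)}(x,x') = k(x,x') if i is a leaf; k_h^{(i)}(x,x') = k_h^{(j)}(x,x') if x,x' ∈ S_j for a child j of i; and k_h^{(i)}(x,x') = ψ^{(i)}(x,X̲_i) k(X̲_i,X̲_i)^{-1} ψ^{(i)}(X̲_i,x') otherwise, where ψ^{(i)}(x,X̲_i)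 = k(x,X̲_i) if x lies in a leaf child j of i, and ψ^{(i)}(x,X̲_i) = ψ^{(j)}(x,X̲_j) k(X̲_j,X̲_j)^{-1} k(X̲_j,X̲_i) if x lies in a nonleaf child j of i. Set k_h = k_h^{(1)}. Then k_h is a positive definite function on S. -/
lemma aux_bilin {n r : ℕ} (M : Matrix (Fin r) (Fin r) ℝ) (P : Finset (Fin n))
    (f : Fin n → Fin r → ℝ) (α : Fin n → ℝ) :
    ∑ a, ∑ b, (∑ p ∈ P, α p * f p a) * M a b * (∑ q ∈ P, α q * f q b)
      = ∑ p ∈ P, ∑ q ∈ P, α p * α q * (∑ a, ∑ b, f p a * M a b * f q b) := by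
  simp only [Finset.sum_mul, Finset.mul_sum]
  -- LHS: ∑ a, ∑ b, ∑ q∈P, ∑ p∈P, α p * f p a * M a b * (α q * f q b)
  rw [Finset.sum_comm]                                  -- ∑ b, ∑ a, ∑ q, ∑ p
  conv_lhs => enter [2, b]; rw [Finset.sum_comm]        -- ∑ b, ∑ q, ∑ a, ∑ p
  rw [Finset.sum_comm]                                  -- ∑ q, ∑ b, ∑ a, ∑ p
  conv_lhs => enter [2, q]; rw [Finset.sum_comm]        -- ∑ q, ∑ a, ∑ b, ∑ p
  conv_lhs => enter [2, q, 2, a]; rw [Finset.sum_comm]  -- ∑ q, ∑ a, ∑ p, ∑ b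
  conv_lhs => enter [2, q]; rw [Finset.sum_comm]        -- ∑ q, ∑ p, ∑ a, ∑ b
  rw [Finset.sum_comm]                                  -- ∑ p, ∑ q, ∑ a, ∑ b
  refine Finset.sum_congr rfl fun p _ => Finset.sum_congr rfl fun q _ => ?_
  refine Finset.sum_congr rfl fun a _ => Finset.sum_congr rfl fun b _ => ?_
  ring

lemma aux_collapse {r : ℕ} (G M : Matrix (Fin r) (Fin r) ℝ) (h : M * G = 1)
    (v : Fin r → ℝ) (d : Fin r) :
    ∑ c, (∑ b, v b * M b c) * G c d = v d := by
  simp only [Finset.sum_mul]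
  rw [Finset.sum_comm]
  have h1 : ∀ b, ∑ c, v b * M b c * G c d = v b * (M * G) b d := fun b => by
    rw [Matrix.mul_apply, Finset.mul_sum]
    exact Finset.sum_congr rfl fun c _ => by ring
  simp [h1, h, Matrix.one_apply]

lemma aux_collapse' {r : ℕ} (G M : Matrix (Fin r) (Fin r) ℝ) (h : G * M = 1)
    (v : Fin r → ℝ) (d : Fin r) :
    ∑ c, G d c * (∑ b, M c b * v b) = v d := by
  have h1 : ∀ c, G d c * (∑ b, M c b * v b) = ∑ b, G d c * M c b * v b := fun c => by
    rw [Finset.mul_sum]; exact Finset.sum_congr rfl fun b _ => by ring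
  simp only [h1]
  rw [Finset.sum_comm]
  have h2 : ∀ b, ∑ c, G d c * M c b * v b = (G * M) d b * v b := fun b => by
    rw [Matrix.mul_apply, Finset.sum_mul]
  simp [h2, h, Matrix.one_apply]

lemma aux_schur_univ {S : Type*} {k : S → S → ℝ} (hk : IsPosDefKernel k) {r : ℕ}
    (u : Fin r → S) (hG : IsUnit (gramMatrix k u).det) {m : ℕ} (y : Fin m → S)
    (β : Fin m → ℝ) :
    ∑ a, ∑ b, (∑ p, β p * k (y p) (u a)) * (gramMatrix k u)⁻¹ a b *
        (∑ q, β q * k (y q) (u b))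
      ≤ ∑ p, ∑ q, β p * β q * k (y p) (y q) := by
  set G := gramMatrix k u with hGdef
  set w : Fin r → ℝ := fun a => ∑ p, β p * k (y p) (u a) with hw
  set γ : Fin r → ℝ := fun a => -∑ b, G⁻¹ a b * w b with hγ
  have hmul : G * G⁻¹ = 1 := Matrix.mul_nonsing_inv G hG
  have key : ∀ a, ∑ b, G a b * γ b = -w a := by
    intro a
    have e1 : ∀ b, G a b * γ b = -(G a b * (∑ c, G⁻¹ b c * w c)) := fun b => by
      rw [hγ, mul_neg]
    simp only [e1, Finset.sum_neg_distrib]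
    rw [aux_collapse' G G⁻¹ hmul w a]
  have hgw : ∀ a, γ a * w a = -∑ b, w a * G⁻¹ a b * w b := by
    intro a
    rw [hγ, neg_mul, Finset.sum_mul]
    exact neg_inj.mpr (Finset.sum_congr rfl fun b _ => by ring)
  set T : ℝ := ∑ a, ∑ b, w a * G⁻¹ a b * w b with hT
  have hsum_gw : ∑ a, γ a * w a = -T := by
    simp only [hgw, Finset.sum_neg_distrib, hT]
  have H := hk.2 (m + r) (Fin.append y u) (Fin.append β γ)
  simp only [Fin.sum_univ_add, Fin.append_left, Fin.append_right,
    Finset.sum_add_distrib] at H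
  have hc1 : ∑ p, ∑ a, β p * γ a * k (y p) (u a) = -T := by
    rw [Finset.sum_comm, ← hsum_gw]
    refine Finset.sum_congr rfl fun a _ => ?_
    rw [hw, Finset.mul_sum]
    exact Finset.sum_congr rfl fun p _ => by ring
  have hc2 : ∑ a, ∑ p, γ a * β p * k (u a) (y p) = -T := by
    rw [← hc1, Finset.sum_comm]
    exact Finset.sum_congr rfl fun p _ => Finset.sum_congr rfl fun a _ => by
      rw [hk.1 (u a) (y p)]; ring
  have hc3 : ∑ a, ∑ b, γ a * γ b * k (u a) (u b) = T := by
    have e2 : ∀ a, ∑ b, γ a * γ b * k (u a) (u b) = γ a * -w a := by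
      intro a
      rw [← key a, Finset.mul_sum]
      exact Finset.sum_congr rfl fun b _ => by
        show γ a * γ b * G a b = _
        ring
    simp only [e2]
    have e3 : ∀ a, γ a * -w a = ∑ b, w a * G⁻¹ a b * w b := by
      intro a
      rw [mul_neg, hgw a, neg_neg]
    simp only [e3, hT]
  rw [hc1, hc2, hc3] at H
  linarith

lemma aux_schur {S : Type*} {k : S → S → ℝ} (hk : IsPosDefKernel k) {r : ℕ}
    (u : Fin r → S) (hG : IsUnit (gramMatrix k u).det) {m : ℕ} (y : Fin m → S)
    (β : Fin m → ℝ) (P : Finset (Fin m)) :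
    ∑ a, ∑ b, (∑ p ∈ P, β p * k (y p) (u a)) * (gramMatrix k u)⁻¹ a b *
        (∑ q ∈ P, β q * k (y q) (u b))
      ≤ ∑ p ∈ P, ∑ q ∈ P, β p * β q * k (y p) (y q) := by
  set β' : Fin m → ℝ := fun p => if p ∈ P then β p else 0 with hβ'
  have e1 : ∀ g : Fin m → ℝ, ∑ p ∈ P, β p * g p = ∑ p, β' p * g p := by
    intro g
    rw [eq_comm]
    calc ∑ p, β' p * g p = ∑ p, if p ∈ P then β p * g p else 0 := by
          refine Finset.sum_congr rfl fun p _ => ?_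
          by_cases hp : p ∈ P <;> simp [hβ', hp]
      _ = ∑ p ∈ Finset.univ ∩ P, β p * g p := Finset.sum_ite_mem _ _ _
      _ = ∑ p ∈ P, β p * g p := by rw [Finset.univ_inter]
  have e2 : ∀ g : Fin m → Fin m → ℝ,
      ∑ p ∈ P, ∑ q ∈ P, β p * β q * g p q = ∑ p, ∑ q, β' p * β' q * g p q := by
    intro g
    calc ∑ p ∈ P, ∑ q ∈ P, β p * β q * g p q
        = ∑ p ∈ P, β p * ∑ q ∈ P, β q * g p q := by
          refine Finset.sum_congr rfl fun p _ => ?_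
          rw [Finset.mul_sum]
          exact Finset.sum_congr rfl fun q _ => by ring
      _ = ∑ p, β' p * ∑ q ∈ P, β q * g p q := e1 _
      _ = ∑ p, β' p * ∑ q, β' q * g p q := by
          refine Finset.sum_congr rfl fun p _ => by rw [e1]
      _ = ∑ p, ∑ q, β' p * β' q * g p q := by
          refine Finset.sum_congr rfl fun p _ => ?_
          rw [Finset.mul_sum]
          exact Finset.sum_congr rfl fun q _ => by ring
  have eA : ∀ a, (∑ p ∈ P, β p * k (y p) (u a)) = ∑ p, β' p * k (y p) (u a) :=
    fun a => e1 _
  simp only [eA]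
  rw [e2 fun p q => k (y p) (y q)]
  exact aux_schur_univ hk u hG y β'

lemma aux_inv_psd {S : Type*} {k : S → S → ℝ} (hk : IsPosDefKernel k) {r : ℕ}
    (u : Fin r → S) (hG : IsUnit (gramMatrix k u).det) (w : Fin r → ℝ) :
    0 ≤ ∑ a, ∑ b, w a * (gramMatrix k u)⁻¹ a b * w b := by
  set G := gramMatrix k u with hGdef
  have hsym : ∀ a b, G a b = G b a := fun a b => hk.1 (u a) (u b)
  have hmul : G⁻¹ * G = 1 := Matrix.nonsing_inv_mul G hG
  set δ : Fin r → ℝ := fun a => ∑ c, w c * G⁻¹ c a with hδ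
  have H := hk.2 r u δ
  have key : ∀ a, ∑ b, δ b * G a b = w a := by
    intro a
    have h1 : ∀ b, δ b * G a b = (∑ c, w c * G⁻¹ c b) * G b a := fun b => by
      rw [hsym a b, hδ]
    simp only [h1]
    exact aux_collapse G G⁻¹ hmul w a
  have e2 : ∀ a, ∑ b, δ a * δ b * k (u a) (u b) = δ a * w a := by
    intro a
    rw [← key a, Finset.mul_sum]
    refine Finset.sum_congr rfl fun b _ => ?_
    show δ a * δ b * G a b = δ a * (δ b * G a b)
    ring
  simp only [e2] at H
  have e3 : ∑ a, δ a * w a = ∑ a, ∑ b, w a * G⁻¹ a b * w b := by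
    rw [Finset.sum_comm]
    refine Finset.sum_congr rfl fun a _ => ?_
    rw [hδ, Finset.sum_mul]
  rw [e3] at H
  exact H

lemma aux_beta {r : ℕ} (G : Matrix (Fin r) (Fin r) ℝ) (hmul : G⁻¹ * G = 1)
    (v : Fin r → ℝ) :
    ∑ c, ∑ d, (∑ b, v b * G⁻¹ b c) * (∑ b, v b * G⁻¹ b d) * G c d
      = ∑ b, ∑ d, v b * G⁻¹ b d * v d := by
  have e0 : ∀ d, ∑ c, (∑ b, v b * G⁻¹ b c) * G c d = v d := fun d =>
    aux_collapse G G⁻¹ hmul v d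
  calc ∑ c, ∑ d, (∑ b, v b * G⁻¹ b c) * (∑ b, v b * G⁻¹ b d) * G c d
      = ∑ d, ∑ c, ((∑ b, v b * G⁻¹ b c) * G c d) * (∑ b, v b * G⁻¹ b d) := by
        rw [Finset.sum_comm]
        exact Finset.sum_congr rfl fun d _ => Finset.sum_congr rfl fun c _ => by ring
    _ = ∑ d, (∑ c, (∑ b, v b * G⁻¹ b c) * G c d) * (∑ b, v b * G⁻¹ b d) := by
        refine Finset.sum_congr rfl fun d _ => ?_
        rw [Finset.sum_mul]
    _ = ∑ d, v d * (∑ b, v b * G⁻¹ b d) := by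
        refine Finset.sum_congr rfl fun d _ => by rw [e0]
    _ = ∑ b, ∑ d, v b * G⁻¹ b d * v d := by
        rw [show (∑ b, ∑ d, v b * G⁻¹ b d * v d) = ∑ d, ∑ b, v b * G⁻¹ b d * v d
          from Finset.sum_comm]
        refine Finset.sum_congr rfl fun d _ => ?_
        rw [Finset.mul_sum]
        exact Finset.sum_congr rfl fun b _ => by ring

/-- the hierarchical covariance function `k_h = k_h^{(root)}`, built from a
positive definite base kernel `k` via a finite rooted partitioning tree (nodes `ι`,
children `Ch`, subdomains `dom`, the root's subdomain is `S`, children partition their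
parent's subdomain) with landmark sets `u i` of `r` distinct points in `Sᵢ` having
invertible Gram matrices, through the recursion
`k_h^{(i)} = k` on leaves, `k_h^{(i)} = k_h^{(j)}` on a common child subdomain `S_j`, and
`k_h^{(i)}(x,x') = ψ^{(i)}(x,X̲ᵢ) k(X̲ᵢ,X̲ᵢ)⁻¹ ψ^{(i)}(X̲ᵢ,x')` otherwise, where
`ψ^{(i)}(x,X̲ᵢ) = k(x,X̲ᵢ)` for `x` in a leaf child and
`ψ^{(i)}(x,X̲ᵢ) = ψ^{(j)}(x,X̲ⱼ) k(X̲ⱼ,X̲ⱼ)⁻¹ k(X̲ⱼ,X̲ᵢ)` for `x` in a nonleaf child `j`,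
is positive definite on `S`. -/
theorem hierarchical_posDef {S ι : Type*} [Fintype ι] (k : S → S → ℝ)
    (hk : IsPosDefKernel k)
    (root : ι) (Ch : ι → Finset ι) (dom : ι → Set S) (depth : ι → ℕ)
    (hroot : dom root = Set.univ)
    (hsub : ∀ i, ∀ j ∈ Ch i, dom j ⊆ dom i)
    (hcov : ∀ i, Ch i ≠ ∅ → ∀ x ∈ dom i, ∃ j ∈ Ch i, x ∈ dom j)
    (hdisj : ∀ i, ∀ j ∈ Ch i, ∀ l ∈ Ch i, j ≠ l → Disjoint (dom j) (dom l))
    (hparent_unique : ∀ i i' j, j ∈ Ch i → j ∈ Ch i' → i = i')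
    (hroot_not_child : ∀ i, root ∉ Ch i)
    (hdepth : ∀ i, ∀ j ∈ Ch i, depth j < depth i)
    {r : ℕ} (u : ι → Fin r → S)
    (hu_mem : ∀ i, Ch i ≠ ∅ → ∀ a, u i a ∈ dom i)
    (hu_inj : ∀ i, Ch i ≠ ∅ → Function.Injective (u i))
    (hGram : ∀ i, Ch i ≠ ∅ → IsUnit (gramMatrix k (u i)).det)
    (khi : ι → S → S → ℝ) (ψ : ι → S → Fin r → ℝ)
    (hkhi_leaf : ∀ i, Ch i = ∅ → ∀ x x', khi i x x' = k x x')
    (hkhi_child : ∀ i, ∀ j ∈ Ch i, ∀ x ∈ dom j, ∀ x' ∈ dom j, khi i x x' = khi j x x')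
    (hkhi_cross : ∀ i, Ch i ≠ ∅ → ∀ x ∈ dom i, ∀ x' ∈ dom i,
      (¬ ∃ j ∈ Ch i, x ∈ dom j ∧ x' ∈ dom j) →
      khi i x x' = ∑ a, ∑ b, ψ i x a * (gramMatrix k (u i))⁻¹ a b * ψ i x' b)
    (hψ_leaf : ∀ i, ∀ j ∈ Ch i, Ch j = ∅ → ∀ x ∈ dom j, ∀ a, ψ i x a = k x (u i a))
    (hψ_rec : ∀ i, ∀ j ∈ Ch i, Ch j ≠ ∅ → ∀ x ∈ dom j, ∀ a,
      ψ i x a = ∑ b, ∑ c, ψ j x b * (gramMatrix k (u j))⁻¹ b c * k (u j c) (u i a)) :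
    IsPosDefKernel (khi root) := by
  classical
  -- symmetry of the inverse Gram matrices
  have hGinv_symm : ∀ i a b, (gramMatrix k (u i))⁻¹ a b = (gramMatrix k (u i))⁻¹ b a := by
    intro i a b
    have hs : Matrix.transpose (gramMatrix k (u i)) = gramMatrix k (u i) := by
      ext a b
      exact hk.1 (u i b) (u i a)
    have ht : Matrix.transpose (gramMatrix k (u i))⁻¹ = (gramMatrix k (u i))⁻¹ := by
      rw [Matrix.transpose_nonsing_inv, hs]
    calc (gramMatrix k (u i))⁻¹ a b
        = Matrix.transpose (gramMatrix k (u i))⁻¹ b a := rfl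
      _ = (gramMatrix k (u i))⁻¹ b a := by rw [ht]
  have child_unique : ∀ i, ∀ j ∈ Ch i, ∀ l ∈ Ch i, ∀ z : S,
      z ∈ dom j → z ∈ dom l → j = l := by
    intro i j hj l hl z hzj hzl
    by_contra hne
    exact Set.disjoint_left.mp (hdisj i j hj l hl hne) hzj hzl
  -- main inequality, by induction on a depth bound
  have main : ∀ d : ℕ, ∀ i, depth i < d → Ch i ≠ ∅ →
      ∀ (n : ℕ) (x : Fin n → S) (α : Fin n → ℝ) (P : Finset (Fin n)),
        (∀ p ∈ P, x p ∈ dom i) →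
        ∑ a, ∑ b, (∑ p ∈ P, α p * ψ i (x p) a) * (gramMatrix k (u i))⁻¹ a b *
            (∑ q ∈ P, α q * ψ i (x q) b)
          ≤ ∑ p ∈ P, ∑ q ∈ P, α p * α q * khi i (x p) (x q) := by
    intro d
    induction d with
    | zero => exact fun i h => absurd h (Nat.not_lt_zero _)
    | succ d IH =>
      intro i hdi hne n x α P hxP
      have hex : ∀ p : Fin n, ∃ j, p ∈ P → j ∈ Ch i ∧ x p ∈ dom j := by
        intro p
        by_cases hp : p ∈ P
        · obtain ⟨j, hj, hxj⟩ := hcov i hne (x p) (hxP p hp)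
          exact ⟨j, fun _ => ⟨hj, hxj⟩⟩
        · exact ⟨i, fun h => absurd h hp⟩
      choose c hc using hex
      have hpoint : ∀ p ∈ P, ∀ q ∈ P, khi i (x p) (x q) =
          if c p = c q then khi (c p) (x p) (x q)
          else ∑ a, ∑ b, ψ i (x p) a * (gramMatrix k (u i))⁻¹ a b * ψ i (x q) b := by
        intro p hp q hq
        by_cases hcc : c p = c q
        · rw [if_pos hcc]
          exact hkhi_child i (c p) (hc p hp).1 (x p) (hc p hp).2 (x q)
            (hcc ▸ (hc q hq).2)
        · rw [if_neg hcc]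
          refine hkhi_cross i hne (x p) (hxP p hp) (x q) (hxP q hq) ?_
          rintro ⟨j, hj, hxpj, hxqj⟩
          have h1 : c p = j :=
            child_unique i (c p) (hc p hp).1 j hj (x p) (hc p hp).2 hxpj
          have h2 : c q = j :=
            child_unique i (c q) (hc q hq).1 j hj (x q) (hc q hq).2 hxqj
          exact hcc (h1.trans h2.symm)
      set D : Fin n → Fin n → ℝ := fun p q =>
        α p * α q * khi i (x p) (x q) -
          α p * α q * (∑ a, ∑ b, ψ i (x p) a * (gramMatrix k (u i))⁻¹ a b *
            ψ i (x q) b) with hD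
      have hTB : (∑ a, ∑ b, (∑ p ∈ P, α p * ψ i (x p) a) *
              (gramMatrix k (u i))⁻¹ a b * (∑ q ∈ P, α q * ψ i (x q) b))
          = ∑ p ∈ P, ∑ q ∈ P, α p * α q *
              (∑ a, ∑ b, ψ i (x p) a * (gramMatrix k (u i))⁻¹ a b * ψ i (x q) b) :=
        aux_bilin ((gramMatrix k (u i))⁻¹) P (fun p => ψ i (x p)) α
      have key : 0 ≤ ∑ p ∈ P, ∑ q ∈ P, D p q := by
        have hfib : ∑ j' ∈ Ch i, ∑ p ∈ P.filter (fun p => c p = j'), ∑ q ∈ P, D p q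
            = ∑ p ∈ P, ∑ q ∈ P, D p q :=
          Finset.sum_fiberwise_of_maps_to (fun p hp => (hc p hp).1) _
        rw [← hfib]
        refine Finset.sum_nonneg fun j' hj' => ?_
        have hinner : ∀ p ∈ P.filter (fun p => c p = j'),
            ∑ q ∈ P, D p q = ∑ q ∈ P.filter (fun q => c q = j'), D p q := by
          intro p hp
          rw [Finset.mem_filter] at hp
          refine (Finset.sum_filter_of_ne ?_).symm
          intro q hq hDq
          by_contra hcq
          apply hDq
          have hcc : ¬ c p = c q := by
            rw [hp.2]
            exact fun h => hcq h.symm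
          have hpt := hpoint p hp.1 q hq
          rw [if_neg hcc] at hpt
          simp only [hD, hpt, sub_self]
        rw [Finset.sum_congr rfl hinner]
        -- now a single-child block
        have hmemP : ∀ p ∈ P.filter (fun p => c p = j'), p ∈ P ∧ c p = j' := by
          intro p hp
          rwa [Finset.mem_filter] at hp
        have hxdom : ∀ p ∈ P.filter (fun p => c p = j'), x p ∈ dom j' := by
          intro p hp
          obtain ⟨hp1, hp2⟩ := hmemP p hp
          exact hp2 ▸ (hc p hp1).2
        have hDval : ∀ p ∈ P.filter (fun p => c p = j'),
            ∀ q ∈ P.filter (fun q => c q = j'), D p q =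
            α p * α q * khi j' (x p) (x q) -
              α p * α q * (∑ a, ∑ b, ψ i (x p) a * (gramMatrix k (u i))⁻¹ a b *
                ψ i (x q) b) := by
          intro p hp q hq
          obtain ⟨hp1, hp2⟩ := hmemP p hp
          obtain ⟨hq1, hq2⟩ := hmemP q hq
          have hpt := hpoint p hp1 q hq1
          rw [if_pos (hp2.trans hq2.symm)] at hpt
          simp only [hD, hpt, hp2]
        rw [Finset.sum_congr rfl fun p hp =>
          Finset.sum_congr rfl fun q hq => hDval p hp q hq]
        simp only [Finset.sum_sub_distrib]
        rw [sub_nonneg]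
        have hbB : (∑ p ∈ P.filter (fun p => c p = j'),
                ∑ q ∈ P.filter (fun q => c q = j'), α p * α q *
                  (∑ a, ∑ b, ψ i (x p) a * (gramMatrix k (u i))⁻¹ a b * ψ i (x q) b))
            = ∑ a, ∑ b, (∑ p ∈ P.filter (fun p => c p = j'), α p * ψ i (x p) a) *
                (gramMatrix k (u i))⁻¹ a b *
                (∑ q ∈ P.filter (fun q => c q = j'), α q * ψ i (x q) b) :=
          (aux_bilin ((gramMatrix k (u i))⁻¹) _ (fun p => ψ i (x p)) α).symm
        rw [hbB]
        have hj'mem : j' ∈ Ch i := hj'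
        by_cases hjleaf : Ch j' = ∅
        · -- leaf child: Nyström bound directly
          have eW : ∀ a, (∑ p ∈ P.filter (fun p => c p = j'), α p * ψ i (x p) a)
              = ∑ p ∈ P.filter (fun p => c p = j'), α p * k (x p) (u i a) :=
            fun a => Finset.sum_congr rfl fun p hp => by
              rw [hψ_leaf i j' hj'mem hjleaf (x p) (hxdom p hp) a]
          have eQ : (∑ p ∈ P.filter (fun p => c p = j'),
                  ∑ q ∈ P.filter (fun q => c q = j'), α p * α q * khi j' (x p) (x q))
              = ∑ p ∈ P.filter (fun p => c p = j'),
                  ∑ q ∈ P.filter (fun q => c q = j'), α p * α q * k (x p) (x q) :=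
            Finset.sum_congr rfl fun p _ => Finset.sum_congr rfl fun q _ => by
              rw [hkhi_leaf j' hjleaf]
          simp only [eW]
          rw [eQ]
          exact aux_schur hk (u i) (hGram i hne) x α _
        · -- nonleaf child: induction hypothesis plus Schur step
          have hdj : depth j' < d := by
            have := hdepth i j' hj'mem
            omega
          set v : Fin r → ℝ :=
            fun b => ∑ p ∈ P.filter (fun p => c p = j'), α p * ψ j' (x p) b with hv
          set βv : Fin r → ℝ :=
            fun e => ∑ b, v b * (gramMatrix k (u j'))⁻¹ b e with hβv
          have hwj : ∀ a, (∑ p ∈ P.filter (fun p => c p = j'), α p * ψ i (x p) a)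
              = ∑ e, βv e * k (u j' e) (u i a) := by
            intro a
            calc ∑ p ∈ P.filter (fun p => c p = j'), α p * ψ i (x p) a
                = ∑ p ∈ P.filter (fun p => c p = j'), ∑ b, ∑ e,
                    α p * (ψ j' (x p) b * (gramMatrix k (u j'))⁻¹ b e *
                      k (u j' e) (u i a)) := by
                  refine Finset.sum_congr rfl fun p hp => ?_
                  rw [hψ_rec i j' hj'mem hjleaf (x p) (hxdom p hp) a, Finset.mul_sum]
                  exact Finset.sum_congr rfl fun b _ => by rw [Finset.mul_sum]
              _ = ∑ b, ∑ e, (∑ p ∈ P.filter (fun p => c p = j'),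
                    α p * ψ j' (x p) b) * (gramMatrix k (u j'))⁻¹ b e *
                      k (u j' e) (u i a) := by
                  rw [Finset.sum_comm]
                  refine Finset.sum_congr rfl fun b _ => ?_
                  rw [Finset.sum_comm]
                  refine Finset.sum_congr rfl fun e _ => ?_
                  rw [Finset.sum_mul, Finset.sum_mul]
                  exact Finset.sum_congr rfl fun p _ => by ring
              _ = ∑ e, βv e * k (u j' e) (u i a) := by
                  rw [Finset.sum_comm]
                  refine Finset.sum_congr rfl fun e _ => ?_
                  rw [hβv, Finset.sum_mul]
          calc ∑ a, ∑ b, (∑ p ∈ P.filter (fun p => c p = j'), α p * ψ i (x p) a) *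
                  (gramMatrix k (u i))⁻¹ a b *
                  (∑ q ∈ P.filter (fun q => c q = j'), α q * ψ i (x q) b)
              = ∑ a, ∑ b, (∑ e, βv e * k (u j' e) (u i a)) *
                  (gramMatrix k (u i))⁻¹ a b *
                  (∑ e, βv e * k (u j' e) (u i b)) := by simp only [hwj]
            _ ≤ ∑ e, ∑ e', βv e * βv e' * k (u j' e) (u j' e') :=
                aux_schur_univ hk (u i) (hGram i hne) (u j') βv
            _ = ∑ b, ∑ e, v b * (gramMatrix k (u j'))⁻¹ b e * v e :=
                aux_beta (gramMatrix k (u j'))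
                  (Matrix.nonsing_inv_mul _ (hGram j' hjleaf)) v
            _ ≤ ∑ p ∈ P.filter (fun p => c p = j'),
                  ∑ q ∈ P.filter (fun q => c q = j'),
                    α p * α q * khi j' (x p) (x q) :=
                IH j' hdj hjleaf n x α _ hxdom
      have expand : ∑ p ∈ P, ∑ q ∈ P, D p q
          = (∑ p ∈ P, ∑ q ∈ P, α p * α q * khi i (x p) (x q)) -
            ∑ a, ∑ b, (∑ p ∈ P, α p * ψ i (x p) a) * (gramMatrix k (u i))⁻¹ a b *
              (∑ q ∈ P, α q * ψ i (x q) b) := by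
        simp only [hD, Finset.sum_sub_distrib]
        rw [hTB]
      rw [expand] at key
      linarith
  -- symmetry of khi, by induction on a depth bound
  have symm : ∀ d : ℕ, ∀ i, depth i < d → ∀ x ∈ dom i, ∀ x' ∈ dom i,
      khi i x x' = khi i x' x := by
    intro d
    induction d with
    | zero => exact fun i h => absurd h (Nat.not_lt_zero _)
    | succ d IH =>
      intro i hdi x hx x' hx'
      by_cases hne : Ch i = ∅
      · rw [hkhi_leaf i hne x x', hkhi_leaf i hne x' x]
        exact hk.1 x x'
      · by_cases hcom : ∃ j ∈ Ch i, x ∈ dom j ∧ x' ∈ dom j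
        · obtain ⟨j, hj, hxj, hx'j⟩ := hcom
          rw [hkhi_child i j hj x hxj x' hx'j, hkhi_child i j hj x' hx'j x hxj]
          exact IH j (by have := hdepth i j hj; omega) x hxj x' hx'j
        · have hcom' : ¬ ∃ j ∈ Ch i, x' ∈ dom j ∧ x ∈ dom j := by
            rintro ⟨j, hj, h1, h2⟩
            exact hcom ⟨j, hj, h2, h1⟩
          rw [hkhi_cross i hne x hx x' hx' hcom,
            hkhi_cross i hne x' hx' x hx hcom', Finset.sum_comm]
          refine Finset.sum_congr rfl fun a _ => Finset.sum_congr rfl fun b _ => ?_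
          rw [hGinv_symm i b a]
          ring
  constructor
  · intro x x'
    exact symm (depth root + 1) root (Nat.lt_succ_self _) x (by rw [hroot]; trivial)
      x' (by rw [hroot]; trivial)
  · intro n x α
    by_cases hne : Ch root = ∅
    · simp only [hkhi_leaf root hne]
      exact hk.2 n x α
    · have h1 := main (depth root + 1) root (Nat.lt_succ_self _) hne n x α
        Finset.univ (fun p _ => by rw [hroot]; trivial)
      have h2 : 0 ≤ ∑ a, ∑ b, (∑ p, α p * ψ root (x p) a) *
          (gramMatrix k (u root))⁻¹ a b * (∑ q, α q * ψ root (x q) b) :=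
        aux_inv_psd hk (u root) (hGram root hne) (fun a => ∑ p, α p * ψ root (x p) a)
      exact le_trans h2 h1
end

section
/- Let k be a strictly positive definite function on S and let T be a finite rooted tree defining a hierarchical partitioning of S: the root node 1 has S_1 = S, and for every nonleaf node i, S_i is the disjoint union of the subdomains S_l over the children l of i. For each nonleaf node i, let X̲_i be a set of r distinct points (landmark points) in S_i (so k(X̲_i,X̲_i) is invertible). Define recursively k_h^{(i)}(x,x') = k(x,x') if i is a leaf; k_h^{(i)}(x,x') = k_h^{(j)}(x,x') if x,x' ∈ S_j for a child j of i; and k_h^{(i)}(x,x') = ψ^{(i)}(x,X̲_i) k(X̲_i,X̲_i)^{-1} ψ^{(i)}(X̲_i,x') otherwise, where ψ^{(i)}(x,X̲_i) = k(x,X̲_i) if x lies in a leaf child j of i, and ψ^{(i)}(x,X̲_i) = ψ^{(j)}(x,X̲_j) k(X̲_j,X̲_j)^{-1} k(X̲_j,X̲_i) if x lies in a nonleaf child j of i. Set k_h = k_h^{(1)}. Then k_h is strictly positive definite on S. -/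
/-
Realise `k` on the finitely many relevant points (data and landmarks) by a feature map `f` into a
Euclidean space, and let `Pᵢ` be the orthogonal projection onto the span of the landmark features
`f(X̲ᵢ)`. The node features `ωᵢ = f` at a leaf and `ωᵢ(x) = ψ^{(i)}(x,X̲ᵢ) k(X̲ᵢ,X̲ᵢ)⁻¹ f(X̲ᵢ)`
otherwise satisfy `ωᵢ(x) = Pᵢ ωⱼ(x)` for `x` in a child `j`, and `k_h^{(i)}(x,x') = ⟪ωᵢ x, ωᵢ x'⟫`
across children. Hence the quadratic form `Qᵢ(β)` of `k_h^{(i)}` is `‖∑ β ωᵢ‖²` plus, over the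
children `j`, `Qⱼ(βⱼ) - ‖Pᵢ ∑ βⱼ ωⱼ‖²` for the restrictions `βⱼ` of `β`. Since projections do not
increase norms and fix exactly the vectors they preserve the norm of, induction up the tree gives
`Qᵢ(β) ≥ ‖∑ β ωᵢ‖²`, with equality only if `∑ β ωᵢ = ∑ β f`. At the root, `Q(α) ≤ 0` would force
`∑ α f = 0`, i.e. `∑ αα k = 0`, contradicting strict positive definiteness of `k`.
-/

open scoped RealInnerProductSpace MatrixOrder
open Submodule (span)

section Features

variable {E : Type*} [NormedAddCommGroup E] [InnerProductSpace ℝ E]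

theorem norm_sq_sum_smul {P : Type*} [Fintype P] (β : P → ℝ) (v : P → E) :
    ‖∑ p, β p • v p‖ ^ 2 = ∑ p, ∑ q, β p * β q * ⟪v p, v q⟫ := by
  rw [← real_inner_self_eq_norm_sq, sum_inner]
  simp only [inner_sum, real_inner_smul_left, real_inner_smul_right]
  exact Finset.sum_congr rfl fun _ _ => Finset.sum_congr rfl fun _ _ => by ring

instance Submodule.hasOrthogonalProjection_span_range {κ : Type*} [Finite κ] (e : κ → E) :
    (span ℝ (Set.range e)).HasOrthogonalProjection :=
  have := FiniteDimensional.span_of_finite ℝ (Set.finite_range e)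
  inferInstance

variable {r : ℕ} {e : Fin r → E}

theorem LinearIndependent.starProjection_span_range_eq_sum (he : LinearIndependent ℝ e) (w : E) :
    (span ℝ (Set.range e)).starProjection w =
      ∑ a, ∑ b, (⟪e a, w⟫ * (Matrix.gram ℝ e)⁻¹ a b) • e b := by
  have hG : (Matrix.gram ℝ e)⁻¹ * Matrix.gram ℝ e = 1 :=
    Matrix.nonsing_inv_mul _
      ((Matrix.posDef_gram_of_linearIndependent he).isUnit.map Matrix.detMonoidHom)
  refine Submodule.eq_starProjection_of_mem_of_inner_eq_zero
    (Submodule.sum_mem _ fun a _ => Submodule.sum_mem _ fun b _ =>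
      Submodule.smul_mem _ _ (Submodule.subset_span ⟨b, rfl⟩)) fun z hz => ?_
  induction hz using Submodule.span_induction with
  | mem z hz =>
    obtain ⟨d, rfl⟩ := hz
    have hcoeff : ∑ a, ∑ b, ⟪e a, w⟫ * (Matrix.gram ℝ e)⁻¹ a b * ⟪e b, e d⟫ = ⟪w, e d⟫ := by
      simp_rw [mul_assoc, ← Finset.mul_sum, ← Matrix.gram_apply, ← Matrix.mul_apply, hG,
        Matrix.one_apply, mul_ite, mul_one, mul_zero, Finset.sum_ite_eq', Finset.mem_univ,
        if_true, real_inner_comm]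
    simp [inner_sub_left, sum_inner, real_inner_smul_left, hcoeff]
  | zero => exact inner_zero_right _
  | add z z' _ _ hz hz' => rw [inner_add_right, hz, hz', add_zero]
  | smul c z _ hz => rw [real_inner_smul_right, hz, mul_zero]

theorem LinearIndependent.inner_starProjection_span_range (he : LinearIndependent ℝ e)
    (v w : E) :
    ⟪(span ℝ (Set.range e)).starProjection v, (span ℝ (Set.range e)).starProjection w⟫ =
      ∑ a, ∑ b, ⟪e a, v⟫ * (Matrix.gram ℝ e)⁻¹ a b * ⟪e b, w⟫ := by
  rw [← Submodule.inner_starProjection_left_eq_right, Submodule.starProjection_eq_self_iff.mpr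
    (Submodule.starProjection_apply_mem _ v), he.starProjection_span_range_eq_sum]
  simp only [sum_inner, real_inner_smul_left]

end Features

def NormSqBound {E : Type*} [NormedAddCommGroup E] (q : ℝ) (w v : E) : Prop :=
  ‖w‖ ^ 2 ≤ q ∧ (q ≤ ‖w‖ ^ 2 → v = w)

namespace NormSqBound

variable {E : Type*} [NormedAddCommGroup E] {q : ℝ} {w v : E}

theorem starProjection [InnerProductSpace ℝ E] (h : NormSqBound q w v) (K : Submodule ℝ E)
    [K.HasOrthogonalProjection] :
    NormSqBound q (K.starProjection w) v := by
  have hle : ‖K.starProjection w‖ ≤ ‖w‖ := K.norm_starProjection_apply_le w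
  refine ⟨(pow_le_pow_left₀ (norm_nonneg _) hle 2).trans h.1, fun hq => ?_⟩
  have hnorm : ‖K.starProjection w‖ = ‖w‖ :=
    le_antisymm hle (le_of_pow_le_pow_left₀ two_ne_zero (norm_nonneg _) (h.1.trans hq))
  rw [K.starProjection_eq_self_iff.mpr ((K.mem_iff_norm_starProjection w).mpr hnorm)]
  exact h.2 (hnorm ▸ hq)

theorem sum {J : Type*} {s : Finset J} {q : J → ℝ} {w v : J → E}
    (h : ∀ j ∈ s, NormSqBound (q j) (w j) (v j)) :
    NormSqBound (‖∑ j ∈ s, w j‖ ^ 2 + ∑ j ∈ s, (q j - ‖w j‖ ^ 2)) (∑ j ∈ s, w j)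
      (∑ j ∈ s, v j) := by
  have hdefect : ∀ j ∈ s, 0 ≤ q j - ‖w j‖ ^ 2 := fun j hj => sub_nonneg.mpr (h j hj).1
  refine ⟨le_add_of_nonneg_right (Finset.sum_nonneg hdefect), fun hq =>
    Finset.sum_congr rfl fun j hj => (h j hj).2 ?_⟩
  have hzero := (Finset.sum_eq_zero_iff_of_nonneg hdefect).mp
    (le_antisymm (by linarith) (Finset.sum_nonneg hdefect)) j hj
  linarith

theorem pos (h : NormSqBound q w v) (hv : 0 < ‖v‖ ^ 2) : 0 < q := by
  by_contra! hq
  rw [h.2 (hq.trans (sq_nonneg _))] at hv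
  linarith [h.1]

end NormSqBound

theorem Matrix.PosSemidef.exists_gram_eq {P : Type*} [Fintype P] {K : Matrix P P ℝ}
    (hK : K.PosSemidef) : ∃ v : P → EuclideanSpace ℝ P, Matrix.gram ℝ v = K := by
  classical
  obtain ⟨B, rfl⟩ := CStarAlgebra.nonneg_iff_eq_star_mul_self.mp hK.nonneg
  refine ⟨fun a => WithLp.toLp 2 fun t => B t a, ?_⟩
  ext a b
  simp [Matrix.gram_apply, PiLp.inner_apply, Matrix.mul_apply, mul_comm]

section Kernel

variable {S : Type*} {k : S → S → ℝ}

noncomputable def quadForm {P : Type*} [Fintype P] (K : S → S → ℝ) (x : P → S) (β : P → ℝ) :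
    ℝ :=
  ∑ p, ∑ q, β p * β q * K (x p) (x q)

def IsFeatureMapOn {E : Type*} [Inner ℝ E] (k : S → S → ℝ) (f : S → E) (A : Set S) : Prop :=
  ∀ x ∈ A, ∀ y ∈ A, ⟪f x, f y⟫ = k x y

variable {E : Type*} [NormedAddCommGroup E] [InnerProductSpace ℝ E] {f : S → E} {A : Set S}

theorem IsFeatureMapOn.quadForm_eq_norm_sq (hf : IsFeatureMapOn k f A) {P : Type*} [Fintype P]
    {x : P → S} (hx : ∀ p, x p ∈ A) (β : P → ℝ) :
    quadForm k x β = ‖∑ p, β p • f (x p)‖ ^ 2 := by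
  rw [norm_sq_sum_smul]
  exact Finset.sum_congr rfl fun p _ => Finset.sum_congr rfl fun q _ => by
    rw [hf _ (hx p) _ (hx q)]

theorem IsFeatureMapOn.gram_comp (hf : IsFeatureMapOn k f A) {r : ℕ} {v : Fin r → S}
    (hv : ∀ a, v a ∈ A) : Matrix.gram ℝ (f ∘ v) = gramMatrix k v :=
  Matrix.ext fun a b => hf _ (hv a) _ (hv b)

namespace IsStrictPosDefKernel

theorem posDef_gramMatrix_s9 (hk : IsStrictPosDefKernel k) {r : ℕ} {v : Fin r → S}
    (hv : Function.Injective v) : (gramMatrix k v).PosDef := by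
  refine Matrix.PosDef.of_dotProduct_mulVec_pos (Matrix.ext fun a b => hk.1 (v b) (v a))
    fun β hβ => ?_
  refine (hk.2 r v β hv hβ).trans_eq ?_
  simp only [dotProduct, Matrix.mulVec, star_trivial, gramMatrix, Matrix.of_apply, Finset.mul_sum]
  exact Finset.sum_congr rfl fun a _ => Finset.sum_congr rfl fun b _ => by ring

theorem exists_featureMapOn (hk : IsStrictPosDefKernel k) (A : Finset S) :
    ∃ f : S → EuclideanSpace ℝ (Fin A.card), IsFeatureMapOn k f A := by
  classical
  obtain ⟨g, hg⟩ := (hk.posDef_gramMatrix_s9 (v := fun a => (A.equivFin.symm a : S))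
    (Subtype.val_injective.comp A.equivFin.symm.injective)).posSemidef.exists_gram_eq
  refine ⟨fun y => if hy : y ∈ A then g (A.equivFin ⟨y, hy⟩) else 0, fun y hy y' hy' => ?_⟩
  rw [Finset.mem_coe] at hy hy'
  simpa [hy, hy', gramMatrix] using
    congrFun (congrFun hg (A.equivFin ⟨y, hy⟩)) (A.equivFin ⟨y', hy'⟩)

theorem linearIndependent_comp (hk : IsStrictPosDefKernel k) (hf : IsFeatureMapOn k f A)
    {r : ℕ} {v : Fin r → S} (hvA : ∀ a, v a ∈ A) (hv : Function.Injective v) :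
    LinearIndependent ℝ (f ∘ v) :=
  Matrix.linearIndependent_of_posDef_gram (hf.gram_comp hvA ▸ hk.posDef_gramMatrix_s9 hv)

end IsStrictPosDefKernel

end Kernel

section Hierarchy

variable {S ι : Type*}

structure IsHierarchicalPartition (Ch : ι → Finset ι) (dom : ι → Set S) : Prop where
  wellFounded : WellFounded fun j i => j ∈ Ch i
  exists_mem_child : ∀ i, Ch i ≠ ∅ → ∀ x ∈ dom i, ∃ j ∈ Ch i, x ∈ dom j
  disjoint : ∀ i, ∀ j ∈ Ch i, ∀ l ∈ Ch i, j ≠ l → Disjoint (dom j) (dom l)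

namespace IsHierarchicalPartition

variable {Ch : ι → Finset ι} {dom : ι → Set S} {P : Type*}

theorem eq_of_mem_of_mem (hT : IsHierarchicalPartition Ch dom) {i j l : ι} (hj : j ∈ Ch i)
    (hl : l ∈ Ch i) {y : S} (hyj : y ∈ dom j) (hyl : y ∈ dom l) : j = l :=
  by_contra fun hjl => Set.disjoint_left.mp (hT.disjoint i j hj l hl hjl) hyj hyl

theorem indicator_preimage_eq_zero (hT : IsHierarchicalPartition Ch dom) {i j l : ι}
    (hj : j ∈ Ch i) (hl : l ∈ Ch i) (hlj : l ≠ j) {x : P → S} {p : P} (hp : x p ∈ dom j)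
    {M : Type*} [Zero M] (β : P → M) : (x ⁻¹' dom l).indicator β p = 0 :=
  Set.indicator_of_notMem (s := x ⁻¹' dom l)
    (fun hpl => hlj (hT.eq_of_mem_of_mem hl hj hpl hp)) β

theorem sum_smul_eq_sum_children [Fintype P] (hT : IsHierarchicalPartition Ch dom) {i : ι}
    (hi : Ch i ≠ ∅) {x : P → S} {β : P → ℝ} (hβ : ∀ p, β p ≠ 0 → x p ∈ dom i) {M : Type*}
    [AddCommMonoid M] [Module ℝ M] (v : P → M) :
    ∑ p, β p • v p = ∑ j ∈ Ch i, ∑ p, (x ⁻¹' dom j).indicator β p • v p := by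
  rw [Finset.sum_comm (s := Ch i)]
  refine Finset.sum_congr rfl fun p _ => ?_
  rw [← Finset.sum_smul]
  by_cases hp : β p = 0
  · simp [hp, Set.indicator_apply_eq_zero.mpr fun _ => hp]
  obtain ⟨j, hj, hpj⟩ := hT.exists_mem_child i hi _ (hβ p hp)
  rw [Finset.sum_eq_single_of_mem j hj fun l hl hlj =>
      hT.indicator_preimage_eq_zero hj hl hlj hpj β,
    Set.indicator_of_mem (s := x ⁻¹' dom j) hpj]

theorem sum_sum_eq_sum_children [Fintype P] (hT : IsHierarchicalPartition Ch dom) {i : ι}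
    (hi : Ch i ≠ ∅) {x : P → S} {β : P → ℝ} (hβ : ∀ p, β p ≠ 0 → x p ∈ dom i) (h : P → P → ℝ)
    (hc : ι → P → P → ℝ)
    (h_child : ∀ j ∈ Ch i, ∀ p q, x p ∈ dom j → x q ∈ dom j → h p q = hc j p q)
    (h_cross : ∀ p q, x p ∈ dom i → x q ∈ dom i →
      (¬ ∃ j ∈ Ch i, x p ∈ dom j ∧ x q ∈ dom j) → h p q = 0) :
    ∑ p, ∑ q, β p * β q * h p q =
      ∑ j ∈ Ch i, ∑ p, ∑ q,
        (x ⁻¹' dom j).indicator β p * (x ⁻¹' dom j).indicator β q * hc j p q := by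
  rw [Finset.sum_comm (s := Ch i)]
  refine Finset.sum_congr rfl fun p _ => ?_
  rw [Finset.sum_comm (s := Ch i)]
  refine Finset.sum_congr rfl fun q _ => ?_
  by_cases hp : β p = 0
  · simp [hp, Set.indicator_apply_eq_zero.mpr fun _ => hp]
  by_cases hq : β q = 0
  · simp [hq, Set.indicator_apply_eq_zero.mpr fun _ => hq]
  obtain ⟨j, hj, hpj⟩ := hT.exists_mem_child i hi _ (hβ p hp)
  rw [Finset.sum_eq_single_of_mem j hj fun l hl hlj => by
    rw [hT.indicator_preimage_eq_zero hj hl hlj hpj β, zero_mul, zero_mul],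
    Set.indicator_of_mem (s := x ⁻¹' dom j) hpj]
  by_cases hqj : x q ∈ dom j
  · rw [Set.indicator_of_mem (s := x ⁻¹' dom j) hqj, h_child j hj p q hpj hqj]
  · rw [Set.indicator_of_notMem (s := x ⁻¹' dom j) hqj, h_cross p q (hβ p hp) (hβ q hq)
      fun ⟨l, hl, hpl, hql⟩ => hqj (hT.eq_of_mem_of_mem hl hj hpl hpj ▸ hql)]
    ring

end IsHierarchicalPartition

structure IsHierarchicalKernel (k : S → S → ℝ) (Ch : ι → Finset ι) (dom : ι → Set S) {r : ℕ}
    (u : ι → Fin r → S) (khi : ι → S → S → ℝ) (ψ : ι → S → Fin r → ℝ) : Prop where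
  leaf : ∀ i, Ch i = ∅ → ∀ x x', khi i x x' = k x x'
  child : ∀ i, ∀ j ∈ Ch i, ∀ x ∈ dom j, ∀ x' ∈ dom j, khi i x x' = khi j x x'
  cross : ∀ i, Ch i ≠ ∅ → ∀ x ∈ dom i, ∀ x' ∈ dom i,
    (¬ ∃ j ∈ Ch i, x ∈ dom j ∧ x' ∈ dom j) →
    khi i x x' = ∑ a, ∑ b, ψ i x a * (gramMatrix k (u i))⁻¹ a b * ψ i x' b
  psi_leaf : ∀ i, ∀ j ∈ Ch i, Ch j = ∅ → ∀ x ∈ dom j, ∀ a, ψ i x a = k x (u i a)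
  psi_rec : ∀ i, ∀ j ∈ Ch i, Ch j ≠ ∅ → ∀ x ∈ dom j, ∀ a,
    ψ i x a = ∑ b, ∑ c, ψ j x b * (gramMatrix k (u j))⁻¹ b c * k (u j c) (u i a)

open Classical in
noncomputable def nodeFeature {E : Type*} [AddCommGroup E] [Module ℝ E] (k : S → S → ℝ)
    (Ch : ι → Finset ι) {r : ℕ} (u : ι → Fin r → S) (ψ : ι → S → Fin r → ℝ) (f : S → E) (i : ι)
    (x : S) : E :=
  if Ch i = ∅ then f x else ∑ a, ∑ b, (ψ i x a * (gramMatrix k (u i))⁻¹ a b) • f (u i b)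

namespace IsHierarchicalKernel

variable {k : S → S → ℝ} {Ch : ι → Finset ι} {dom : ι → Set S} {r : ℕ} {u : ι → Fin r → S}
  {khi : ι → S → S → ℝ} {ψ : ι → S → Fin r → ℝ}

theorem symm (hK : IsHierarchicalKernel k Ch dom u khi ψ) (hT : IsHierarchicalPartition Ch dom)
    (hk : ∀ x x', k x x' = k x' x) (i : ι) :
    ∀ x ∈ dom i, ∀ x' ∈ dom i, khi i x x' = khi i x' x := by
  induction i using hT.wellFounded.induction with
  | _ i ih =>
  intro x hx x' hx'
  by_cases hi : Ch i = ∅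
  · rw [hK.leaf i hi, hK.leaf i hi, hk]
  by_cases hcommon : ∃ j ∈ Ch i, x ∈ dom j ∧ x' ∈ dom j
  · obtain ⟨j, hj, hxj, hx'j⟩ := hcommon
    rw [hK.child i j hj x hxj x' hx'j, hK.child i j hj x' hx'j x hxj, ih j hj x hxj x' hx'j]
  have hcommon' : ¬ ∃ j ∈ Ch i, x' ∈ dom j ∧ x ∈ dom j := fun ⟨j, hj, hx'j, hxj⟩ =>
    hcommon ⟨j, hj, hxj, hx'j⟩
  have hG : (gramMatrix k (u i))⁻¹.IsSymm := Matrix.IsSymm.inv (Matrix.ext fun a b => hk _ _)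
  rw [hK.cross i hi x hx x' hx' hcommon, hK.cross i hi x' hx' x hx hcommon', Finset.sum_comm]
  exact Finset.sum_congr rfl fun a _ => Finset.sum_congr rfl fun b _ => by rw [hG.apply]; ring

variable {E : Type*} [NormedAddCommGroup E] [InnerProductSpace ℝ E] {f : S → E} {A : Set S}

local notation "ω" => nodeFeature k Ch u ψ f

theorem psi_eq_inner_nodeFeature (hK : IsHierarchicalKernel k Ch dom u khi ψ)
    (hf : IsFeatureMapOn k f A) (hA : ∀ i a, u i a ∈ A) {i j : ι} (hj : j ∈ Ch i) {x : S}
    (hx : x ∈ dom j) (hxA : x ∈ A) (a : Fin r) : ψ i x a = ⟪f (u i a), ω j x⟫ := by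
  rw [real_inner_comm, nodeFeature]
  by_cases hjl : Ch j = ∅
  · rw [if_pos hjl, hK.psi_leaf i j hj hjl x hx a, hf x hxA _ (hA i a)]
  · simp only [if_neg hjl, hK.psi_rec i j hj hjl x hx a, sum_inner, real_inner_smul_left,
      hf _ (hA j _) _ (hA i a)]

theorem nodeFeature_eq_starProjection (hK : IsHierarchicalKernel k Ch dom u khi ψ)
    (hf : IsFeatureMapOn k f A) (hA : ∀ i a, u i a ∈ A) {i j : ι}
    (hli : LinearIndependent ℝ (f ∘ u i)) (hi : Ch i ≠ ∅) (hj : j ∈ Ch i) {x : S}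
    (hx : x ∈ dom j) (hxA : x ∈ A) :
    ω i x = (span ℝ (Set.range (f ∘ u i))).starProjection (ω j x) := by
  rw [hli.starProjection_span_range_eq_sum, hf.gram_comp (hA i), nodeFeature, if_neg hi]
  simp only [Function.comp_apply, ← hK.psi_eq_inner_nodeFeature hf hA hj hx hxA]

theorem khi_eq_inner_nodeFeature (hK : IsHierarchicalKernel k Ch dom u khi ψ)
    (hT : IsHierarchicalPartition Ch dom) (hf : IsFeatureMapOn k f A) (hA : ∀ i a, u i a ∈ A)
    {i : ι} (hli : LinearIndependent ℝ (f ∘ u i)) (hi : Ch i ≠ ∅) {x x' : S} (hx : x ∈ dom i)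
    (hx' : x' ∈ dom i) (hxA : x ∈ A) (hx'A : x' ∈ A)
    (hcross : ¬ ∃ j ∈ Ch i, x ∈ dom j ∧ x' ∈ dom j) :
    khi i x x' = ⟪ω i x, ω i x'⟫ := by
  obtain ⟨j, hj, hxj⟩ := hT.exists_mem_child i hi x hx
  obtain ⟨j', hj', hx'j'⟩ := hT.exists_mem_child i hi x' hx'
  rw [hK.cross i hi x hx x' hx' hcross, hK.nodeFeature_eq_starProjection hf hA hli hi hj hxj hxA,
    hK.nodeFeature_eq_starProjection hf hA hli hi hj' hx'j' hx'A,
    hli.inner_starProjection_span_range, hf.gram_comp (hA i)]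
  simp only [Function.comp_apply, ← hK.psi_eq_inner_nodeFeature hf hA hj hxj hxA,
    ← hK.psi_eq_inner_nodeFeature hf hA hj' hx'j' hx'A]

theorem quadForm_eq_norm_sq_add_sum (hK : IsHierarchicalKernel k Ch dom u khi ψ)
    (hT : IsHierarchicalPartition Ch dom) (hf : IsFeatureMapOn k f A) (hA : ∀ i a, u i a ∈ A)
    {i : ι} (hli : LinearIndependent ℝ (f ∘ u i)) (hi : Ch i ≠ ∅) {P : Type*} [Fintype P]
    {x : P → S} (hxA : ∀ p, x p ∈ A) {β : P → ℝ} (hβ : ∀ p, β p ≠ 0 → x p ∈ dom i) :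
    quadForm (khi i) x β = ‖∑ p, β p • ω i (x p)‖ ^ 2 +
      ∑ j ∈ Ch i, (quadForm (khi j) x ((x ⁻¹' dom j).indicator β) -
        ‖∑ p, (x ⁻¹' dom j).indicator β p • ω i (x p)‖ ^ 2) := by
  have hsplit := hT.sum_sum_eq_sum_children hi hβ
    (fun p q => khi i (x p) (x q) - ⟪ω i (x p), ω i (x q)⟫)
    (fun j p q => khi j (x p) (x q) - ⟪ω i (x p), ω i (x q)⟫)
    (fun j hj p q hp hq => by rw [hK.child i j hj _ hp _ hq])
    (fun p q hp hq hpq => sub_eq_zero.mpr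
      (hK.khi_eq_inner_nodeFeature hT hf hA hli hi hp hq (hxA p) (hxA q) hpq))
  simp only [quadForm, norm_sq_sum_smul, mul_sub, Finset.sum_sub_distrib] at hsplit ⊢
  linarith

theorem normSqBound_quadForm (hK : IsHierarchicalKernel k Ch dom u khi ψ)
    (hT : IsHierarchicalPartition Ch dom) (hf : IsFeatureMapOn k f A) (hA : ∀ i a, u i a ∈ A)
    (hli : ∀ i, Ch i ≠ ∅ → LinearIndependent ℝ (f ∘ u i)) {P : Type*} [Fintype P] {x : P → S}
    (hxA : ∀ p, x p ∈ A) (i : ι) :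
    ∀ β : P → ℝ, (∀ p, β p ≠ 0 → x p ∈ dom i) →
      NormSqBound (quadForm (khi i) x β) (∑ p, β p • ω i (x p)) (∑ p, β p • f (x p)) := by
  induction i using hT.wellFounded.induction with
  | _ i ih =>
  intro β hβ
  by_cases hi : Ch i = ∅
  · have hω : ∀ p, ω i (x p) = f (x p) := fun p => if_pos hi
    have hQ : quadForm (khi i) x β = quadForm k x β := by simp only [quadForm, hK.leaf i hi]
    rw [hQ, hf.quadForm_eq_norm_sq hxA]
    simp only [hω]
    exact ⟨le_rfl, fun _ => rfl⟩
  set K := span ℝ (Set.range (f ∘ u i))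
  have hproj : ∀ j ∈ Ch i, ∑ p, (x ⁻¹' dom j).indicator β p • ω i (x p) =
      K.starProjection (∑ p, (x ⁻¹' dom j).indicator β p • ω j (x p)) := by
    intro j hj
    rw [map_sum]
    refine Finset.sum_congr rfl fun p _ => ?_
    rw [map_smul]
    by_cases hp : x p ∈ dom j
    · rw [hK.nodeFeature_eq_starProjection hf hA (hli i hi) hi hj hp (hxA p)]
    · simp [Set.indicator_of_notMem (s := x ⁻¹' dom j) hp]
  have hbound := NormSqBound.sum fun j hj =>
    (ih j hj ((x ⁻¹' dom j).indicator β) fun p hp =>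
      Set.mem_of_indicator_ne_zero (s := x ⁻¹' dom j) hp).starProjection K
  rw [hK.quadForm_eq_norm_sq_add_sum hT hf hA (hli i hi) hi hxA hβ,
    hT.sum_smul_eq_sum_children hi hβ, hT.sum_smul_eq_sum_children hi hβ (fun p => f (x p)),
    Finset.sum_congr rfl hproj]
  convert hbound using 3 with j hj
  rw [hproj j hj]

end IsHierarchicalKernel

end Hierarchy

theorem hierarchical_strictPosDef_general {S ι : Type*} [Fintype ι] (k : S → S → ℝ)
    (hk : IsStrictPosDefKernel k)
    (root : ι) (Ch : ι → Finset ι) (dom : ι → Set S) (depth : ι → ℕ)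
    (hroot : dom root = Set.univ)
    (hcov : ∀ i, Ch i ≠ ∅ → ∀ x ∈ dom i, ∃ j ∈ Ch i, x ∈ dom j)
    (hdisj : ∀ i, ∀ j ∈ Ch i, ∀ l ∈ Ch i, j ≠ l → Disjoint (dom j) (dom l))
    (hdepth : ∀ i, ∀ j ∈ Ch i, depth j < depth i)
    {r : ℕ} (u : ι → Fin r → S)
    (hu_inj : ∀ i, Ch i ≠ ∅ → Function.Injective (u i))
    (khi : ι → S → S → ℝ) (ψ : ι → S → Fin r → ℝ)
    (hkhi_leaf : ∀ i, Ch i = ∅ → ∀ x x', khi i x x' = k x x')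
    (hkhi_child : ∀ i, ∀ j ∈ Ch i, ∀ x ∈ dom j, ∀ x' ∈ dom j, khi i x x' = khi j x x')
    (hkhi_cross : ∀ i, Ch i ≠ ∅ → ∀ x ∈ dom i, ∀ x' ∈ dom i,
      (¬ ∃ j ∈ Ch i, x ∈ dom j ∧ x' ∈ dom j) →
      khi i x x' = ∑ a, ∑ b, ψ i x a * (gramMatrix k (u i))⁻¹ a b * ψ i x' b)
    (hψ_leaf : ∀ i, ∀ j ∈ Ch i, Ch j = ∅ → ∀ x ∈ dom j, ∀ a, ψ i x a = k x (u i a))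
    (hψ_rec : ∀ i, ∀ j ∈ Ch i, Ch j ≠ ∅ → ∀ x ∈ dom j, ∀ a,
      ψ i x a = ∑ b, ∑ c, ψ j x b * (gramMatrix k (u j))⁻¹ b c * k (u j c) (u i a)) :
    IsStrictPosDefKernel (khi root) := by
  classical
  have hT : IsHierarchicalPartition Ch dom :=
    ⟨Subrelation.wf (hdepth _ _ ·) (InvImage.wf depth wellFounded_lt), hcov, hdisj⟩
  have hK : IsHierarchicalKernel k Ch dom u khi ψ :=
    ⟨hkhi_leaf, hkhi_child, hkhi_cross, hψ_leaf, hψ_rec⟩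
  have hmem : ∀ x, x ∈ dom root := fun x => hroot ▸ Set.mem_univ x
  refine ⟨fun x x' => hK.symm hT hk.1 root x (hmem x) x' (hmem x'), fun n x α hx hα => ?_⟩
  set A : Finset S := Finset.univ.image x ∪ Finset.univ.image fun q : ι × Fin r => u q.1 q.2
  obtain ⟨f, hf⟩ := hk.exists_featureMapOn A
  have hxA : ∀ p, x p ∈ (A : Set S) := fun p => by simp [A]
  have hA : ∀ i a, u i a ∈ (A : Set S) := fun i a => by simp [A]
  have hli : ∀ i, Ch i ≠ ∅ → LinearIndependent ℝ (f ∘ u i) := fun i hi =>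
    hk.linearIndependent_comp hf (hA i) (hu_inj i hi)
  refine (hK.normSqBound_quadForm hT hf hA hli hxA root α fun p _ => hmem (x p)).pos ?_
  rw [← hf.quadForm_eq_norm_sq hxA]
  exact hk.2 n x α hx hα

/-- the hierarchical covariance function `k_h = k_h^{(root)}`, built from a
strictly positive definite base kernel `k` via a finite rooted partitioning tree with
landmark sets `u i` of `r` distinct points in `Sᵢ` (so that the Gram matrices
`k(X̲ᵢ,X̲ᵢ)` are invertible), through the recursion
`k_h^{(i)} = k` on leaves, `k_h^{(i)} = k_h^{(j)}` on a common child subdomain `S_j`, and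
`k_h^{(i)}(x,x') = ψ^{(i)}(x,X̲ᵢ) k(X̲ᵢ,X̲ᵢ)⁻¹ ψ^{(i)}(X̲ᵢ,x')` otherwise, where
`ψ^{(i)}(x,X̲ᵢ) = k(x,X̲ᵢ)` for `x` in a leaf child and
`ψ^{(i)}(x,X̲ᵢ) = ψ^{(j)}(x,X̲ⱼ) k(X̲ⱼ,X̲ⱼ)⁻¹ k(X̲ⱼ,X̲ᵢ)` for `x` in a nonleaf child `j`,
is strictly positive definite on `S`. -/
theorem hierarchical_strictPosDef {S ι : Type*} [Fintype ι] (k : S → S → ℝ)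
    (hk : IsStrictPosDefKernel k)
    (root : ι) (Ch : ι → Finset ι) (dom : ι → Set S) (depth : ι → ℕ)
    (hroot : dom root = Set.univ)
    (hsub : ∀ i, ∀ j ∈ Ch i, dom j ⊆ dom i)
    (hcov : ∀ i, Ch i ≠ ∅ → ∀ x ∈ dom i, ∃ j ∈ Ch i, x ∈ dom j)
    (hdisj : ∀ i, ∀ j ∈ Ch i, ∀ l ∈ Ch i, j ≠ l → Disjoint (dom j) (dom l))
    (hparent_unique : ∀ i i' j, j ∈ Ch i → j ∈ Ch i' → i = i')
    (hroot_not_child : ∀ i, root ∉ Ch i)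
    (hdepth : ∀ i, ∀ j ∈ Ch i, depth j < depth i)
    {r : ℕ} (u : ι → Fin r → S)
    (hu_mem : ∀ i, Ch i ≠ ∅ → ∀ a, u i a ∈ dom i)
    (hu_inj : ∀ i, Ch i ≠ ∅ → Function.Injective (u i))
    (khi : ι → S → S → ℝ) (ψ : ι → S → Fin r → ℝ)
    (hkhi_leaf : ∀ i, Ch i = ∅ → ∀ x x', khi i x x' = k x x')
    (hkhi_child : ∀ i, ∀ j ∈ Ch i, ∀ x ∈ dom j, ∀ x' ∈ dom j, khi i x x' = khi j x x')
    (hkhi_cross : ∀ i, Ch i ≠ ∅ → ∀ x ∈ dom i, ∀ x' ∈ dom i,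
      (¬ ∃ j ∈ Ch i, x ∈ dom j ∧ x' ∈ dom j) →
      khi i x x' = ∑ a, ∑ b, ψ i x a * (gramMatrix k (u i))⁻¹ a b * ψ i x' b)
    (hψ_leaf : ∀ i, ∀ j ∈ Ch i, Ch j = ∅ → ∀ x ∈ dom j, ∀ a, ψ i x a = k x (u i a))
    (hψ_rec : ∀ i, ∀ j ∈ Ch i, Ch j ≠ ∅ → ∀ x ∈ dom j, ∀ a,
      ψ i x a = ∑ b, ∑ c, ψ j x b * (gramMatrix k (u j))⁻¹ b c * k (u j c) (u i a)) :
    IsStrictPosDefKernel (khi root) :=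
  hierarchical_strictPosDef_general k hk root Ch dom depth hroot hcov hdisj hdepth u hu_inj khi ψ
    hkhi_leaf hkhi_child hkhi_cross hψ_leaf hψ_rec
end

section
/- Let k: S × S → ℝ be a function and let X̲_{l_1}, X̲_{l_2}, ..., X̲_{l_s}, X̲_i be finite lists of distinct points in S such that each Gram matrix k(X̲_{l_j},X̲_{l_j}) is invertible. If a point x belongs to X̲_{l_1} ∩ X̲_{l_2} ∩ ... ∩ X̲_{l_s}, then the chained Nyström product collapses: k(x,X̲_{l_1}) k(X̲_{l_1},X̲_{l_1})^{-1} k(X̲_{l_1},X̲_{l_2}) k(X̲_{l_2},X̲_{l_2})^{-1} ⋯ k(X̲_{l_s},X̲_{l_s})^{-1} k(X̲_{l_s},X̲_i) = k(x,X̲_i). -/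
/-- Row vector `v ↦ v k(X̲,X̲)⁻¹ k(X̲, W)`: multiply a row vector `v` (indexed by the
landmark list `u`) by the inverse Gram matrix of `u` and then by the cross matrix
`k(u, w)`. -/
noncomputable def nystromRow {S : Type*} (k : S → S → ℝ) {r : ℕ}
    (v : Fin r → ℝ) (u : Fin r → S) {m : ℕ} (w : Fin m → S) : Fin m → ℝ :=
  fun b => ∑ a, ∑ c, v a * (gramMatrix k u)⁻¹ a c * k (u c) (w b)

/-- The chained Nyström row vector
`k(x,X̲_{l_1}) k(X̲_{l_1},X̲_{l_1})⁻¹ k(X̲_{l_1},X̲_{l_2}) ⋯ k(X̲_{l_t},X̲_{l_t})⁻¹ k(X̲_{l_t},X̲_{l_{t+1}})`,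
where `u t` enumerates the landmark list `X̲_{l_{t+1}}`. -/
noncomputable def chainVec {S : Type*} (k : S → S → ℝ) {r : ℕ}
    (u : ℕ → Fin r → S) (x : S) : ℕ → Fin r → ℝ
  | 0 => fun a => k x (u 0 a)
  | t + 1 => nystromRow k (chainVec k u x t) (u t) (u (t + 1))

lemma nystromRow_collapse {S : Type*} (k : S → S → ℝ) {r : ℕ} (u : Fin r → S)
    (hG : IsUnit (gramMatrix k u).det) (x : S) (a₀ : Fin r) (hx : u a₀ = x)
    {m : ℕ} (w : Fin m → S) :
    nystromRow k (fun a => k x (u a)) u w = fun b => k x (w b) := by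
  funext b
  have h : ∀ a, k x (u a) = gramMatrix k u a₀ a := by
    intro a; rw [← hx]; rfl
  have hmul : gramMatrix k u * (gramMatrix k u)⁻¹ = 1 := Matrix.mul_nonsing_inv _ hG
  calc nystromRow k (fun a => k x (u a)) u w b
      = ∑ c, (∑ a, gramMatrix k u a₀ a * (gramMatrix k u)⁻¹ a c) * k (u c) (w b) := by
        rw [nystromRow, Finset.sum_comm]
        simp [Finset.sum_mul, h]
    _ = ∑ c, (1 : Matrix (Fin r) (Fin r) ℝ) a₀ c * k (u c) (w b) := by
        simp_rw [← Matrix.mul_apply, hmul]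
    _ = k x (w b) := by simp [Matrix.one_apply, ← hx]

lemma chainVec_eq {S : Type*} (k : S → S → ℝ) {r : ℕ} (u : ℕ → Fin r → S) {s : ℕ}
    (hGram : ∀ t < s, IsUnit (gramMatrix k (u t)).det)
    (x : S) (hx : ∀ t < s, ∃ a, u t a = x) :
    ∀ t, t < s → chainVec k u x t = fun a => k x (u t a) := by
  intro t
  induction t with
  | zero => intro _; rfl
  | succ t ih =>
    intro hts
    have ht : t < s := Nat.lt_of_succ_lt hts
    obtain ⟨a₀, ha₀⟩ := hx t ht
    rw [chainVec, ih ht, nystromRow_collapse k (u t) (hGram t ht) x a₀ ha₀]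

/-- if the lists of distinct points `X̲_{l_1}, …, X̲_{l_s}` (given by
`u 0, …, u (s-1)`) have invertible Gram matrices and the point `x` belongs to every
`X̲_{l_t}`, then the chained Nyström product against a final list `X̲ᵢ` (given by `w`)
collapses:
`k(x,X̲_{l_1}) k(X̲_{l_1},X̲_{l_1})⁻¹ k(X̲_{l_1},X̲_{l_2}) ⋯ k(X̲_{l_s},X̲_{l_s})⁻¹ k(X̲_{l_s},X̲ᵢ) = k(x,X̲ᵢ)`. -/
theorem chained_nystrom_collapse {S : Type*} (k : S → S → ℝ)
    {r : ℕ} (u : ℕ → Fin r → S) {s : ℕ} (hs : 1 ≤ s)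
    (hu_inj : ∀ t < s, Function.Injective (u t))
    (hGram : ∀ t < s, IsUnit (gramMatrix k (u t)).det)
    (x : S) (hx : ∀ t < s, ∃ a, u t a = x)
    {m : ℕ} (w : Fin m → S) :
    nystromRow k (chainVec k u x (s - 1)) (u (s - 1)) w = fun b => k x (w b) := by
  have hlt : s - 1 < s := Nat.sub_lt hs one_pos
  obtain ⟨a₀, ha₀⟩ := hx (s - 1) hlt
  rw [chainVec_eq k u hGram x hx (s - 1) hlt,
    nystromRow_collapse k (u (s - 1)) (hGram _ hlt) x a₀ ha₀]
end

section
/- In the setting of the hierarchical covariance construction (tree T with disjoint children partitions, landmark sets X̲_i with k(X̲_i,X̲_i) invertible, and k_h defined by the recursion through k_h^{(i)} and ψ^{(i)}), define for each node i with parent p the function ξ^{(i)}: S × S → ℝ by: ξ^{(i)}(x,x') = 0 if x ∉ S_i or x' ∉ S_i; otherwise ξ^{(i)}(x,x') = k(x,x') − k(x,X̲_p) k(X̲_p,X̲_p)^{-1} k(X̲_p,x') if i is a leaf; ξ^{(i)}(x,x') = ψ^{(i)}(x,X̲_i) k(X̲_i,X̲_i)^{-1} ( k(X̲_i,X̲_i)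 − k(X̲_i,X̲_p) k(X̲_p,X̲_p)^{-1} k(X̲_p,X̲_i) ) k(X̲_i,X̲_i)^{-1} ψ^{(i)}(X̲_i,x') if i is neither a leaf nor the root; and ξ^{(1)}(x,x') = ψ^{(1)}(x,X̲_1) k(X̲_1,X̲_1)^{-1} ψ^{(1)}(X̲_1,x') for the root. Then k_h(x,x') = ∑_i ξ^{(i)}(x,x'), where the sum runs over all nodes i of the tree. -/
open Matrix in
lemma quadSum_eq_dot {r : ℕ} (f g : Fin r → ℝ) (M : Matrix (Fin r) (Fin r) ℝ) :
    ∑ a, ∑ b, f a * M a b * g b = f ⬝ᵥ (M *ᵥ g) := by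
  simp [dotProduct, Matrix.mulVec, Finset.mul_sum, mul_assoc]

open Matrix in
lemma schur_dot_identity {r : ℕ} (G H K : Matrix (Fin r) (Fin r) ℝ)
    (hG : IsUnit G.det) (hGs : Gᵀ = G)
    (φ φ' : Fin r → ℝ) :
    φ ⬝ᵥ ((G⁻¹ * (G - K * H⁻¹ * Kᵀ) * G⁻¹) *ᵥ φ') =
      φ ⬝ᵥ (G⁻¹ *ᵥ φ') -
      (φ ᵥ* G⁻¹ ᵥ* K) ⬝ᵥ (H⁻¹ *ᵥ (φ' ᵥ* G⁻¹ ᵥ* K)) := by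
  have h1 : G⁻¹ * (G - K * H⁻¹ * Kᵀ) * G⁻¹ = G⁻¹ - G⁻¹ * (K * H⁻¹ * Kᵀ) * G⁻¹ := by
    rw [Matrix.mul_sub, Matrix.sub_mul, Matrix.nonsing_inv_mul _ hG, one_mul]
  have hGinv : (G⁻¹)ᵀ = G⁻¹ := by rw [Matrix.transpose_nonsing_inv, hGs]
  rw [h1, Matrix.sub_mulVec, dotProduct_sub]
  congr 1
  rw [Matrix.dotProduct_mulVec, Matrix.dotProduct_mulVec]
  have h2 : φ' ᵥ* G⁻¹ ᵥ* K = Kᵀ *ᵥ (G⁻¹ *ᵥ φ') := by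
    rw [← Matrix.mulVec_transpose, ← Matrix.mulVec_transpose, hGinv]
  rw [h2, ← Matrix.dotProduct_mulVec]
  simp only [Matrix.vecMul_vecMul, Matrix.dotProduct_mulVec, ← Matrix.mulVec_mulVec]

open Matrix

/-- in the hierarchical covariance construction, the function `k_h` equals
the telescoping sum `∑ᵢ ξ^{(i)}` over all tree nodes `i`, where `ξ^{(i)}` vanishes off
`Sᵢ × Sᵢ`, equals the Schur complement `k − k(·,X̲_p) k(X̲_p,X̲_p)⁻¹ k(X̲_p,·)` on leaves,
equals
`ψ^{(i)}(·,X̲ᵢ) k(X̲ᵢ,X̲ᵢ)⁻¹ (k(X̲ᵢ,X̲ᵢ) − k(X̲ᵢ,X̲_p) k(X̲_p,X̲_p)⁻¹ k(X̲_p,X̲ᵢ)) k(X̲ᵢ,X̲ᵢ)⁻¹ ψ^{(i)}(X̲ᵢ,·)`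
on interior nodes, and equals the Nyström-like
`ψ^{(1)}(·,X̲₁) k(X̲₁,X̲₁)⁻¹ ψ^{(1)}(X̲₁,·)` at the root. -/
theorem hierarchical_telescoping {S ι : Type*} [Fintype ι] (k : S → S → ℝ)
    (hsymm : ∀ x x', k x x' = k x' x)
    (root : ι) (Ch : ι → Finset ι) (dom : ι → Set S) (depth : ι → ℕ) (par : ι → ι)
    (hroot : dom root = Set.univ)
    (hroot_nonleaf : Ch root ≠ ∅)
    (hsub : ∀ i, ∀ j ∈ Ch i, dom j ⊆ dom i)
    (hcov : ∀ i, Ch i ≠ ∅ → ∀ x ∈ dom i, ∃ j ∈ Ch i, x ∈ dom j)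
    (hdisj : ∀ i, ∀ j ∈ Ch i, ∀ l ∈ Ch i, j ≠ l → Disjoint (dom j) (dom l))
    (hpar : ∀ i, i ≠ root → i ∈ Ch (par i))
    (hparent_unique : ∀ i i' j, j ∈ Ch i → j ∈ Ch i' → i = i')
    (hroot_not_child : ∀ i, root ∉ Ch i)
    (hdepth : ∀ i, ∀ j ∈ Ch i, depth j < depth i)
    {r : ℕ} (u : ι → Fin r → S)
    (hu_mem : ∀ i, Ch i ≠ ∅ → ∀ a, u i a ∈ dom i)
    (hu_inj : ∀ i, Ch i ≠ ∅ → Function.Injective (u i))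
    (hGram : ∀ i, Ch i ≠ ∅ → IsUnit (gramMatrix k (u i)).det)
    (khi : ι → S → S → ℝ) (ψ : ι → S → Fin r → ℝ)
    (hkhi_leaf : ∀ i, Ch i = ∅ → ∀ x x', khi i x x' = k x x')
    (hkhi_child : ∀ i, ∀ j ∈ Ch i, ∀ x ∈ dom j, ∀ x' ∈ dom j, khi i x x' = khi j x x')
    (hkhi_cross : ∀ i, Ch i ≠ ∅ → ∀ x ∈ dom i, ∀ x' ∈ dom i,
      (¬ ∃ j ∈ Ch i, x ∈ dom j ∧ x' ∈ dom j) →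
      khi i x x' = ∑ a, ∑ b, ψ i x a * (gramMatrix k (u i))⁻¹ a b * ψ i x' b)
    (hψ_leaf : ∀ i, ∀ j ∈ Ch i, Ch j = ∅ → ∀ x ∈ dom j, ∀ a, ψ i x a = k x (u i a))
    (hψ_rec : ∀ i, ∀ j ∈ Ch i, Ch j ≠ ∅ → ∀ x ∈ dom j, ∀ a,
      ψ i x a = ∑ b, ∑ c, ψ j x b * (gramMatrix k (u j))⁻¹ b c * k (u j c) (u i a))
    (ξ : ι → S → S → ℝ)
    (hξ_out : ∀ i x x', (x ∉ dom i ∨ x' ∉ dom i) → ξ i x x' = 0)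
    (hξ_leaf : ∀ i, i ≠ root → Ch i = ∅ → ∀ x ∈ dom i, ∀ x' ∈ dom i,
      ξ i x x' = k x x' - nystrom k (u (par i)) x x')
    (hξ_mid : ∀ i, i ≠ root → Ch i ≠ ∅ → ∀ x ∈ dom i, ∀ x' ∈ dom i,
      ξ i x x' = ∑ a, ∑ b, ψ i x a *
        (((gramMatrix k (u i))⁻¹ *
          (gramMatrix k (u i) -
            Matrix.of (fun a' b' => nystrom k (u (par i)) (u i a') (u i b'))) *
          (gramMatrix k (u i))⁻¹) a b) * ψ i x' b)
    (hξ_root : ∀ x x', ξ root x x' =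
      ∑ a, ∑ b, ψ root x a * (gramMatrix k (u root))⁻¹ a b * ψ root x' b) :
    ∀ x x', khi root x x' = ∑ i, ξ i x x' := by
  classical
  set R : ι → ι → Prop := fun a b => a ≠ root ∧ b = par a with hRdef
  set D : ι → Finset ι :=
    fun i => Finset.univ.filter (fun m => m ≠ i ∧ Relation.ReflTransGen R m i) with hDdef
  have hmemD : ∀ i m, m ∈ D i ↔ m ≠ i ∧ Relation.ReflTransGen R m i := by
    intro i m; simp [hDdef]
  have hne_root : ∀ i j, j ∈ Ch i → j ≠ root := by
    intro i j hj h; exact hroot_not_child i (h ▸ hj)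
  have hpar_eq : ∀ i j, j ∈ Ch i → par j = i := by
    intro i j hj
    exact hparent_unique (par j) i j (hpar j (hne_root i j hj)) hj
  have hRstep : ∀ i j, j ∈ Ch i → R j i := by
    intro i j hj; exact ⟨hne_root i j hj, (hpar_eq i j hj).symm⟩
  have hmemCh : ∀ a b, R a b → a ∈ Ch b := by
    intro a b hab
    rcases hab with ⟨har, hb⟩
    rw [hb]; exact hpar a har
  have hdom_mono : ∀ m i, Relation.ReflTransGen R m i → dom m ⊆ dom i := by
    intro m i h
    induction h with
    | refl => exact subset_rfl
    | tail h1 h2 ih => exact ih.trans (hsub _ _ (hmemCh _ _ h2))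
  have hdepth_mono : ∀ m i, Relation.ReflTransGen R m i → depth m ≤ depth i := by
    intro m i h
    induction h with
    | refl => exact le_rfl
    | tail h1 h2 ih => exact ih.trans (le_of_lt (hdepth _ _ (hmemCh _ _ h2)))
  have hjnotD : ∀ j, j ∉ D j := by
    intro j hj; exact ((hmemD j j).mp hj).1 rfl
  have hDsub : ∀ i j, j ∈ Ch i → insert j (D j) ⊆ D i := by
    intro i j hj m hm
    have hmj : Relation.ReflTransGen R m j := by
      rcases Finset.mem_insert.mp hm with h | h
      · exact h ▸ Relation.ReflTransGen.refl
      · exact ((hmemD j m).mp h).2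
    have hmi : Relation.ReflTransGen R m i := hmj.tail (hRstep i j hj)
    refine (hmemD i m).mpr ⟨?_, hmi⟩
    intro h
    subst h
    have h1 := hdepth_mono m j hmj
    have h2 := hdepth m j hj
    omega
  have hDleaf : ∀ j, Ch j = ∅ → D j = ∅ := by
    intro j hj
    ext m
    simp only [Finset.notMem_empty, iff_false, hmemD]
    rintro ⟨hmne, hmr⟩
    rcases hmr.cases_tail with h | ⟨c, hmc, hcj⟩
    · exact hmne h.symm
    · have := hmemCh c j hcj
      rw [hj] at this
      exact absurd this (Finset.notMem_empty c)
  have hGsym : ∀ i, (gramMatrix k (u i)).transpose = gramMatrix k (u i) := by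
    intro i; ext a b
    simp [gramMatrix, Matrix.transpose_apply, hsymm]
  -- main induction
  have key : ∀ n : ℕ, ∀ i, depth i < n → Ch i ≠ ∅ → ∀ x ∈ dom i, ∀ x' ∈ dom i,
      khi i x x' = (∑ a, ∑ b, ψ i x a * (gramMatrix k (u i))⁻¹ a b * ψ i x' b)
        + ∑ m ∈ D i, ξ m x x' := by
    intro n
    induction n with
    | zero => intro i hi; omega
    | succ n ih =>
      intro i hi hne x hx x' hx'
      by_cases hcommon : ∃ j ∈ Ch i, x ∈ dom j ∧ x' ∈ dom j
      · obtain ⟨j, hj, hxj, hx'j⟩ := hcommon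
        have hjr : j ≠ root := hne_root i j hj
        have hpj : par j = i := hpar_eq i j hj
        have hsum : ∑ m ∈ D i, ξ m x x' = ξ j x x' + ∑ m ∈ D j, ξ m x x' := by
          have h1 : ∑ m ∈ insert j (D j), ξ m x x' = ∑ m ∈ D i, ξ m x x' := by
            refine Finset.sum_subset (hDsub i j hj) ?_
            intro m hm hnm
            obtain ⟨hmne, hmr⟩ := (hmemD i m).mp hm
            rcases hmr.cases_tail with h | ⟨c, hmc, hci⟩
            · exact absurd h.symm hmne
            have hc : c ∈ Ch i := hmemCh c i hci
            by_cases hcj : c = j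
            · subst hcj
              exfalso
              rcases eq_or_ne m c with h | h
              · exact hnm (h ▸ Finset.mem_insert_self c (D c))
              · exact hnm (Finset.mem_insert_of_mem ((hmemD c m).mpr ⟨h, hmc⟩))
            · refine hξ_out m x x' (Or.inl fun hxm => ?_)
              exact Set.disjoint_left.mp (hdisj i c hc j hj hcj) (hdom_mono m c hmc hxm) hxj
          rw [← h1, Finset.sum_insert (hjnotD j)]
        by_cases hjleaf : Ch j = ∅
        · rw [hkhi_child i j hj x hxj x' hx'j, hkhi_leaf j hjleaf]
          rw [hsum, hDleaf j hjleaf, Finset.sum_empty, add_zero]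
          rw [hξ_leaf j hjr hjleaf x hxj x' hx'j, hpj]
          have hQ : (∑ a, ∑ b, ψ i x a * (gramMatrix k (u i))⁻¹ a b * ψ i x' b)
              = nystrom k (u i) x x' := by
            unfold nystrom
            refine Finset.sum_congr rfl fun a _ => Finset.sum_congr rfl fun b _ => ?_
            rw [hψ_leaf i j hj hjleaf x hxj a, hψ_leaf i j hj hjleaf x' hx'j b,
              hsymm x' (u i b)]
          rw [hQ]; ring
        · have hdj : depth j < n := by
            have := hdepth i j hj; omega
          have hIH := ih j hdj hjleaf x hxj x' hx'j
          rw [hkhi_child i j hj x hxj x' hx'j, hIH, hsum]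
          have hmain : (∑ a, ∑ b, ψ j x a * (gramMatrix k (u j))⁻¹ a b * ψ j x' b)
              = (∑ a, ∑ b, ψ i x a * (gramMatrix k (u i))⁻¹ a b * ψ i x' b)
                + ξ j x x' := by
            set G := gramMatrix k (u j) with hG
            set H := gramMatrix k (u i) with hH
            set K : Matrix (Fin r) (Fin r) ℝ := Matrix.of fun a c => k (u j a) (u i c)
              with hK
            have hN : (Matrix.of fun a' b' => nystrom k (u i) (u j a') (u j b'))
                = K * H⁻¹ * K.transpose := by
              ext a b
              simp only [Matrix.of_apply, nystrom, Matrix.mul_apply,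
                Matrix.transpose_apply, hK, hH, Finset.sum_mul]
              rw [Finset.sum_comm]
              refine Finset.sum_congr rfl fun c _ => Finset.sum_congr rfl fun d _ => ?_
              rw [hsymm (u i c) (u j b)]
            have hψx : ∀ y, y ∈ dom j → ψ i y = (ψ j y) ᵥ* G⁻¹ ᵥ* K := by
              intro y hy
              funext a
              rw [hψ_rec i j hj hjleaf y hy a]
              simp only [Matrix.vecMul, dotProduct, hK, Matrix.of_apply,
                Finset.sum_mul]
              rw [Finset.sum_comm]
            rw [hξ_mid j hjr hjleaf x hxj x' hx'j, hpj, hN]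
            rw [quadSum_eq_dot, quadSum_eq_dot, quadSum_eq_dot]
            rw [hψx x hxj, hψx x' hx'j]
            rw [schur_dot_identity G H K (hGram j hjleaf) (hGsym j) (ψ j x) (ψ j x')]
            ring
          rw [hmain]; ring
      · rw [hkhi_cross i hne x hx x' hx' hcommon]
        have hz : ∑ m ∈ D i, ξ m x x' = 0 := by
          refine Finset.sum_eq_zero fun m hm => ?_
          obtain ⟨hmne, hmr⟩ := (hmemD i m).mp hm
          rcases hmr.cases_tail with h | ⟨c, hmc, hci⟩
          · exact absurd h.symm hmne
          have hc : c ∈ Ch i := hmemCh c i hci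
          by_cases hxm : x ∈ dom m
          · by_cases hx'm : x' ∈ dom m
            · exact absurd ⟨c, hc, hdom_mono m c hmc hxm, hdom_mono m c hmc hx'm⟩ hcommon
            · exact hξ_out m x x' (Or.inr hx'm)
          · exact hξ_out m x x' (Or.inl hxm)
        rw [hz, add_zero]
  -- every node descends to the root
  have hNd : ∀ m : ι, depth m ≤ Finset.univ.sup depth :=
    fun m => Finset.le_sup (Finset.mem_univ m)
  have hall : ∀ m : ι, Relation.ReflTransGen R m root := by
    have haux : ∀ n : ℕ, ∀ m, Finset.univ.sup depth ≤ depth m + n →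
        Relation.ReflTransGen R m root := by
      intro n
      induction n with
      | zero =>
        intro m hm
        by_cases h : m = root
        · exact h ▸ Relation.ReflTransGen.refl
        · exfalso
          have h1 := hdepth (par m) m (hpar m h)
          have h2 := hNd (par m)
          omega
      | succ n ihn =>
        intro m hm
        by_cases h : m = root
        · exact h ▸ Relation.ReflTransGen.refl
        · have h1 := hdepth (par m) m (hpar m h)
          exact Relation.ReflTransGen.head ⟨h, rfl⟩ (ihn (par m) (by omega))
    intro m
    exact haux (Finset.univ.sup depth) m (by have := hNd m; omega)
  have hD : D root = Finset.univ.erase root := by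
    ext m
    simp only [hmemD, Finset.mem_erase, Finset.mem_univ, and_true]
    exact ⟨fun h => h.1, fun h => ⟨h, hall m⟩⟩
  intro x x'
  have hx : x ∈ dom root := hroot ▸ Set.mem_univ x
  have hx' : x' ∈ dom root := hroot ▸ Set.mem_univ x'
  have hk := key (depth root + 1) root (Nat.lt_succ_self _) hroot_nonleaf x hx x' hx'
  rw [hk, hD, ← hξ_root x x']
  exact Finset.add_sum_erase Finset.univ (fun m => ξ m x x') (Finset.mem_univ root)
end

section
/- Let A ∈ ℝ^{n×n} be recursively low-rank with partitioning tree T and positive integer r. If A is invertible and, additionally, A_{ii} − U_i Σ_p V_i^T is invertible for every pair of a nonroot node i and its parent p (where A_{ii} = A(I_i,I_i)), then there exists a recursively low-rank matrix Ã with the same partitioning tree T and the same integer r such that Ã = A^{-1}. -/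
/-- `RLRFactors Ch Isub root A U V Sig W Z` says that the matrix `A` is recursively
low-rank with respect to the partitioning tree given by the children map `Ch` (with root
`root`) and the index sets `Isub`, realized by the factors `U, V, Sig, W, Z`:
(1) every off-diagonal sibling block factors as `A(Iᵢ,Iⱼ) = Uᵢ Σₚ Vⱼᵀ`, and
(2) the nested-basis relations `U_p(Iᵢ,:) = Uᵢ W_p` and `V_p(Iᵢ,:) = Vᵢ Z_p` hold for
every child `i` of a nonroot parent `p`. -/
def RLRFactors {n r : ℕ} {ι : Type*} (Ch : ι → Finset ι) (Isub : ι → Finset (Fin n))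
    (root : ι) (A : Matrix (Fin n) (Fin n) ℝ)
    (U V : ι → Fin n → Fin r → ℝ)
    (Sig W Z : ι → Matrix (Fin r) (Fin r) ℝ) : Prop :=
  (∀ p : ι, ∀ i ∈ Ch p, ∀ j ∈ Ch p, i ≠ j →
    ∀ a ∈ Isub i, ∀ b ∈ Isub j,
      A a b = ∑ c, ∑ d, U i a c * Sig p c d * V j b d) ∧
  (∀ p : ι, p ≠ root → ∀ i ∈ Ch p, ∀ a ∈ Isub i, ∀ d,
      U p a d = ∑ c, U i a c * W p c d ∧ V p a d = ∑ c, V i a c * Z p c d)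

/-!
Write `B_q = A(I_q, I_q) - U_q Σ_{par q} V_qᵀ` (with `B_root = A`) and `N_q = B_q⁻¹`, both padded
with zeros to `n × n`. For a node `p` with children `i`, the two defining conditions on `A` say
that `B_p = diag (B_i) + Û S_p V̂ᵀ`, where `Û`, `V̂` stack the children's `U_i`, `V_i` and
`S_p = Σ_p - W_p Σ_{par p} Z_pᵀ`. Woodbury's identity relative to the block `I_p` then gives
`N_p = diag (N_i) + Ũ Σ̃_p Ṽᵀ`, where `Ũ`, `Ṽ` stack `Ũ_i = -N_i U_i` and `Ṽ_i = -N_iᵀ V_i`.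
As `U_p(I_p, :) = Û W_p`, the basis `Ũ_p` is nested: `Ũ_p(I_i, :) = Ũ_i W̃_p`, and likewise
for `Ṽ`. Descending from the root, where `N_root = A⁻¹`, this shows
`A⁻¹(I_p, I_p) = diag (N_i) + Ũ Σ̂_p Ṽᵀ` for some `Σ̂_p`, whose off-diagonal blocks are the
required `Ũ_i Σ̂_p Ṽ_jᵀ`.
-/

open Finset Matrix

/-- `x` and `y` are mutually inverse in the corner ring `p R p`. -/
structure IsCornerInverse {R : Type*} [Ring R] (p x y : R) : Prop where
  mul_eq : x * y = p
  mul_eq_rev : y * x = p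
  proj_mul_fst : p * x = x
  mul_proj_fst : x * p = x
  proj_mul_snd : p * y = y
  mul_proj_snd : y * p = y

namespace IsCornerInverse

variable {R : Type*} [Ring R] {p x y : R}

/-- Woodbury's identity for the perturbation `y - d` of `d`, relative to the corner `p R p`. -/
theorem woodbury {e d : R} (he : IsCornerInverse p e d) (h : IsCornerInverse p x y) :
    x = e - e * (y - d) * e + e * (y - d) * x * (y - d) * e := by
  have hl : e * (y - d) * x = e - x := by
    rw [mul_sub, sub_mul, mul_assoc e y, h.mul_eq_rev, he.mul_proj_fst, he.mul_eq,
      h.proj_mul_fst]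
  have hr : (y - d) * e = y * e - p := by rw [sub_mul, he.mul_eq_rev]
  have hm : e * (y - d) * e = e * y * e - e := by
    rw [mul_assoc, hr, mul_sub, he.mul_proj_fst, mul_assoc]
  rw [hl, hm, mul_assoc (e - x), hr, sub_mul, mul_sub, mul_sub, ← mul_assoc x y, h.mul_eq,
    he.proj_mul_fst, he.mul_proj_fst, h.mul_proj_fst, ← mul_assoc]
  abel

theorem sum {ι : Type*} {s : Finset ι} {p x y : ι → R}
    (h : ∀ i ∈ s, IsCornerInverse (p i) (x i) (y i))
    (horth : ∀ i ∈ s, ∀ j ∈ s, i ≠ j → p i * p j = 0) :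
    IsCornerInverse (∑ i ∈ s, p i) (∑ i ∈ s, x i) (∑ i ∈ s, y i) := by
  have diag : ∀ {f g : ι → R}, (∀ i ∈ s, f i * p i = f i) → (∀ i ∈ s, p i * g i = g i) →
      (∑ i ∈ s, f i) * (∑ j ∈ s, g j) = ∑ i ∈ s, f i * g i := by
    intro f g hf hg
    rw [Finset.sum_mul_sum]
    refine Finset.sum_congr rfl fun i hi => Finset.sum_eq_single i (fun j hj hji => ?_) (absurd hi)
    rw [← hf i hi, ← hg j hj, mul_assoc, ← mul_assoc (p i), horth i hi j hj (Ne.symm hji),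
      zero_mul, mul_zero]
  have hp : ∀ i ∈ s, p i * p i = p i := fun i hi => by
    calc p i * p i = p i * (x i * y i) := by rw [(h i hi).mul_eq]
      _ = p i := by rw [← mul_assoc, (h i hi).proj_mul_fst, (h i hi).mul_eq]
  refine ⟨?_, ?_, ?_, ?_, ?_, ?_⟩
  · rw [diag (fun i hi => (h i hi).mul_proj_fst) (fun i hi => (h i hi).proj_mul_snd)]
    exact Finset.sum_congr rfl fun i hi => (h i hi).mul_eq
  · rw [diag (fun i hi => (h i hi).mul_proj_snd) (fun i hi => (h i hi).proj_mul_fst)]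
    exact Finset.sum_congr rfl fun i hi => (h i hi).mul_eq_rev
  · rw [diag hp (fun i hi => (h i hi).proj_mul_fst)]
    exact Finset.sum_congr rfl fun i hi => (h i hi).proj_mul_fst
  · rw [diag (fun i hi => (h i hi).mul_proj_fst) hp]
    exact Finset.sum_congr rfl fun i hi => (h i hi).mul_proj_fst
  · rw [diag hp (fun i hi => (h i hi).proj_mul_snd)]
    exact Finset.sum_congr rfl fun i hi => (h i hi).proj_mul_snd
  · rw [diag (fun i hi => (h i hi).mul_proj_snd) hp]
    exact Finset.sum_congr rfl fun i hi => (h i hi).mul_proj_snd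

end IsCornerInverse

namespace Matrix

variable {m k R : Type*} [CommRing R]

theorem mul_mul_transpose_apply {l n : Type*} [Fintype l] [Fintype n] (U : Matrix m l R)
    (S : Matrix l n R) (V : Matrix k n R) (a : m) (b : k) :
    (U * S * Vᵀ) a b = ∑ c, ∑ d, U a c * S c d * V b d := by
  simp only [mul_apply, transpose_apply, Finset.sum_mul]
  exact Finset.sum_comm

variable [DecidableEq m]

variable (R) in
def projOn (s : Finset m) : Matrix m m R := diagonal fun a => if a ∈ s then 1 else 0

variable {s t : Finset m}

theorem projOn_transpose : (projOn R s)ᵀ = projOn R s := diagonal_transpose _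

theorem projOn_univ [Fintype m] : projOn R (univ : Finset m) = 1 := by simp [projOn]

theorem sum_projOn {ι : Type*} {I : Finset ι} {f : ι → Finset m}
    (h : (I : Set ι).PairwiseDisjoint f) :
    ∑ i ∈ I, projOn R (f i) = projOn R (I.biUnion f) := by
  ext a b
  rw [Matrix.sum_apply]
  by_cases hab : a = b
  · subst hab
    simp only [projOn, diagonal_apply_eq]
    by_cases ha : a ∈ I.biUnion f
    · obtain ⟨j, hj, haj⟩ := mem_biUnion.1 ha
      rw [if_pos ha, Finset.sum_eq_single j (fun i hi hij => if_neg fun hai =>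
        Finset.disjoint_left.1 (h hi hj hij) hai haj) (absurd hj), if_pos haj]
    · rw [if_neg ha]
      exact Finset.sum_eq_zero fun i hi => if_neg fun hai => ha (mem_biUnion.2 ⟨i, hi, hai⟩)
  · simp [projOn, hab]

variable (R) in
def finsetIncl (s : Finset m) : Matrix m s R := (1 : Matrix m m R).submatrix id (↑)

theorem finsetIncl_mul_transpose : finsetIncl R s * (finsetIncl R s)ᵀ = projOn R s := by
  ext a b
  simp only [finsetIncl, projOn, transpose_submatrix, transpose_one, mul_apply, submatrix_apply,
    id, one_apply, diagonal_apply]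
  rw [Finset.sum_coe_sort s (fun x => (if a = x then (1 : R) else 0) * if x = b then 1 else 0)]
  simp only [ite_mul, one_mul, zero_mul, Finset.sum_ite_eq]
  split_ifs <;> simp_all

variable [Fintype m]

theorem projOn_mul_projOn : projOn R s * projOn R t = projOn R (s ∩ t) := by
  simp only [projOn, diagonal_mul_diagonal, mem_inter, ite_and]
  congr 1; ext a; split_ifs <;> simp

theorem projOn_mul_projOn_of_disjoint (h : Disjoint s t) : projOn R s * projOn R t = 0 := by
  rw [projOn_mul_projOn, disjoint_iff_inter_eq_empty.1 h]; simp [projOn]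

theorem projOn_mul_projOn_of_subset (h : s ⊆ t) : projOn R s * projOn R t = projOn R s := by
  rw [projOn_mul_projOn, inter_eq_left.2 h]

theorem projOn_mul_projOn_of_superset (h : s ⊆ t) : projOn R t * projOn R s = projOn R s := by
  rw [projOn_mul_projOn, inter_eq_right.2 h]

theorem projOn_mul_apply (X : Matrix m k R) (a : m) (b : k) :
    (projOn R s * X) a b = if a ∈ s then X a b else 0 := by
  rw [projOn, diagonal_mul, ite_mul, one_mul, zero_mul]

theorem mul_projOn_apply [Fintype k] (X : Matrix k m R) (a : k) (b : m) :
    (X * projOn R s) a b = if b ∈ s then X a b else 0 := by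
  rw [projOn, mul_diagonal, mul_ite, mul_one, mul_zero]

theorem isCornerInverse_mul_inv_mul [Fintype k] [DecidableEq k] {J : Matrix m k R}
    {K : Matrix k m R} (hKJ : K * J = 1) {Y : Matrix k k R} (hY : IsUnit Y.det) :
    IsCornerInverse (J * K) (J * Y⁻¹ * K) (J * Y * K) := by
  constructor <;> simp only [Matrix.mul_assoc, ← Matrix.mul_assoc K J, hKJ, Matrix.one_mul,
    ← Matrix.mul_assoc Y⁻¹ Y, ← Matrix.mul_assoc Y Y⁻¹, nonsing_inv_mul _ hY, mul_nonsing_inv _ hY]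

theorem finsetIncl_transpose_mul : (finsetIncl R s)ᵀ * finsetIncl R s = 1 := by
  ext a b
  simp only [finsetIncl, transpose_submatrix, transpose_one, mul_apply, submatrix_apply, id,
    one_apply]
  simp

theorem finsetIncl_transpose_mul_mul (X : Matrix m m R) :
    (finsetIncl R s)ᵀ * X * finsetIncl R s = X.submatrix ((↑) : s → m) ((↑) : s → m) := by
  ext a b
  simp only [finsetIncl, transpose_submatrix, transpose_one, mul_apply, submatrix_apply, id,
    one_apply]
  simp

/-- The inverse of the principal submatrix `X(s, s)`, padded with zeros. -/
noncomputable def cornerInv (s : Finset m) (X : Matrix m m R) : Matrix m m R :=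
  finsetIncl R s * (X.submatrix ((↑) : s → m) (↑))⁻¹ * (finsetIncl R s)ᵀ

theorem isCornerInverse_cornerInv {X : Matrix m m R}
    (h : IsUnit (X.submatrix ((↑) : s → m) (↑)).det) :
    IsCornerInverse (projOn R s) (cornerInv s X) (projOn R s * X * projOn R s) := by
  rw [← finsetIncl_transpose_mul_mul] at h
  have hB : finsetIncl R s * ((finsetIncl R s)ᵀ * X * finsetIncl R s) * (finsetIncl R s)ᵀ =
      projOn R s * X * projOn R s := by
    simp only [← finsetIncl_mul_transpose, Matrix.mul_assoc]
  rw [← hB, ← finsetIncl_mul_transpose, cornerInv, ← finsetIncl_transpose_mul_mul]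
  exact isCornerInverse_mul_inv_mul finsetIncl_transpose_mul h

theorem projOn_mul_eq_projOn_mul_iff {X Y : Matrix m k R} :
    projOn R s * X = projOn R s * Y ↔ ∀ a ∈ s, ∀ b, X a b = Y a b := by
  refine ⟨fun h a ha b => ?_, fun h => ?_⟩
  · simpa [projOn_mul_apply, ha] using congrFun (congrFun h a) b
  · ext a b
    simp only [projOn_mul_apply]
    split_ifs with ha
    exacts [h a ha b, rfl]

theorem projOn_mul_mul_projOn_eq_iff [Fintype k] [DecidableEq k] {t : Finset k}
    {X Y : Matrix m k R} :
    projOn R s * X * projOn R t = projOn R s * Y * projOn R t ↔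
      ∀ a ∈ s, ∀ b ∈ t, X a b = Y a b := by
  refine ⟨fun h a ha b hb => ?_, fun h => ?_⟩
  · simpa [projOn_mul_apply, mul_projOn_apply, ha, hb] using congrFun (congrFun h a) b
  · ext a b
    simp only [projOn_mul_apply, mul_projOn_apply]
    split_ifs with hb ha
    exacts [h a ha b hb, rfl, rfl]

end Matrix

theorem rlrFactors_iff {n r : ℕ} {ι : Type*} (Ch : ι → Finset ι) (Isub : ι → Finset (Fin n))
    (root : ι) (A : Matrix (Fin n) (Fin n) ℝ) (U V : ι → Matrix (Fin n) (Fin r) ℝ)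
    (Sig W Z : ι → Matrix (Fin r) (Fin r) ℝ) :
    RLRFactors Ch Isub root A U V Sig W Z ↔
      (∀ p, ∀ i ∈ Ch p, ∀ j ∈ Ch p, i ≠ j → projOn ℝ (Isub i) * A * projOn ℝ (Isub j) =
        projOn ℝ (Isub i) * (U i * Sig p * (V j)ᵀ) * projOn ℝ (Isub j)) ∧
      (∀ p, p ≠ root → ∀ i ∈ Ch p, projOn ℝ (Isub i) * U p = projOn ℝ (Isub i) * (U i * W p) ∧
        projOn ℝ (Isub i) * V p = projOn ℝ (Isub i) * (V i * Z p)) := by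
  simp only [RLRFactors, projOn_mul_mul_projOn_eq_iff, projOn_mul_eq_projOn_mul_iff,
    mul_mul_transpose_apply]
  simp only [mul_apply, forall_and]

structure PartitionTree (n : ℕ) (ι : Type*) where
  root : ι
  children : ι → Finset ι
  indices : ι → Finset (Fin n)
  parent : ι → ι
  depth : ι → ℕ

namespace PartitionTree

variable {n : ℕ} {ι : Type*} (T : PartitionTree n ι)

structure IsValid : Prop where
  indices_root : T.indices T.root = univ
  indices_eq_biUnion : ∀ p, T.children p ≠ ∅ → T.indices p = (T.children p).biUnion T.indices
  disjoint_indices : ∀ p, ∀ i ∈ T.children p, ∀ j ∈ T.children p, i ≠ j →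
    Disjoint (T.indices i) (T.indices j)
  mem_children_parent : ∀ i, i ≠ T.root → i ∈ T.children (T.parent i)
  eq_of_mem_children : ∀ p q i, i ∈ T.children p → i ∈ T.children q → p = q
  root_not_mem_children : ∀ p, T.root ∉ T.children p
  depth_lt : ∀ p, ∀ i ∈ T.children p, T.depth i < T.depth p

def proj (i : ι) : Matrix (Fin n) (Fin n) ℝ := projOn ℝ (T.indices i)

def stack {k : Type*} (X : ι → Matrix (Fin n) k ℝ) (p : ι) : Matrix (Fin n) k ℝ :=
  ∑ i ∈ T.children p, T.proj i * X i

theorem proj_transpose (i : ι) : (T.proj i)ᵀ = T.proj i := projOn_transpose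

theorem proj_mul_mul_transpose_mul_proj {l k : Type*} [Fintype l] [Fintype k] (i j : ι)
    (X : Matrix (Fin n) l ℝ) (S : Matrix l k ℝ) (Y : Matrix (Fin n) k ℝ) :
    T.proj i * (X * S * Yᵀ) * T.proj j = T.proj i * X * S * (T.proj j * Y)ᵀ := by
  rw [transpose_mul, proj_transpose]
  simp only [Matrix.mul_assoc]

variable {T}

theorem stack_eq_sum {k : Type*} {X : ι → Matrix (Fin n) k ℝ} {p : ι}
    (hX : ∀ i ∈ T.children p, T.proj i * X i = X i) : T.stack X p = ∑ i ∈ T.children p, X i :=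
  Finset.sum_congr rfl hX

namespace IsValid

variable (hT : T.IsValid)
include hT

theorem ne_root_of_mem_children {p i : ι} (hi : i ∈ T.children p) : i ≠ T.root :=
  fun h => hT.root_not_mem_children p (h ▸ hi)

theorem parent_eq {p i : ι} (hi : i ∈ T.children p) : T.parent i = p :=
  hT.eq_of_mem_children _ _ _ (hT.mem_children_parent i (hT.ne_root_of_mem_children hi)) hi

theorem proj_root : T.proj T.root = 1 := by
  rw [proj, hT.indices_root, projOn_univ]

theorem indices_subset {p i : ι} (hi : i ∈ T.children p) : T.indices i ⊆ T.indices p := by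
  rw [hT.indices_eq_biUnion p (ne_empty_of_mem hi)]
  exact subset_biUnion_of_mem _ hi

theorem proj_mul_proj_parent {p i : ι} (hi : i ∈ T.children p) : T.proj i * T.proj p = T.proj i :=
  projOn_mul_projOn_of_subset (hT.indices_subset hi)

theorem proj_parent_mul_proj {p i : ι} (hi : i ∈ T.children p) : T.proj p * T.proj i = T.proj i :=
  projOn_mul_projOn_of_superset (hT.indices_subset hi)

theorem proj_mul_proj_of_ne {p i j : ι} (hi : i ∈ T.children p) (hj : j ∈ T.children p)
    (hij : i ≠ j) : T.proj i * T.proj j = 0 :=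
  projOn_mul_projOn_of_disjoint (hT.disjoint_indices p i hi j hj hij)

theorem sum_proj_children {p : ι} (hp : T.children p ≠ ∅) :
    ∑ i ∈ T.children p, T.proj i = T.proj p := by
  rw [proj, hT.indices_eq_biUnion p hp]
  exact sum_projOn fun i hi j hj hij => hT.disjoint_indices p i hi j hj hij

theorem proj_mul_stack {k : Type*} {p i : ι} (hi : i ∈ T.children p) (X : ι → Matrix (Fin n) k ℝ) :
    T.proj i * T.stack X p = T.proj i * X i := by
  rw [stack, Matrix.mul_sum, Finset.sum_eq_single i
    (fun j hj hji => by rw [← Matrix.mul_assoc, hT.proj_mul_proj_of_ne hi hj hji.symm,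
      Matrix.zero_mul]) (absurd hi),
    ← Matrix.mul_assoc, proj, projOn_mul_projOn, inter_self]

theorem sum_mul_stack {k : Type*} {X : ι → Matrix (Fin n) (Fin n) ℝ} {p : ι}
    (hX : ∀ i ∈ T.children p, X i * T.proj i = X i) (Y : ι → Matrix (Fin n) k ℝ) :
    (∑ i ∈ T.children p, X i) * T.stack Y p = ∑ i ∈ T.children p, X i * Y i := by
  rw [Matrix.sum_mul]
  refine Finset.sum_congr rfl fun i hi => ?_
  rw [← hX i hi, Matrix.mul_assoc, hT.proj_mul_stack hi, ← Matrix.mul_assoc, hX i hi]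

theorem proj_mul_mul_proj_eq {p i j : ι} (hi : i ∈ T.children p) (hj : j ∈ T.children p)
    (X : Matrix (Fin n) (Fin n) ℝ) :
    T.proj i * X * T.proj j = T.proj i * (T.proj p * X * T.proj p) * T.proj j := by
  simp only [← Matrix.mul_assoc, hT.proj_mul_proj_parent hi]
  rw [Matrix.mul_assoc _ (T.proj p), hT.proj_parent_mul_proj hj]

theorem induction_from_root [Finite ι] {P : ι → Prop} (root : P T.root)
    (step : ∀ p, p ≠ T.root → P (T.parent p) → P p) (p : ι) : P p := by
  have := Fintype.ofFinite ι
  set N := univ.sup T.depth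
  induction p using (measure fun p => N - T.depth p).wf.induction with
  | h p ih =>
    by_cases hp : p = T.root
    · exact hp ▸ root
    · refine step p hp (ih _ ?_)
      have h1 := hT.depth_lt _ p (hT.mem_children_parent p hp)
      have h2 : T.depth (T.parent p) ≤ N := le_sup (mem_univ _)
      show N - T.depth (T.parent p) < N - T.depth p
      omega

end IsValid

end PartitionTree

structure RLRData (n r : ℕ) (ι : Type*) extends PartitionTree n ι where
  A : Matrix (Fin n) (Fin n) ℝ
  U : ι → Matrix (Fin n) (Fin r) ℝ
  V : ι → Matrix (Fin n) (Fin r) ℝ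
  Sig : ι → Matrix (Fin r) (Fin r) ℝ
  W : ι → Matrix (Fin r) (Fin r) ℝ
  Z : ι → Matrix (Fin r) (Fin r) ℝ

namespace RLRData

variable {n r : ℕ} {ι : Type*} (M : RLRData n r ι)

def IsRLR : Prop := RLRFactors M.children M.indices M.root M.A M.U M.V M.Sig M.W M.Z

namespace IsRLR

variable {M} (hA : M.IsRLR)
include hA

theorem proj_mul_A_mul_proj {p i j : ι} (hi : i ∈ M.children p) (hj : j ∈ M.children p)
    (hij : i ≠ j) :
    M.proj i * M.A * M.proj j = M.proj i * (M.U i * M.Sig p * (M.V j)ᵀ) * M.proj j :=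
  ((rlrFactors_iff ..).1 hA).1 p i hi j hj hij

theorem proj_mul_U {p i : ι} (hp : p ≠ M.root) (hi : i ∈ M.children p) :
    M.proj i * M.U p = M.proj i * (M.U i * M.W p) :=
  (((rlrFactors_iff ..).1 hA).2 p hp i hi).1

theorem proj_mul_V {p i : ι} (hp : p ≠ M.root) (hi : i ∈ M.children p) :
    M.proj i * M.V p = M.proj i * (M.V i * M.Z p) :=
  (((rlrFactors_iff ..).1 hA).2 p hp i hi).2

theorem proj_mul_U_eq_stack_mul (hT : M.IsValid) {p : ι} (hp : M.children p ≠ ∅)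
    (hpr : p ≠ M.root) : M.proj p * M.U p = M.stack M.U p * M.W p := by
  rw [← hT.sum_proj_children hp, Matrix.sum_mul, PartitionTree.stack, Matrix.sum_mul]
  exact Finset.sum_congr rfl fun i hi => by rw [hA.proj_mul_U hpr hi, Matrix.mul_assoc]

theorem proj_mul_V_eq_stack_mul (hT : M.IsValid) {p : ι} (hp : M.children p ≠ ∅)
    (hpr : p ≠ M.root) : M.proj p * M.V p = M.stack M.V p * M.Z p := by
  rw [← hT.sum_proj_children hp, Matrix.sum_mul, PartitionTree.stack, Matrix.sum_mul]
  exact Finset.sum_congr rfl fun i hi => by rw [hA.proj_mul_V hpr hi, Matrix.mul_assoc]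

end IsRLR

variable [DecidableEq ι]

def coupling (q : ι) : Matrix (Fin n) (Fin n) ℝ :=
  if q = M.root then 0 else M.U q * M.Sig (M.parent q) * (M.V q)ᵀ

/-- The block `B_q = A(I_q, I_q) - U_q Σ_p V_qᵀ` (just `A` at the root), padded with zeros. -/
def diagBlock (q : ι) : Matrix (Fin n) (Fin n) ℝ := M.proj q * (M.A - M.coupling q) * M.proj q

noncomputable def blockInv (q : ι) : Matrix (Fin n) (Fin n) ℝ :=
  cornerInv (M.indices q) (M.A - M.coupling q)

def BlocksInvertible : Prop :=
  ∀ q, IsUnit ((M.A - M.coupling q).submatrix ((↑) : M.indices q → Fin n) (↑)).det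

noncomputable def Ut (q : ι) : Matrix (Fin n) (Fin r) ℝ := -(M.blockInv q * M.U q)

noncomputable def Vt (q : ι) : Matrix (Fin n) (Fin r) ℝ := -((M.blockInv q)ᵀ * M.V q)

def core (p : ι) : Matrix (Fin r) (Fin r) ℝ :=
  M.Sig p - if p = M.root then 0 else M.W p * M.Sig (M.parent p) * (M.Z p)ᵀ

/-- Expressed through `blockInv p` itself, so that no capacitance matrix has to be inverted. -/
noncomputable def coreInv (p : ι) : Matrix (Fin r) (Fin r) ℝ :=
  M.core p * (M.stack M.V p)ᵀ * M.blockInv p * M.stack M.U p * M.core p - M.core p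

noncomputable def Wt (p : ι) : Matrix (Fin r) (Fin r) ℝ :=
  (1 - M.coreInv p * (M.stack M.Vt p)ᵀ * M.stack M.U p) * M.W p

noncomputable def Zt (p : ι) : Matrix (Fin r) (Fin r) ℝ :=
  (1 - (M.coreInv p)ᵀ * (M.stack M.Ut p)ᵀ * M.stack M.V p) * M.Z p

variable {M}

theorem isCornerInverse_blockInv (hB : M.BlocksInvertible) (q : ι) :
    IsCornerInverse (M.proj q) (M.blockInv q) (M.diagBlock q) :=
  isCornerInverse_cornerInv (hB q)

theorem blocksInvertible_of_isUnit_det (hT : M.IsValid) (hA : IsUnit M.A.det)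
    (hblocks : ∀ q, q ≠ M.root → IsUnit ((M.A - M.U q * M.Sig (M.parent q) * (M.V q)ᵀ).submatrix
      ((↑) : M.indices q → Fin n) (↑)).det) :
    M.BlocksInvertible := by
  intro q
  rw [coupling]
  split_ifs with hq
  · subst hq
    have hmem : ∀ a, a ∈ M.indices M.root := by simp [hT.indices_root]
    rw [sub_zero]
    rwa [← det_submatrix_equiv_self (Equiv.subtypeUnivEquiv hmem)] at hA
  · exact hblocks q hq

theorem proj_mul_Ut (hB : M.BlocksInvertible) (q : ι) : M.proj q * M.Ut q = M.Ut q := by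
  rw [Ut, Matrix.mul_neg, ← Matrix.mul_assoc, (isCornerInverse_blockInv hB q).proj_mul_fst]

theorem proj_mul_Vt (hB : M.BlocksInvertible) (q : ι) : M.proj q * M.Vt q = M.Vt q := by
  rw [Vt, Matrix.mul_neg, ← Matrix.mul_assoc, ← M.proj_transpose, ← transpose_mul,
    (isCornerInverse_blockInv hB q).mul_proj_fst]

theorem inv_eq_blockInv_root (hT : M.IsValid) (hB : M.BlocksInvertible) :
    M.A⁻¹ = M.blockInv M.root := by
  have h := isCornerInverse_blockInv hB M.root
  rw [diagBlock, coupling, if_pos rfl, sub_zero, hT.proj_root, Matrix.one_mul, Matrix.mul_one] at h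
  exact inv_eq_left_inv h.mul_eq

theorem proj_mul_coupling_mul_proj (hA : M.IsRLR) {p i k : ι}
    (hi : i ∈ M.children p) (hk : k ∈ M.children p) :
    M.proj i * M.coupling p * M.proj k =
      M.proj i * (M.U i * (M.Sig p - M.core p) * (M.V k)ᵀ) * M.proj k := by
  rw [coupling, core]
  split_ifs with hp
  · simp
  · rw [sub_sub_cancel, M.proj_mul_mul_transpose_mul_proj, M.proj_mul_mul_transpose_mul_proj,
      hA.proj_mul_U hp hi, hA.proj_mul_V hp hk]
    simp only [transpose_mul, Matrix.mul_assoc]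

theorem proj_mul_sub_coupling_mul_proj (hT : M.IsValid) (hA : M.IsRLR) {p i k : ι}
    (hi : i ∈ M.children p) (hk : k ∈ M.children p) :
    M.proj i * (M.A - M.coupling p) * M.proj k =
      (if i = k then M.diagBlock i else 0) +
        M.proj i * (M.U i * M.core p * (M.V k)ᵀ) * M.proj k := by
  rw [Matrix.mul_sub, Matrix.sub_mul, proj_mul_coupling_mul_proj hA hi hk]
  split_ifs with hik
  · subst hik
    rw [diagBlock, coupling, if_neg (hT.ne_root_of_mem_children hi), hT.parent_eq hi]
    simp only [Matrix.mul_sub, Matrix.sub_mul]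
    abel
  · rw [hA.proj_mul_A_mul_proj hi hk hik, zero_add]
    simp only [Matrix.mul_sub, Matrix.sub_mul]
    abel

theorem diagBlock_eq_sum_add (hT : M.IsValid) (hA : M.IsRLR) {p : ι} (hp : M.children p ≠ ∅) :
    M.diagBlock p =
      ∑ i ∈ M.children p, M.diagBlock i + M.stack M.U p * M.core p * (M.stack M.V p)ᵀ := by
  have hlow : M.stack M.U p * M.core p * (M.stack M.V p)ᵀ = ∑ i ∈ M.children p,
      ∑ k ∈ M.children p, M.proj i * (M.U i * M.core p * (M.V k)ᵀ) * M.proj k := by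
    simp only [PartitionTree.stack, transpose_sum, Matrix.sum_mul, Matrix.mul_sum,
      M.proj_mul_mul_transpose_mul_proj]
    exact Finset.sum_comm
  calc M.diagBlock p = ∑ i ∈ M.children p, ∑ k ∈ M.children p,
        M.proj i * (M.A - M.coupling p) * M.proj k := by
        rw [diagBlock, ← hT.sum_proj_children hp, Finset.sum_mul, Finset.sum_mul]
        simp only [Finset.mul_sum]
    _ = ∑ i ∈ M.children p, ∑ k ∈ M.children p, ((if i = k then M.diagBlock i else 0) +
        M.proj i * (M.U i * M.core p * (M.V k)ᵀ) * M.proj k) :=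
        Finset.sum_congr rfl fun i hi => Finset.sum_congr rfl fun k hk =>
          proj_mul_sub_coupling_mul_proj hT hA hi hk
    _ = _ := by
      simp only [Finset.sum_add_distrib, Finset.sum_ite_eq, Finset.sum_ite_mem, inter_self, hlow]

theorem isCornerInverse_sum_blockInv (hT : M.IsValid) (hB : M.BlocksInvertible) {p : ι}
    (hp : M.children p ≠ ∅) :
    IsCornerInverse (M.proj p) (∑ i ∈ M.children p, M.blockInv i)
      (∑ i ∈ M.children p, M.diagBlock i) := by
  rw [← hT.sum_proj_children hp]
  exact IsCornerInverse.sum (fun i _ => isCornerInverse_blockInv hB i)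
    fun i hi j hj hij => hT.proj_mul_proj_of_ne hi hj hij

theorem sum_blockInv_mul_stack_U (hT : M.IsValid) (hB : M.BlocksInvertible) (p : ι) :
    (∑ i ∈ M.children p, M.blockInv i) * M.stack M.U p = -M.stack M.Ut p := by
  rw [hT.sum_mul_stack fun i _ => (isCornerInverse_blockInv hB i).mul_proj_fst,
    PartitionTree.stack_eq_sum fun i _ => proj_mul_Ut hB i]
  simp only [Ut, Finset.sum_neg_distrib, neg_neg]

theorem sum_blockInv_transpose_mul_stack_V (hT : M.IsValid) (hB : M.BlocksInvertible) (p : ι) :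
    (∑ i ∈ M.children p, M.blockInv i)ᵀ * M.stack M.V p = -M.stack M.Vt p := by
  rw [transpose_sum, hT.sum_mul_stack fun i _ => by
      rw [← M.proj_transpose, ← transpose_mul, (isCornerInverse_blockInv hB i).proj_mul_fst],
    PartitionTree.stack_eq_sum fun i _ => proj_mul_Vt hB i]
  simp only [Vt, Finset.sum_neg_distrib, neg_neg]

theorem blockInv_eq_sum_add (hT : M.IsValid) (hA : M.IsRLR) (hB : M.BlocksInvertible) {p : ι}
    (hp : M.children p ≠ ∅) :
    M.blockInv p = ∑ i ∈ M.children p, M.blockInv i +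
      M.stack M.Ut p * M.coreInv p * (M.stack M.Vt p)ᵀ := by
  set E := ∑ i ∈ M.children p, M.blockInv i
  have hEU : E * M.stack M.U p = -M.stack M.Ut p := sum_blockInv_mul_stack_U hT hB p
  have hVE : (M.stack M.V p)ᵀ * E = -(M.stack M.Vt p)ᵀ := by
    rw [← transpose_transpose ((M.stack M.V p)ᵀ * E), transpose_mul, transpose_transpose,
      sum_blockInv_transpose_mul_stack_V hT hB, transpose_neg]
  have h := (isCornerInverse_sum_blockInv hT hB hp).woodbury (isCornerInverse_blockInv hB p)
  rw [diagBlock_eq_sum_add hT hA hp, add_sub_cancel_left] at h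
  refine h.trans ?_
  have h1 : E * (M.stack M.U p * M.core p * (M.stack M.V p)ᵀ) * E =
      E * M.stack M.U p * M.core p * ((M.stack M.V p)ᵀ * E) := by simp only [Matrix.mul_assoc]
  have h2 : E * (M.stack M.U p * M.core p * (M.stack M.V p)ᵀ) * M.blockInv p *
      (M.stack M.U p * M.core p * (M.stack M.V p)ᵀ) * E = E * M.stack M.U p *
        (M.core p * (M.stack M.V p)ᵀ * M.blockInv p * M.stack M.U p * M.core p) *
        ((M.stack M.V p)ᵀ * E) := by simp only [Matrix.mul_assoc]
  rw [h1, h2, hEU, hVE, coreInv]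
  simp only [Matrix.neg_mul, Matrix.mul_neg, neg_neg, Matrix.mul_sub, Matrix.sub_mul]
  abel

theorem Ut_eq_stack_mul_Wt (hT : M.IsValid) (hA : M.IsRLR) (hB : M.BlocksInvertible) {p : ι}
    (hp : M.children p ≠ ∅) (hpr : p ≠ M.root) : M.Ut p = M.stack M.Ut p * M.Wt p := by
  rw [Ut, ← (isCornerInverse_blockInv hB p).mul_proj_fst, Matrix.mul_assoc,
    hA.proj_mul_U_eq_stack_mul hT hp hpr, blockInv_eq_sum_add hT hA hB hp, Matrix.add_mul,
    ← Matrix.mul_assoc _ (M.stack M.U p), sum_blockInv_mul_stack_U hT hB, Wt]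
  simp only [Matrix.sub_mul, Matrix.mul_sub, Matrix.one_mul, Matrix.mul_assoc, Matrix.neg_mul]
  abel

theorem Vt_eq_stack_mul_Zt (hT : M.IsValid) (hA : M.IsRLR) (hB : M.BlocksInvertible) {p : ι}
    (hp : M.children p ≠ ∅) (hpr : p ≠ M.root) : M.Vt p = M.stack M.Vt p * M.Zt p := by
  rw [Vt, ← (isCornerInverse_blockInv hB p).proj_mul_fst, transpose_mul, M.proj_transpose,
    Matrix.mul_assoc, hA.proj_mul_V_eq_stack_mul hT hp hpr, blockInv_eq_sum_add hT hA hB hp,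
    transpose_add, Matrix.add_mul,
    ← Matrix.mul_assoc _ (M.stack M.V p), sum_blockInv_transpose_mul_stack_V hT hB, Zt]
  simp only [transpose_mul, transpose_transpose, Matrix.sub_mul, Matrix.mul_sub, Matrix.one_mul,
    Matrix.mul_assoc, Matrix.neg_mul]
  abel

theorem proj_mul_sum_blockInv_add_mul_proj (hT : M.IsValid) (hB : M.BlocksInvertible) {p i j : ι}
    (hi : i ∈ M.children p) (hj : j ∈ M.children p) (S : Matrix (Fin r) (Fin r) ℝ) :
    M.proj i * (∑ k ∈ M.children p, M.blockInv k + M.stack M.Ut p * S * (M.stack M.Vt p)ᵀ) *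
        M.proj j = (if i = j then M.blockInv i else 0) + M.Ut i * S * (M.Vt j)ᵀ := by
  have hN := isCornerInverse_blockInv hB i
  have hE : M.proj i * ∑ k ∈ M.children p, M.blockInv k = M.blockInv i := by
    rw [← PartitionTree.stack_eq_sum fun k _ => (isCornerInverse_blockInv hB k).proj_mul_fst,
      hT.proj_mul_stack hi, hN.proj_mul_fst]
  rw [Matrix.mul_add, Matrix.add_mul, hE, M.proj_mul_mul_transpose_mul_proj,
    hT.proj_mul_stack hi, hT.proj_mul_stack hj, proj_mul_Ut hB, proj_mul_Vt hB]
  congr 1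
  split_ifs with hij
  · rw [hij, (isCornerInverse_blockInv hB j).mul_proj_fst]
  · rw [← hN.mul_proj_fst, Matrix.mul_assoc, hT.proj_mul_proj_of_ne hi hj hij, Matrix.mul_zero]

theorem exists_proj_mul_inv_mul_proj [Finite ι] (hT : M.IsValid) (hA : M.IsRLR)
    (hB : M.BlocksInvertible) (p : ι) (hp : M.children p ≠ ∅) :
    ∃ S : Matrix (Fin r) (Fin r) ℝ, M.proj p * M.A⁻¹ * M.proj p =
      ∑ i ∈ M.children p, M.blockInv i + M.stack M.Ut p * S * (M.stack M.Vt p)ᵀ := by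
  induction p using hT.induction_from_root with
  | root =>
    exact ⟨M.coreInv M.root, by rw [hT.proj_root, Matrix.one_mul, Matrix.mul_one,
      inv_eq_blockInv_root hT hB, blockInv_eq_sum_add hT hA hB hp]⟩
  | step p hpr ih =>
    have hmem := hT.mem_children_parent p hpr
    obtain ⟨S, hS⟩ := ih (ne_empty_of_mem hmem)
    refine ⟨M.coreInv p + M.Wt p * S * (M.Zt p)ᵀ, ?_⟩
    calc M.proj p * M.A⁻¹ * M.proj p = M.blockInv p + M.Ut p * S * (M.Vt p)ᵀ := by
          rw [hT.proj_mul_mul_proj_eq hmem hmem, hS,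
            proj_mul_sum_blockInv_add_mul_proj hT hB hmem hmem, if_pos rfl]
      _ = _ := by
          rw [blockInv_eq_sum_add hT hA hB hp, Ut_eq_stack_mul_Wt hT hA hB hp hpr,
            Vt_eq_stack_mul_Zt hT hA hB hp hpr, transpose_mul]
          simp only [Matrix.mul_add, Matrix.add_mul, Matrix.mul_assoc, add_assoc]

theorem exists_rlrFactors_inv [Finite ι] (hT : M.IsValid) (hA : M.IsRLR) (hB : M.BlocksInvertible) :
    ∃ Sigt : ι → Matrix (Fin r) (Fin r) ℝ,
      RLRFactors M.children M.indices M.root M.A⁻¹ M.Ut M.Vt Sigt M.Wt M.Zt := by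
  have h : ∀ p, ∃ S : Matrix (Fin r) (Fin r) ℝ, M.children p ≠ ∅ → M.proj p * M.A⁻¹ * M.proj p =
      ∑ i ∈ M.children p, M.blockInv i + M.stack M.Ut p * S * (M.stack M.Vt p)ᵀ := fun p => by
    by_cases hp : M.children p = ∅
    · exact ⟨0, fun h => absurd hp h⟩
    · obtain ⟨S, hS⟩ := exists_proj_mul_inv_mul_proj hT hA hB p hp
      exact ⟨S, fun _ => hS⟩
  choose S hS using h
  refine ⟨S, (rlrFactors_iff ..).2 ⟨fun p i hi j hj hij => ?_, fun p hpr i hi => ⟨?_, ?_⟩⟩⟩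
  · change M.proj i * M.A⁻¹ * M.proj j = M.proj i * (M.Ut i * S p * (M.Vt j)ᵀ) * M.proj j
    rw [hT.proj_mul_mul_proj_eq hi hj, hS p (ne_empty_of_mem hi),
      proj_mul_sum_blockInv_add_mul_proj hT hB hi hj, if_neg hij, zero_add,
      M.proj_mul_mul_transpose_mul_proj, proj_mul_Ut hB, proj_mul_Vt hB]
  · change M.proj i * M.Ut p = M.proj i * (M.Ut i * M.Wt p)
    rw [Ut_eq_stack_mul_Wt hT hA hB (ne_empty_of_mem hi) hpr, ← Matrix.mul_assoc,
      hT.proj_mul_stack hi, Matrix.mul_assoc]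
  · change M.proj i * M.Vt p = M.proj i * (M.Vt i * M.Zt p)
    rw [Vt_eq_stack_mul_Zt hT hA hB (ne_empty_of_mem hi) hpr, ← Matrix.mul_assoc,
      hT.proj_mul_stack hi, Matrix.mul_assoc]

end RLRData

/-- if `A ∈ ℝ^{n×n}` is recursively low-rank with partitioning tree `T` and
integer `r`, `A` is invertible, and each `A_{ii} − Uᵢ Σₚ Vᵢᵀ` (nonroot node `i`, parent
`p`) is invertible, then `A⁻¹` is recursively low-rank with the same tree `T` and the same
integer `r`. -/
theorem rlr_inverse {n r : ℕ} {ι : Type*} [Fintype ι]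
    (root : ι) (Ch : ι → Finset ι) (Isub : ι → Finset (Fin n)) (par : ι → ι)
    (depth : ι → ℕ)
    (hIroot : Isub root = Finset.univ)
    (hunion : ∀ p, Ch p ≠ ∅ → Isub p = (Ch p).biUnion Isub)
    (hdisj : ∀ p, ∀ i ∈ Ch p, ∀ j ∈ Ch p, i ≠ j → Disjoint (Isub i) (Isub j))
    (hpar : ∀ i, i ≠ root → i ∈ Ch (par i))
    (hparent_unique : ∀ p q i, i ∈ Ch p → i ∈ Ch q → p = q)
    (hroot_not_child : ∀ p, root ∉ Ch p)
    (hdepth : ∀ p, ∀ i ∈ Ch p, depth i < depth p)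
    (A : Matrix (Fin n) (Fin n) ℝ)
    (U V : ι → Fin n → Fin r → ℝ) (Sig W Z : ι → Matrix (Fin r) (Fin r) ℝ)
    (hA : RLRFactors Ch Isub root A U V Sig W Z)
    (hAinv : IsUnit A.det)
    (hblocks : ∀ i, i ≠ root → IsUnit (Matrix.det (Matrix.of
      (fun a b : {x // x ∈ Isub i} =>
        A a.1 b.1 - ∑ c, ∑ d, U i a.1 c * Sig (par i) c d * V i b.1 d)))) :
    ∃ (Ut Vt : ι → Fin n → Fin r → ℝ) (Sigt Wt Zt : ι → Matrix (Fin r) (Fin r) ℝ),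
      RLRFactors Ch Isub root A⁻¹ Ut Vt Sigt Wt Zt := by
  classical
  let M : RLRData n r ι := ⟨⟨root, Ch, Isub, par, depth⟩, A, U, V, Sig, W, Z⟩
  have hT : M.IsValid :=
    ⟨hIroot, hunion, hdisj, hpar, hparent_unique, hroot_not_child, hdepth⟩
  have hB : M.BlocksInvertible := RLRData.blocksInvertible_of_isUnit_det hT hAinv fun q hq => by
    convert hblocks q hq using 2
    ext a b
    rw [submatrix_apply, Matrix.sub_apply, mul_mul_transpose_apply]
    rfl
  obtain ⟨Sigt, h⟩ := RLRData.exists_rlrFactors_inv hT hA hB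
  exact ⟨_, _, Sigt, _, _, h⟩
end

section
/- Let k be a function on S × S, let T be a finite rooted tree defining a hierarchical partitioning of S with landmark sets X̲_p (each k(X̲_p,X̲_p) invertible), let k_h be the hierarchical covariance function defined by the recursion through k_h^{(i)} and ψ^{(i)}, and let X be a finite set of points in S with X_j = X ∩ S_j nonempty for every node j. Define a matrix A on the index partition induced by the leaves by: A_{ii} = k(X_i,X_i) for every leaf i; Σ_p = k(X̲_p,X̲_p) for every nonleaf p; U_i = V_i = k(X_i,X̲_p) k(X̲_p,X̲_p)^{-1} for every leaf i with parent p; and W_p = Z_p = k(X̲_p,X̲_q) k(X̲_q,X̲_q)^{-1} for every nonleaf, nonroot p with parent q. Then A is a symmetric recursively low-rank matrix and A = k_h(X,X). -/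
open Matrix

private lemma rlr_aux1 {r : ℕ} (v : Fin r → ℝ) (M N : Matrix (Fin r) (Fin r) ℝ) (a : Fin r) :
    ∑ b, ∑ c, v b * M b c * N c a = ((v ᵥ* M) ᵥ* N) a := by
  simp only [Matrix.vecMul, dotProduct, Finset.sum_mul]
  rw [Finset.sum_comm]

private lemma rlr_aux2 {r : ℕ} (v : Fin r → ℝ) (M : Matrix (Fin r) (Fin r) ℝ) (w : Fin r → ℝ) :
    ∑ a, ∑ b, v a * M a b * w b = (v ᵥ* M) ⬝ᵥ w := by
  simp only [Matrix.vecMul, dotProduct, Finset.sum_mul]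
  rw [Finset.sum_comm]

private lemma rlr_aux3 {r : ℕ} (v : Fin r → ℝ) (M : Matrix (Fin r) (Fin r) ℝ) (w : Fin r → ℝ) :
    v ⬝ᵥ (M *ᵥ w) = ∑ c, ∑ d, v c * M c d * w d := by
  simp only [Matrix.mulVec, dotProduct, Finset.mul_sum]
  exact Finset.sum_congr rfl fun c _ => Finset.sum_congr rfl fun d _ => by ring

/-- let `k_h` be the hierarchical covariance function built from a symmetric
base kernel `k` via a partitioning tree with landmark lists `u i` having invertible Gram
matrices, and let `X` (given by the injective family `pt`) be a finite set of points with
`X_j = X ∩ S_j` nonempty for every node `j`.  With the factor assignment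
`A_{ii} = k(Xᵢ,Xᵢ)` on leaves, `Σ_p = k(X̲_p,X̲_p)`,
`Uᵢ = Vᵢ = k(Xᵢ,X̲_p) k(X̲_p,X̲_p)⁻¹` for leaves `i` with parent `p`, and
`W_p = Z_p = k(X̲_p,X̲_q) k(X̲_q,X̲_q)⁻¹` for nonleaf nonroot `p` with parent `q`, the
matrix `A = k_h(X,X)` is symmetric and recursively low-rank with exactly these factors. -/
theorem hierarchical_matrix_is_rlr {S ι : Type*} [Fintype ι] {n r : ℕ}
    (k : S → S → ℝ) (hsymm : ∀ x x', k x x' = k x' x)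
    (root : ι) (Ch : ι → Finset ι) (dom : ι → Set S) (depth : ι → ℕ) (par : ι → ι)
    (hroot : dom root = Set.univ)
    (hsub : ∀ i, ∀ j ∈ Ch i, dom j ⊆ dom i)
    (hcov : ∀ i, Ch i ≠ ∅ → ∀ x ∈ dom i, ∃ j ∈ Ch i, x ∈ dom j)
    (hdomdisj : ∀ i, ∀ j ∈ Ch i, ∀ l ∈ Ch i, j ≠ l → Disjoint (dom j) (dom l))
    (hpar : ∀ i, i ≠ root → i ∈ Ch (par i))
    (hparent_unique : ∀ i i' j, j ∈ Ch i → j ∈ Ch i' → i = i')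
    (hroot_not_child : ∀ i, root ∉ Ch i)
    (hdepth : ∀ i, ∀ j ∈ Ch i, depth j < depth i)
    (u : ι → Fin r → S)
    (hu_mem : ∀ i, Ch i ≠ ∅ → ∀ a, u i a ∈ dom i)
    (hu_inj : ∀ i, Ch i ≠ ∅ → Function.Injective (u i))
    (hGram : ∀ i, Ch i ≠ ∅ → IsUnit (gramMatrix k (u i)).det)
    (khi : ι → S → S → ℝ) (ψ : ι → S → Fin r → ℝ)
    (hkhi_leaf : ∀ i, Ch i = ∅ → ∀ x x', khi i x x' = k x x')
    (hkhi_child : ∀ i, ∀ j ∈ Ch i, ∀ x ∈ dom j, ∀ x' ∈ dom j, khi i x x' = khi j x x')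
    (hkhi_cross : ∀ i, Ch i ≠ ∅ → ∀ x ∈ dom i, ∀ x' ∈ dom i,
      (¬ ∃ j ∈ Ch i, x ∈ dom j ∧ x' ∈ dom j) →
      khi i x x' = ∑ a, ∑ b, ψ i x a * (gramMatrix k (u i))⁻¹ a b * ψ i x' b)
    (hψ_leaf : ∀ i, ∀ j ∈ Ch i, Ch j = ∅ → ∀ x ∈ dom j, ∀ a, ψ i x a = k x (u i a))
    (hψ_rec : ∀ i, ∀ j ∈ Ch i, Ch j ≠ ∅ → ∀ x ∈ dom j, ∀ a,
      ψ i x a = ∑ b, ∑ c, ψ j x b * (gramMatrix k (u j))⁻¹ b c * k (u j c) (u i a))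
    (pt : Fin n → S) (hpt : Function.Injective pt)
    (Isub : ι → Finset (Fin n))
    (hIsub : ∀ i a, a ∈ Isub i ↔ pt a ∈ dom i)
    (hne : ∀ i, (Isub i).Nonempty)
    (U : ι → Fin n → Fin r → ℝ)
    (hU_leaf : ∀ i, Ch i = ∅ → i ≠ root → ∀ a ∈ Isub i, ∀ c,
      U i a c = ∑ b, k (pt a) (u (par i) b) * (gramMatrix k (u (par i)))⁻¹ b c)
    (W : ι → Matrix (Fin r) (Fin r) ℝ)
    (hW : ∀ p, Ch p ≠ ∅ → p ≠ root → ∀ c d,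
      W p c d = ∑ e, k (u p c) (u (par p) e) * (gramMatrix k (u (par p)))⁻¹ e d)
    (hU_nested : ∀ p, p ≠ root → ∀ i ∈ Ch p, ∀ a ∈ Isub i, ∀ d,
      U p a d = ∑ c, U i a c * W p c d)
    (A : Matrix (Fin n) (Fin n) ℝ)
    (hA : A = Matrix.of fun a b => khi root (pt a) (pt b)) :
    Aᵀ = A ∧
    RLRFactors Ch Isub root A U U (fun p => gramMatrix k (u p)) W W ∧
    (∀ i, Ch i = ∅ → ∀ a ∈ Isub i, ∀ b ∈ Isub i, A a b = k (pt a) (pt b)) := by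
  subst hA
  -- Gram matrix symmetry facts
  have hGsymm : ∀ i, (gramMatrix k (u i))ᵀ = gramMatrix k (u i) := by
    intro i; ext a b; exact hsymm _ _
  have hGinvT : ∀ i, ((gramMatrix k (u i))⁻¹)ᵀ = (gramMatrix k (u i))⁻¹ := by
    intro i; rw [Matrix.transpose_nonsing_inv, hGsymm]
  -- symmetry of khi on each domain
  have SYM : ∀ m i, depth i < m → ∀ x ∈ dom i, ∀ x' ∈ dom i,
      khi i x x' = khi i x' x := by
    intro m
    induction m with
    | zero => intro i hi; exact absurd hi (Nat.not_lt_zero _)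
    | succ m ih =>
      intro i hi x hx x' hx'
      by_cases hch : Ch i = ∅
      · rw [hkhi_leaf i hch, hkhi_leaf i hch, hsymm]
      · by_cases hex : ∃ j ∈ Ch i, x ∈ dom j ∧ x' ∈ dom j
        · obtain ⟨j, hj, hxj, hx'j⟩ := hex
          rw [hkhi_child i j hj x hxj x' hx'j, hkhi_child i j hj x' hx'j x hxj]
          exact ih j (by have := hdepth i j hj; omega) x hxj x' hx'j
        · have hex' : ¬ ∃ j ∈ Ch i, x' ∈ dom j ∧ x ∈ dom j := by
            rintro ⟨j, hj, h1, h2⟩; exact hex ⟨j, hj, h2, h1⟩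
          rw [hkhi_cross i hch x hx x' hx' hex, hkhi_cross i hch x' hx' x hx hex',
            rlr_aux2, rlr_aux2, ← Matrix.mulVec_transpose, hGinvT i,
            ← Matrix.dotProduct_mulVec]
          exact dotProduct_comm _ _
  -- descending from the root
  have DESC : ∀ m q, Finset.univ.sup depth - depth q < m → ∀ x ∈ dom q, ∀ x' ∈ dom q,
      khi root x x' = khi q x x' := by
    intro m
    induction m with
    | zero => intro q hq; exact absurd hq (Nat.not_lt_zero _)
    | succ m ih =>
      intro q hq x hx x' hx'
      by_cases hr : q = root
      · subst hr; rfl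
      · have hq' : q ∈ Ch (par q) := hpar q hr
        have hdlt : depth q < depth (par q) := hdepth _ _ hq'
        have hsup : depth (par q) ≤ Finset.univ.sup depth :=
          Finset.le_sup (Finset.mem_univ _)
        have h1 := ih (par q) (by omega) x (hsub _ _ hq' hx) x' (hsub _ _ hq' hx')
        rw [h1, hkhi_child (par q) q hq' x hx x' hx']
  -- key lemma: ψ at the parent in terms of U and the parent's Gram matrix
  have PSI : ∀ m i, depth i < m → i ≠ root → ∀ a ∈ Isub i,
      ψ (par i) (pt a) = U i a ᵥ* gramMatrix k (u (par i)) := by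
    intro m
    induction m with
    | zero => intro i hi; exact absurd hi (Nat.not_lt_zero _)
    | succ m ih =>
      intro i hdi hir a ha
      have hip : i ∈ Ch (par i) := hpar i hir
      have hpne : Ch (par i) ≠ ∅ := Finset.ne_empty_of_mem hip
      have hx : pt a ∈ dom i := (hIsub i a).mp ha
      by_cases hch : Ch i = ∅
      · have hU : U i a = (fun b => k (pt a) (u (par i) b)) ᵥ* (gramMatrix k (u (par i)))⁻¹ := by
          funext c
          rw [hU_leaf i hch hir a ha c]
          rfl
        funext c
        rw [hψ_leaf (par i) i hip hch (pt a) hx c, hU, Matrix.vecMul_vecMul,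
          Matrix.nonsing_inv_mul _ (hGram (par i) hpne), Matrix.vecMul_one]
      · obtain ⟨j, hj, hxj⟩ := hcov i hch (pt a) hx
        have haj : a ∈ Isub j := (hIsub j a).mpr hxj
        have hjr : j ≠ root := fun h => hroot_not_child i (h ▸ hj)
        have hpj : par j = i := hparent_unique (par j) i j (hpar j hjr) hj
        have IH := ih j (by have := hdepth i j hj; omega) hjr a haj
        rw [hpj] at IH
        have hψp : ψ (par i) (pt a)
            = (ψ i (pt a) ᵥ* (gramMatrix k (u i))⁻¹) ᵥ*
              (Matrix.of fun c e => k (u i c) (u (par i) e)) := by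
          funext c
          rw [hψ_rec (par i) i hip hch (pt a) hx c]
          exact rlr_aux1 (ψ i (pt a)) (gramMatrix k (u i))⁻¹ (Matrix.of fun c e => k (u i c) (u (par i) e)) c
        have hWi : W i = (Matrix.of fun c e => k (u i c) (u (par i) e)) *
            (gramMatrix k (u (par i)))⁻¹ := by
          ext c d
          rw [hW i hch hir c d, Matrix.mul_apply]
          rfl
        have hUi : U i a = U j a ᵥ* W i := by
          funext d
          rw [hU_nested i hir j hj a haj d]
          rfl
        rw [hψp, IH, hUi, hWi, Matrix.vecMul_vecMul, Matrix.vecMul_vecMul,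
          Matrix.vecMul_vecMul]
        rw [← Matrix.mul_assoc, Matrix.mul_nonsing_inv _ (hGram i hch), Matrix.one_mul,
          Matrix.mul_assoc, Matrix.nonsing_inv_mul _ (hGram (par i) hpne), Matrix.mul_one]
  refine ⟨?_, ⟨?_, ?_⟩, ?_⟩
  · -- symmetry of A
    ext a b
    have := SYM (depth root + 1) root (by omega) (pt b) (by rw [hroot]; trivial)
      (pt a) (by rw [hroot]; trivial)
    simpa [Matrix.transpose_apply] using this
  · -- off-diagonal blocks
    intro p i hi j hj hij a ha b hb
    have hpne : Ch p ≠ ∅ := Finset.ne_empty_of_mem hi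
    have hxa : pt a ∈ dom i := (hIsub i a).mp ha
    have hxb : pt b ∈ dom j := (hIsub j b).mp hb
    have hxap : pt a ∈ dom p := hsub p i hi hxa
    have hxbp : pt b ∈ dom p := hsub p j hj hxb
    have hnex : ¬ ∃ l ∈ Ch p, pt a ∈ dom l ∧ pt b ∈ dom l := by
      rintro ⟨l, hl, hal, hbl⟩
      have hli : l = i := by
        by_contra h
        exact (hdomdisj p l hl i hi h).le_bot ⟨hal, hxa⟩
      have hlj : l = j := by
        by_contra h
        exact (hdomdisj p l hl j hj h).le_bot ⟨hbl, hxb⟩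
      exact hij (hli ▸ hlj)
    have hdesc := DESC (Finset.univ.sup depth - depth p + 1) p (by omega)
      (pt a) hxap (pt b) hxbp
    have hir : i ≠ root := fun h => hroot_not_child p (h ▸ hi)
    have hjr : j ≠ root := fun h => hroot_not_child p (h ▸ hj)
    have hpi : par i = p := hparent_unique (par i) p i (hpar i hir) hi
    have hpj : par j = p := hparent_unique (par j) p j (hpar j hjr) hj
    have PSIa := PSI (depth i + 1) i (by omega) hir a ha
    have PSIb := PSI (depth j + 1) j (by omega) hjr b hb
    rw [hpi] at PSIa; rw [hpj] at PSIb
    show khi root (pt a) (pt b) = _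
    rw [hdesc, hkhi_cross p hpne (pt a) hxap (pt b) hxbp hnex, rlr_aux2, PSIa, PSIb,
      Matrix.vecMul_vecMul, Matrix.mul_nonsing_inv _ (hGram p hpne), Matrix.vecMul_one]
    conv_lhs => rw [← hGsymm p, Matrix.vecMul_transpose]
    exact rlr_aux3 _ _ _
  · -- nested basis relations
    intro p hp i hi a ha d
    exact ⟨hU_nested p hp i hi a ha d, hU_nested p hp i hi a ha d⟩
  · -- diagonal leaf blocks
    intro i hch a ha b hb
    have hxa : pt a ∈ dom i := (hIsub i a).mp ha
    have hxb : pt b ∈ dom i := (hIsub i b).mp hb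
    have hdesc := DESC (Finset.univ.sup depth - depth i + 1) i (by omega)
      (pt a) hxa (pt b) hxb
    show khi root (pt a) (pt b) = _
    rw [hdesc, hkhi_leaf i hch]
end

section
/- Let C_1,...,C_s be invertible square real matrices with C_i of size n_i × n_i, let U_i ∈ ℝ^{n_i×r}, set V_i = C_i^{-1} U_i and Ξ = ∑_{i=1}^s V_i^T V_i, and let D ∈ ℝ^{r×r} be arbitrary. Form the stacked matrices U, V with blocks U_i, V_i and set G = diag(C_1,...,C_s) + U D V^T. Then G G^T = diag(C_1 C_1^T,...,C_s C_s^T) + U ( D + D^T + D Ξ D^T ) U^T. -/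
open Matrix

/-- for invertible `C₁,…,C_s`, factors `Uᵢ ∈ ℝ^{nᵢ×r}`, `Vᵢ = Cᵢ⁻¹ Uᵢ`,
`Ξ = ∑ᵢ Vᵢᵀ Vᵢ`, arbitrary `D ∈ ℝ^{r×r}`, and `G = diag(C₁,…,C_s) + U D Vᵀ`
(with `U, V` the stacked factors), one has
`G Gᵀ = diag(C₁C₁ᵀ,…,C_sC_sᵀ) + U (D + Dᵀ + D Ξ Dᵀ) Uᵀ`. -/
theorem cholesky_block_identity {s r : ℕ} (nd : Fin s → ℕ)
    (C : ∀ i, Matrix (Fin (nd i)) (Fin (nd i)) ℝ)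
    (hC : ∀ i, IsUnit (C i).det)
    (U V : ∀ i, Matrix (Fin (nd i)) (Fin r) ℝ)
    (hV : ∀ i, V i = (C i)⁻¹ * U i)
    (Ξ : Matrix (Fin r) (Fin r) ℝ)
    (hΞ : Ξ = ∑ i, (V i)ᵀ * V i)
    (D : Matrix (Fin r) (Fin r) ℝ)
    (Us Vs : Matrix ((i : Fin s) × Fin (nd i)) (Fin r) ℝ)
    (hUs : Us = Matrix.of fun x c => U x.1 x.2 c)
    (hVs : Vs = Matrix.of fun x c => V x.1 x.2 c)
    (G : Matrix ((i : Fin s) × Fin (nd i)) ((i : Fin s) × Fin (nd i)) ℝ)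
    (hG : G = Matrix.blockDiagonal' C + Us * D * Vsᵀ) :
    G * Gᵀ = Matrix.blockDiagonal' (fun i => C i * (C i)ᵀ)
      + Us * (D + Dᵀ + D * Ξ * Dᵀ) * Usᵀ := by
  set B := Matrix.blockDiagonal' C with hB
  have hBV : B * Vs = Us := by
    subst hVs hUs
    ext ⟨i, a⟩ c
    rw [Matrix.mul_apply, ← Finset.univ_sigma_univ, Finset.sum_sigma]
    rw [Finset.sum_eq_single i ?h₀ ?h₁]
    · simp only [Matrix.of_apply, hB, Matrix.blockDiagonal'_apply_eq]
      have : (C i * V i) a c = U i a c := by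
        rw [hV i, ← Matrix.mul_assoc, Matrix.mul_nonsing_inv _ (hC i), Matrix.one_mul]
      rw [← this, Matrix.mul_apply]
    case h₀ =>
      intro j _ hj
      apply Finset.sum_eq_zero
      intro b _
      rw [hB, Matrix.blockDiagonal'_apply_ne _ _ _ (Ne.symm hj), zero_mul]
    case h₁ => simp
  have hVV : Vsᵀ * Vs = Ξ := by
    subst hVs
    rw [hΞ]
    ext c c'
    rw [Matrix.mul_apply, ← Finset.univ_sigma_univ, Finset.sum_sigma, Matrix.sum_apply]
    refine Finset.sum_congr rfl fun i _ => ?_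
    rw [Matrix.mul_apply]
    simp [Matrix.transpose_apply]
  have hBB : B * Bᵀ = Matrix.blockDiagonal' (fun i => C i * (C i)ᵀ) := by
    rw [hB, Matrix.blockDiagonal'_transpose, Matrix.blockDiagonal'_mul]
  have hVB : Vsᵀ * Bᵀ = Usᵀ := by rw [← Matrix.transpose_mul, hBV]
  subst hG
  rw [Matrix.transpose_add, Matrix.transpose_mul, Matrix.transpose_mul,
    Matrix.transpose_transpose, Matrix.add_mul, Matrix.mul_add, Matrix.mul_add]
  have t2 : B * (Vs * (Dᵀ * Usᵀ)) = Us * Dᵀ * Usᵀ := by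
    rw [← Matrix.mul_assoc, hBV, Matrix.mul_assoc]
  have t3 : Us * D * Vsᵀ * Bᵀ = Us * D * Usᵀ := by
    rw [Matrix.mul_assoc (Us * D), hVB]
  have t4 : Us * D * Vsᵀ * (Vs * (Dᵀ * Usᵀ)) = Us * D * Ξ * Dᵀ * Usᵀ := by
    rw [← Matrix.mul_assoc, ← Matrix.mul_assoc, Matrix.mul_assoc (Us * D) Vsᵀ, hVV,
      Matrix.mul_assoc (Us * D * Ξ)]
  rw [t2, t3, t4, hBB]
  rw [Matrix.mul_add, Matrix.mul_add, Matrix.add_mul, Matrix.add_mul]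
  simp only [Matrix.mul_assoc]
  abel
end

section
/- Let M ∈ ℝ^{n×n} be symmetric positive definite, let U ∈ ℝ^{n×r}, let Λ ∈ ℝ^{r×r} be symmetric, and set Ξ = U^T M^{-1} U. Then all eigenvalues of the r × r matrix I + Ξ Λ are real, and M + U Λ U^T is symmetric positive definite if and only if all eigenvalues of I + Ξ Λ are positive. -/
/-!
Write `M⁻¹ = Cᴴ C` and `S = C U`. Then `M + U Λ Uᴴ = C⁻¹ (1 + S Λ Sᴴ) C⁻ᴴ` is congruent to the
real symmetric matrix `1 + S Λ Sᴴ`, whose eigenvalues are real and which is positive definite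
iff they are positive. On the other hand `Ξ Λ = Sᴴ (S Λ)`, and `X Y`, `Y X` have the same nonzero
eigenvalues, so `1 + Ξ Λ` and `1 + S Λ Sᴴ` have the same eigenvalues other than `1`.
-/

open Matrix

theorem spectrum.mem_one_add_iff {R A : Type*} [CommRing R] [Ring A] [Algebra R A] (a : A)
    (μ : R) : μ ∈ spectrum R (1 + a) ↔ μ - 1 ∈ spectrum R a := by
  rw [← map_one (algebraMap R A), ← spectrum.singleton_add_eq, Set.singleton_add,
    Set.image_add_left, Set.mem_preimage, neg_add_eq_sub]

namespace Matrix

section Spectrum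

open Polynomial

variable {K : Type*} [Field K] {m n : Type*} [Fintype m] [Fintype n] [DecidableEq m]
  [DecidableEq n]

theorem mem_spectrum_mul_comm (X : Matrix m n K) (Y : Matrix n m K) {ν : K} (hν : ν ≠ 0) :
    ν ∈ spectrum K (X * Y) ↔ ν ∈ spectrum K (Y * X) := by
  have h := congrArg (eval ν) (charpoly_mul_comm' X Y)
  simp only [eval_mul, eval_pow, eval_X] at h
  rw [mem_spectrum_iff_isRoot_charpoly, mem_spectrum_iff_isRoot_charpoly, IsRoot.def, IsRoot.def,
    ← mul_eq_zero_iff_left (pow_ne_zero (Fintype.card n) hν), h,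
    mul_eq_zero_iff_left (pow_ne_zero _ hν)]

theorem mem_spectrum_one_add_mul_comm (X : Matrix m n K) (Y : Matrix n m K) {μ : K}
    (hμ : μ ≠ 1) : μ ∈ spectrum K (1 + X * Y) ↔ μ ∈ spectrum K (1 + Y * X) := by
  rw [spectrum.mem_one_add_iff, spectrum.mem_one_add_iff,
    mem_spectrum_mul_comm X Y (sub_ne_zero.mpr hμ)]

theorem forall_mem_spectrum_map_one_add_mul_comm {L : Type*} [Field L] (f : K →+* L)
    (X : Matrix m n K) (Y : Matrix n m K) {P : L → Prop} (h1 : P 1) :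
    (∀ μ ∈ spectrum L ((1 + X * Y).map f), P μ) ↔ ∀ μ ∈ spectrum L ((1 + Y * X).map f), P μ := by
  simp only [Matrix.map_add _ (map_add f), Matrix.map_one _ (map_zero f) (map_one f),
    Matrix.map_mul]
  refine forall_congr' fun μ => ?_
  rcases eq_or_ne μ 1 with rfl | hμ
  · simp [h1]
  · rw [mem_spectrum_one_add_mul_comm _ _ hμ]

theorem algebraMap_mem_spectrum_map_iff {L : Type*} [Field L] [Algebra K L]
    (A : Matrix n n K) (x : K) :
    algebraMap K L x ∈ spectrum L (A.map (algebraMap K L)) ↔ x ∈ spectrum K A := by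
  rw [mem_spectrum_iff_isRoot_charpoly, mem_spectrum_iff_isRoot_charpoly, charpoly_map,
    isRoot_map_iff (algebraMap K L).injective]

end Spectrum

section Hermitian

open scoped ComplexOrder

variable {𝕜 : Type*} [RCLike 𝕜] {n : Type*} [Fintype n] [DecidableEq n]

theorem IsHermitian.posDef_iff_spectrum_pos {A : Matrix n n 𝕜} (hA : A.IsHermitian) :
    A.PosDef ↔ ∀ x ∈ spectrum ℝ A, 0 < x := by
  rw [hA.posDef_iff_eigenvalues_pos, hA.spectrum_real_eq_range_eigenvalues,
    Set.forall_mem_range]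

theorem IsHermitian.spectrum_map_algebraMap {A : Matrix n n ℝ} (hA : A.IsHermitian) :
    spectrum 𝕜 (A.map (algebraMap ℝ 𝕜)) = algebraMap ℝ 𝕜 '' spectrum ℝ A := by
  have hA𝕜 : (A.map (algebraMap ℝ 𝕜)).IsHermitian :=
    hA.map _ fun x => (RCLike.conj_ofReal x).symm
  ext μ
  constructor
  · intro hμ
    obtain ⟨x, -, rfl⟩ := hA𝕜.spectrum_eq_image_range ▸ hμ
    exact ⟨x, (algebraMap_mem_spectrum_map_iff A x).mp hμ, rfl⟩
  · rintro ⟨x, hx, rfl⟩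
    exact (algebraMap_mem_spectrum_map_iff A x).mpr hx

end Hermitian

section Congruence

open scoped ComplexOrder

variable {𝕜 : Type*} [RCLike 𝕜] {n r : Type*} [Fintype n] [Fintype r] [DecidableEq n]

theorem PosDef.posDef_add_mul_mul_conjTranspose_iff {M C : Matrix n n 𝕜} (hM : M.PosDef)
    (hC : M⁻¹ = Cᴴ * C) (U : Matrix n r 𝕜) (Λ : Matrix r r 𝕜) :
    (M + U * Λ * Uᴴ).PosDef ↔ (1 + C * U * Λ * (C * U)ᴴ).PosDef := by
  have hCdet : IsUnit C.det := by
    have h := (isUnit_iff_isUnit_det _).mp hM.inv.isUnit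
    rw [hC, det_mul] at h
    exact isUnit_of_mul_isUnit_right h
  have hcongr : M + U * Λ * Uᴴ = C⁻¹ * (1 + C * U * Λ * (C * U)ᴴ) * star C⁻¹ := by
    have hMC : C⁻¹ * (Cᴴ)⁻¹ = M := by
      rw [← mul_inv_rev, ← hC, nonsing_inv_nonsing_inv _ ((isUnit_iff_isUnit_det _).mp hM.isUnit)]
    rw [star_eq_conjTranspose, conjTranspose_nonsing_inv, conjTranspose_mul]
    simp only [Matrix.mul_add, Matrix.add_mul, Matrix.mul_one, hMC, ← Matrix.mul_assoc,
      nonsing_inv_mul _ hCdet, Matrix.one_mul]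
    rw [mul_nonsing_inv_cancel_right _ _ (by simpa [det_conjTranspose] using hCdet.star)]
  rw [hcongr, IsUnit.posDef_star_right_conjugate_iff (isUnit_nonsing_inv_iff.mpr
    ((isUnit_iff_isUnit_det _).mpr hCdet))]

end Congruence

end Matrix

/-- for a symmetric positive definite `M ∈ ℝ^{n×n}`, `U ∈ ℝ^{n×r}`,
symmetric `Λ ∈ ℝ^{r×r}`, and `Ξ = Uᵀ M⁻¹ U`, all eigenvalues of the `r × r` matrix
`I + Ξ Λ` are real, and `M + U Λ Uᵀ` is symmetric positive definite if and only if all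
eigenvalues of `I + Ξ Λ` are positive.  (Eigenvalues are taken as the spectrum of the
complexification of `I + Ξ Λ`.) -/
theorem posdef_update_eigenvalue_criterion {n r : ℕ}
    (M : Matrix (Fin n) (Fin n) ℝ) (hM : M.PosDef)
    (U : Matrix (Fin n) (Fin r) ℝ)
    (Λ : Matrix (Fin r) (Fin r) ℝ) (hΛ : Λᵀ = Λ)
    (Ξ : Matrix (Fin r) (Fin r) ℝ) (hΞ : Ξ = Uᵀ * M⁻¹ * U) :
    (∀ μ ∈ spectrum ℂ ((1 + Ξ * Λ).map (algebraMap ℝ ℂ)), μ.im = 0) ∧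
    ((M + U * Λ * Uᵀ).PosDef ↔
      ∀ μ ∈ spectrum ℂ ((1 + Ξ * Λ).map (algebraMap ℝ ℂ)), 0 < μ.re) := by
  obtain ⟨C, hC⟩ : ∃ C, M⁻¹ = star C * C := by
    open scoped MatrixOrder in
    exact CStarAlgebra.nonneg_iff_eq_star_mul_self.mp hM.inv.posSemidef.nonneg
  set S := C * U
  simp only [← conjTranspose_eq_transpose_of_trivial] at hΛ hΞ ⊢
  have hB : (1 + S * Λ * Sᴴ).IsHermitian :=
    isHermitian_one.add (isHermitian_mul_mul_conjTranspose S hΛ)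
  have hΞΛ : Ξ * Λ = Sᴴ * (S * Λ) := by
    rw [hΞ, hC, conjTranspose_mul, star_eq_conjTranspose]
    simp only [S, Matrix.mul_assoc]
  have hswap {P : ℂ → Prop} (h1 : P 1) :
      (∀ μ ∈ spectrum ℂ ((1 + Ξ * Λ).map (algebraMap ℝ ℂ)), P μ) ↔
        ∀ μ ∈ spectrum ℂ ((1 + S * Λ * Sᴴ).map (algebraMap ℝ ℂ)), P μ := by
    rw [hΞΛ]
    exact forall_mem_spectrum_map_one_add_mul_comm _ _ _ h1
  rw [hswap (P := fun μ => μ.im = 0) (by simp), hswap (P := fun μ => 0 < μ.re) (by simp),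
    hM.posDef_add_mul_mul_conjTranspose_iff hC, hB.posDef_iff_spectrum_pos,
    hB.spectrum_map_algebraMap]
  simp
end
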